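/- arXiv:2504.01628 — 12 statements merged into one kernel-verified Lean document; each statement's English description precedes it below -/
import Mathlib

section
/- Fix n ≥ 2 and for 1 ≤ i < j ≤ n set I_i^j = {i, i+1, …, j−1}. For every choice of real numbers (c_{ij})_{1≤i≤j≤n} there exist m ∈ ℝⁿ and a symmetric matrix K ∈ ℝ^{n×n} all of whose row sums are zero, such that for all x ∈ ℝⁿ: Σ_{i=1}^n m_i x_i² + Σ_{1≤i<j≤n} ( m_i + m_j + Σ_{a∈I_i^j} Σ_{b∈{1,…,n}∖I_i^j} K_{ab} ) x_i x_j = Σ_{1≤i≤j≤n} c_{ij} x_i x_j. In other words, every quadratic form in n variables arises as the second Symanzik polynomial of the one-loop Feynman graph with n internal edges for a suitable choice of kinematic parameters (masses m and momentum Gram matrix K satisfying momentum conservation). -/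
open Finset

lemma tele_aux (f : ℕ → ℝ) {i j : ℕ} (h : i ≤ j) :
    ∑ k ∈ Finset.Ico i j, (f (k+1) - f k) = f j - f i := by
  rw [Finset.sum_Ico_eq_sub _ h, Finset.sum_range_sub, Finset.sum_range_sub]
  ring

lemma tele_row (f : ℕ → ℕ → ℝ) (a : ℕ) {i j : ℕ} (h : i ≤ j) :
    ∑ b ∈ Finset.Ico i j, (f a (b+1) + f (a+1) b - f a b - f (a+1) (b+1)) / 2
    = (f a j - f (a+1) j - f a i + f (a+1) i) / 2 := by
  have e : ∀ b, (f a (b+1) + f (a+1) b - f a b - f (a+1) (b+1)) / 2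
      = (fun t => (f a t - f (a+1) t)/2) (b+1) - (fun t => (f a t - f (a+1) t)/2) b := by
    intro b; simp only; ring
  rw [Finset.sum_congr rfl fun b _ => e b, tele_aux (fun t => (f a t - f (a+1) t)/2) h]
  ring

lemma tele_block (f : ℕ → ℕ → ℝ) {i j : ℕ} (h : i ≤ j) :
    ∑ a ∈ Finset.Ico i j, ∑ b ∈ Finset.Ico i j,
      (f a (b+1) + f (a+1) b - f a b - f (a+1) (b+1)) / 2
    = (f i j + f j i - f i i - f j j) / 2 := by
  rw [Finset.sum_congr rfl fun a _ => tele_row f a h]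
  have e : ∀ a, (f a j - f (a+1) j - f a i + f (a+1) i) / 2
      = -((fun t => (f t j - f t i)/2) (a+1) - (fun t => (f t j - f t i)/2) a) := by
    intro a; simp only; ring
  rw [Finset.sum_congr rfl fun a _ => e a, Finset.sum_neg_distrib,
    tele_aux (fun t => (f t j - f t i)/2) h]
  ring

noncomputable def symCC (n : ℕ) (c : Fin n → Fin n → ℝ) : ℕ → ℕ → ℝ :=
  fun i j => if h : i < n ∧ j < n then c ⟨i, h.1⟩ ⟨j, h.2⟩ else 0

noncomputable def symBase (n : ℕ) (c : Fin n → Fin n → ℝ) : ℕ → ℕ → ℝ :=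
  fun i j =>
    if j = n then (if i = 0 then 0 else symCC n c 0 0 + symCC n c i i - symCC n c 0 i)
    else symCC n c i i + symCC n c j j - symCC n c i j

noncomputable def symG (n : ℕ) (c : Fin n → Fin n → ℝ) : ℕ → ℕ → ℝ :=
  fun i j => if i < j then symBase n c i j else if j < i then symBase n c j i else 0

noncomputable def symK (n : ℕ) (c : Fin n → Fin n → ℝ) : ℕ → ℕ → ℝ :=
  fun a b => (symG n c a (b+1) + symG n c (a+1) b - symG n c a b - symG n c (a+1) (b+1)) / 2

variable {n : ℕ} {c : Fin n → Fin n → ℝ}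

lemma symG_symm (i j : ℕ) : symG n c i j = symG n c j i := by
  unfold symG
  rcases lt_trichotomy i j with h | h | h
  · rw [if_pos h, if_neg (not_lt.2 h.le), if_pos h]
  · simp [h]
  · rw [if_neg (not_lt.2 h.le), if_pos h, if_pos h]

lemma symG_diag (i : ℕ) : symG n c i i = 0 := by simp [symG]

lemma symG_top {i : ℕ} (hi : i ≤ n) : symG n c i n = symG n c 0 i := by
  unfold symG symBase
  rcases Nat.eq_or_lt_of_le hi with h | h
  · rw [h]
    rw [if_neg (lt_irrefl n), if_neg (lt_irrefl n)]
    rcases Nat.eq_zero_or_pos n with h0 | h0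
    · simp [h0]
    · rw [if_pos h0, if_pos rfl, if_pos rfl]
  · rw [if_pos h]
    rcases Nat.eq_zero_or_pos i with h0 | h0
    · subst h0
      rw [if_pos rfl, if_pos rfl, if_neg (lt_irrefl 0), if_neg (Nat.not_lt_zero 0)]
    · rw [if_pos rfl, if_neg (by omega : ¬ i = 0), if_pos h0,
        if_neg (by omega : ¬ i = n)]

lemma symG_val {i j : ℕ} (hij : i < j) (hjn : j < n) :
    symG n c i j = symCC n c i i + symCC n c j j - symCC n c i j := by
  unfold symG symBase
  rw [if_pos hij, if_neg (by omega : ¬ j = n)]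

lemma symK_rowsum {a : ℕ} (ha : a < n) :
    ∑ b ∈ Finset.range n, symK n c a b = 0 := by
  rw [Finset.range_eq_Ico]
  unfold symK
  rw [tele_row (symG n c) a (Nat.zero_le n), symG_top ha.le, symG_top (by omega : a + 1 ≤ n),
    symG_symm a 0, symG_symm (a+1) 0]
  ring

lemma symK_block {i j : ℕ} (hij : i ≤ j) :
    ∑ a ∈ Finset.Ico i j, ∑ b ∈ Finset.Ico i j, symK n c a b = symG n c i j := by
  unfold symK
  rw [tele_block (symG n c) hij, symG_diag, symG_diag, symG_symm j i]
  ring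

/-- Every quadratic form `Σ_{i≤j} c_{ij} x_i x_j` in `n ≥ 2` variables arises as the
second Symanzik polynomial of the one-loop Feynman graph with `n` internal edges,
for a suitable choice of internal masses `m` and a symmetric momentum Gram matrix `K`
with zero row sums (momentum conservation). Here `I_i^j = {i,…,j−1}`. -/
theorem one_loop_universality (n : ℕ) (hn : 2 ≤ n) (c : Fin n → Fin n → ℝ) :
    ∃ (m : Fin n → ℝ) (K : Matrix (Fin n) (Fin n) ℝ),
      K.IsSymm ∧ (∀ a, ∑ b, K a b = 0) ∧
      ∀ x : Fin n → ℝ,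
        (∑ i, m i * x i ^ 2) +
          ∑ i, ∑ j ∈ Finset.univ.filter (fun j => i < j),
            (m i + m j +
              ∑ a ∈ Finset.Ico i j, ∑ b ∈ Finset.univ \ Finset.Ico i j, K a b)
              * x i * x j
        = ∑ i, ∑ j ∈ Finset.univ.filter (fun j => i ≤ j), c i j * x i * x j := by
  classical
  refine ⟨fun i => c i i, fun a b => symK n c a.val b.val, ?_, ?_, ?_⟩
  · ext a b
    show symK n c b.val a.val = symK n c a.val b.val
    unfold symK
    rw [symG_symm (b:ℕ) (a+1:ℕ), symG_symm ((b:ℕ)+1) (a:ℕ), symG_symm (b:ℕ) (a:ℕ),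
      symG_symm ((b:ℕ)+1) ((a:ℕ)+1)]
    ring
  · intro a
    rw [Fin.sum_univ_eq_sum_range (fun b => symK n c a.val b) n]
    exact symK_rowsum a.isLt
  · intro x
    have finsum : ∀ (i j : Fin n) (f : ℕ → ℝ),
        ∑ a ∈ Finset.Ico i j, f a.val = ∑ a ∈ Finset.Ico i.val j.val, f a := by
      intro i j f
      rw [← Fin.map_valEmbedding_Ico, Finset.sum_map]
      rfl
    have hrow : ∀ a : Fin n, ∑ b : Fin n, symK n c a.val b.val = 0 := by
      intro a
      rw [Fin.sum_univ_eq_sum_range (fun b => symK n c a.val b) n]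
      exact symK_rowsum a.isLt
    have hccs : ∀ a b : Fin n, symCC n c a.val b.val = c a b := by
      intro a b; unfold symCC
      rw [dif_pos ⟨a.isLt, b.isLt⟩]
    have coeff : ∀ i j : Fin n, i < j →
        c i i + c j j +
          ∑ a ∈ Finset.Ico i j, ∑ b ∈ Finset.univ \ Finset.Ico i j,
            symK n c a.val b.val = c i j := by
      intro i j hij
      have hsub : ∀ a : Fin n,
          ∑ b ∈ Finset.univ \ Finset.Ico i j, symK n c a.val b.val
          = - ∑ b ∈ Finset.Ico i j, symK n c a.val b.val := by
        intro a
        rw [Finset.sum_sdiff_eq_sub (Finset.subset_univ (Finset.Ico i j)), hrow a]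
        ring
      have h2 : ∑ a ∈ Finset.Ico i j, ∑ b ∈ Finset.univ \ Finset.Ico i j,
          symK n c a.val b.val = - symG n c i.val j.val := by
        calc ∑ a ∈ Finset.Ico i j, ∑ b ∈ Finset.univ \ Finset.Ico i j, symK n c a.val b.val
            = - ∑ a ∈ Finset.Ico i j, ∑ b ∈ Finset.Ico i j, symK n c a.val b.val := by
              rw [← Finset.sum_neg_distrib]
              exact Finset.sum_congr rfl fun a _ => hsub a
          _ = - ∑ a ∈ Finset.Ico i.val j.val, ∑ b ∈ Finset.Ico i.val j.val, symK n c a b := by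
              rw [finsum i j (fun a => ∑ b ∈ Finset.Ico i j, symK n c a b.val)]
              congr 1
              exact Finset.sum_congr rfl fun a _ => finsum i j (fun b => symK n c a b)
          _ = - symG n c i.val j.val := by rw [symK_block (le_of_lt hij)]
      rw [h2, symG_val (show i.val < j.val from hij) j.isLt,
        hccs i i, hccs j j, hccs i j]
      ring
    have split : ∀ i : Fin n,
        ∑ j ∈ Finset.univ.filter (fun j => i ≤ j), c i j * x i * x j
        = c i i * x i ^ 2 + ∑ j ∈ Finset.univ.filter (fun j => i < j), c i j * x i * x j := by
      intro i
      have hf : Finset.univ.filter (fun j => i ≤ j)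
          = insert i (Finset.univ.filter (fun j => i < j)) := by
        ext j; simp [eq_comm, le_iff_lt_or_eq, or_comm]
      rw [hf, Finset.sum_insert (by simp)]
      ring
    rw [Finset.sum_congr rfl (fun i _ => split i), Finset.sum_add_distrib]
    have h3 : ∀ i : Fin n,
        ∑ j ∈ Finset.univ.filter (fun j => i < j),
          (c i i + c j j +
            ∑ a ∈ Finset.Ico i j, ∑ b ∈ Finset.univ \ Finset.Ico i j, symK n c a.val b.val)
            * x i * x j
        = ∑ j ∈ Finset.univ.filter (fun j => i < j), c i j * x i * x j := by
      intro i
      apply Finset.sum_congr rfl; intro j hj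
      rw [Finset.mem_filter] at hj
      rw [coeff i j hj.2]
    rw [Finset.sum_congr rfl (fun i _ => h3 i)]
end

section
/- Fix n ≥ 2 and for 1 ≤ i < j ≤ n set I_i^j = {i, i+1, …, j−1}. The linear map which sends a symmetric matrix K ∈ ℝ^{n×n} with all row sums equal to zero to the vector ( M_{i,j} )_{1≤i<j≤n}, where M_{i,j} = Σ_{u∈I_i^j} Σ_{v∈{1,…,n}∖I_i^j} K_{uv}, is surjective onto ℝ^{n(n−1)/2}: for every family of reals (t_{ij})_{1≤i<j≤n} there exists such a matrix K with M_{i,j} = t_{ij} for all 1 ≤ i < j ≤ n. -/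
/-!
View `Fin n` as points on a circle. For any matrix `P`, the cyclic mixed second difference
`K u v = P (u+1) (v+1) - P u (v+1) - P (u+1) v + P u v` has zero row sums, since each row
telescopes all the way around the circle, and it is symmetric when `P` is. Zero row sums turn the
cut `∑_{u ∈ I, v ∉ I} K u v` of the arc `I = [i, j)` into `-∑_{u, v ∈ I} K u v`, and this
telescopes to `2 P i j - P i i - P j j`. So a symmetric `P` with zero diagonal and
`P i j = t i j / 2` for `i < j` does it.
-/

open Finset Matrix

variable {M : Type*} [AddCommGroup M] {n : ℕ}

open Fin.NatCast in
theorem Fin.sum_Ico_finRotate_sub (f : Fin n → M) {i j : Fin n} (hij : i ≤ j) :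
    ∑ u ∈ Ico i j, (f (finRotate n u) - f u) = f j - f i := by
  have := i.neZero
  set F : ℕ → M := fun a => f a
  have hF (u : Fin n) : f (finRotate n u) - f u = F (u + 1) - F u := by
    simp [F, finRotate_apply]
  calc ∑ u ∈ Ico i j, (f (finRotate n u) - f u)
      = ∑ a ∈ (Ico i j).map Fin.valEmbedding, (F (a + 1) - F a) := by
        rw [sum_map]
        exact sum_congr rfl fun u _ => hF u
    _ = F j - F i := by rw [Fin.map_valEmbedding_Ico, sum_Ico_sub _ hij]
    _ = f j - f i := by simp [F]

theorem Fin.sum_finRotate_sub (f : Fin n → M) : ∑ u, (f (finRotate n u) - f u) = 0 := by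
  rw [sum_sub_distrib, Equiv.sum_comp, sub_self]

namespace Matrix

theorem sum_sum_compl_eq_neg_of_sum_row_eq_zero {ι : Type*} [Fintype ι] [DecidableEq ι]
    {K : Matrix ι ι M} (hK : ∀ u, ∑ v, K u v = 0) (S : Finset ι) :
    ∑ u ∈ S, ∑ v ∈ univ \ S, K u v = -∑ u ∈ S, ∑ v ∈ S, K u v := by
  rw [← sum_neg_distrib]
  refine sum_congr rfl fun u _ => ?_
  rw [sum_sdiff_eq_sub (subset_univ S), hK, zero_sub]

def cyclicSecondDiff (P : Matrix (Fin n) (Fin n) M) : Matrix (Fin n) (Fin n) M :=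
  of fun u v =>
    P (finRotate n u) (finRotate n v) - P u (finRotate n v) - P (finRotate n u) v + P u v

variable {P : Matrix (Fin n) (Fin n) M}

theorem IsSymm.cyclicSecondDiff (hP : P.IsSymm) : P.cyclicSecondDiff.IsSymm := by
  ext u v
  simp only [transpose_apply, Matrix.cyclicSecondDiff, of_apply, hP.apply]
  abel

theorem cyclicSecondDiff_apply (P : Matrix (Fin n) (Fin n) M) (u v : Fin n) :
    P.cyclicSecondDiff u v = (P (finRotate n u) (finRotate n v) - P u (finRotate n v)) -
      (P (finRotate n u) v - P u v) := by
  simp only [cyclicSecondDiff, of_apply]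
  abel

theorem sum_cyclicSecondDiff_row (P : Matrix (Fin n) (Fin n) M) (u : Fin n) :
    ∑ v, P.cyclicSecondDiff u v = 0 := by
  simp only [cyclicSecondDiff_apply]
  exact Fin.sum_finRotate_sub fun v => P (finRotate n u) v - P u v

theorem sum_Ico_sum_Ico_cyclicSecondDiff (P : Matrix (Fin n) (Fin n) M) {a b c d : Fin n}
    (hab : a ≤ b) (hcd : c ≤ d) :
    ∑ u ∈ Ico a b, ∑ v ∈ Ico c d, P.cyclicSecondDiff u v = P b d - P a d - P b c + P a c := by
  have hrow (u : Fin n) : ∑ v ∈ Ico c d, P.cyclicSecondDiff u v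
      = (P (finRotate n u) d - P (finRotate n u) c) - (P u d - P u c) := by
    simp only [cyclicSecondDiff_apply]
    rw [Fin.sum_Ico_finRotate_sub (fun v => P (finRotate n u) v - P u v) hcd]
    abel
  simp only [hrow, Fin.sum_Ico_finRotate_sub (fun u => P u d - P u c) hab]
  abel

theorem IsSymm.sum_Ico_sum_compl_cyclicSecondDiff (hP : P.IsSymm) {i j : Fin n} (hij : i ≤ j) :
    ∑ u ∈ Ico i j, ∑ v ∈ univ \ Ico i j, P.cyclicSecondDiff u v = 2 • P i j - P i i - P j j := by
  rw [sum_sum_compl_eq_neg_of_sum_row_eq_zero P.sum_cyclicSecondDiff_row,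
    sum_Ico_sum_Ico_cyclicSecondDiff P hij hij, hP.apply i j]
  abel

end Matrix

theorem momentum_map_surjective_general (n : ℕ) (t : Fin n → Fin n → ℝ) :
    ∃ K : Matrix (Fin n) (Fin n) ℝ,
      K.IsSymm ∧ (∀ a, ∑ b, K a b = 0) ∧
      ∀ i j : Fin n, i < j →
        ∑ u ∈ Finset.Ico i j, ∑ v ∈ Finset.univ \ Finset.Ico i j, K u v = t i j := by
  let U : Matrix (Fin n) (Fin n) ℝ := Matrix.of fun a b => if a < b then t a b / 2 else 0
  have hP : (U + Uᵀ).IsSymm := Matrix.isSymm_add_transpose_self U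
  refine ⟨(U + Uᵀ).cyclicSecondDiff, hP.cyclicSecondDiff, (U + Uᵀ).sum_cyclicSecondDiff_row,
    fun i j hij => ?_⟩
  rw [hP.sum_Ico_sum_compl_cyclicSecondDiff hij.le]
  simp [U, hij, hij.not_gt, mul_div_cancel₀]

/-- The linear map sending a symmetric `n × n` matrix `K` with zero row sums to the
vector `(M_{i,j})_{i<j}`, where `M_{i,j} = Σ_{u∈I_i^j} Σ_{v∉I_i^j} K_{uv}` and
`I_i^j = {i,…,j−1}`, is surjective: every target family `(t_{ij})_{i<j}` is attained. -/
theorem momentum_map_surjective (n : ℕ) (hn : 2 ≤ n) (t : Fin n → Fin n → ℝ) :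
    ∃ K : Matrix (Fin n) (Fin n) ℝ,
      K.IsSymm ∧ (∀ a, ∑ b, K a b = 0) ∧
      ∀ i j : Fin n, i < j →
        ∑ u ∈ Finset.Ico i j, ∑ v ∈ Finset.univ \ Finset.Ico i j, K u v = t i j :=
  momentum_map_surjective_general n t
end

section
/- The Horn form h is copositive: h(u) ≥ 0 for every u ∈ ℝ⁵_{≥0}. Equivalently, the Horn matrix H is a copositive matrix. -/
/-- The Horn form is copositive: `h(u) ≥ 0` for every `u` in the nonnegative
orthant `ℝ⁵_{≥0}`. -/
theorem horn_copositive (u : Fin 5 → ℝ) (hu : ∀ i, 0 ≤ u i) :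
    0 ≤ u 0 ^ 2 + u 1 ^ 2 + u 2 ^ 2 + u 3 ^ 2 + u 4 ^ 2
      - 2 * (u 0 * u 1 + u 1 * u 2 + u 2 * u 3 + u 3 * u 4 + u 4 * u 0)
      + 2 * (u 0 * u 2 + u 1 * u 3 + u 2 * u 4 + u 3 * u 0 + u 4 * u 1) := by
  have h0 := hu 0; have h1 := hu 1; have h2 := hu 2; have h3 := hu 3; have h4 := hu 4
  rcases le_total (u 3) (u 4) with h | h
  · nlinarith [sq_nonneg (u 0 - u 1 + u 2 + u 3 - u 4), mul_nonneg h1 h3,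
      mul_nonneg h2 (sub_nonneg.2 h)]
  · nlinarith [sq_nonneg (u 0 - u 1 + u 2 - u 3 + u 4), mul_nonneg h1 h4,
      mul_nonneg h0 (sub_nonneg.2 h)]
end

section
/- Fix n ≥ 2, m ∈ ℝⁿ and s ∈ ℝ, and define the polynomial F(x) = (Σ_{i=1}^n m_i x_i)·(Σ_{j=1}^n Π_{k≠j} x_k) − s·Π_{k=1}^n x_k. Then F(u) ≥ 0 for all u ∈ ℝⁿ_{≥0} if and only if m_i ≥ 0 for all i and Σ_{i=1}^n m_i + 2 Σ_{1≤i<j≤n} √(m_i)√(m_j) ≥ s (equivalently, (Σ_{i=1}^n √(m_i))² ≥ s). -/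
/-!
On the open orthant `F(u) = (∏ uₖ) · ((∑ mᵢuᵢ)(∑ uᵢ⁻¹) - s)`, while on its boundary `∏ uₖ = 0`
and `F ≥ 0` as soon as `m ≥ 0`. So copositivity means `s ≤ (∑ mᵢuᵢ)(∑ uᵢ⁻¹)` for all `u > 0`.
By Cauchy–Schwarz the infimum of the right-hand side is `(∑ √mᵢ)²`, approached along
`uᵢ = (√mᵢ + δ)⁻¹`, `δ → 0`. If some `mᵢ < 0`, the right-hand side grows like
`(n - 1) mᵢ t → -∞` along `uᵢ = t`, all other coordinates being `1`.
-/

open Finset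

theorem sq_sum_eq_sum_sq_add_two_mul_sum_lt {ι R : Type*} [Fintype ι] [LinearOrder ι]
    [CommSemiring R] (a : ι → R) :
    (∑ i, a i) ^ 2 = ∑ i, a i ^ 2 + 2 * ∑ i, ∑ j with i < j, a i * a j := by
  have hsplit : ∀ i j, a i * a j = (if j < i then a i * a j else 0) +
      (if i = j then a i * a j else 0) + (if i < j then a i * a j else 0) := by
    intro i j
    rcases lt_trichotomy i j with h | rfl | h
    · simp [h, h.ne, h.not_gt]
    · simp
    · simp [h, h.ne', h.not_gt]
  have hswap : ∑ i, ∑ j with j < i, a i * a j = ∑ i, ∑ j with i < j, a i * a j := by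
    rw [sum_comm' (t' := univ) (s' := fun j => univ.filter (j < ·)) (by simp)]
    simp_rw [mul_comm]
  calc (∑ i, a i) ^ 2 = ∑ i, ∑ j, a i * a j := by rw [sq, sum_mul_sum]
    _ = ∑ i, ∑ j with j < i, a i * a j + ∑ i, a i ^ 2 + ∑ i, ∑ j with i < j, a i * a j := by
      rw [sum_congr rfl fun i _ => sum_congr rfl fun j _ => hsplit i j]
      simp only [sum_add_distrib, sum_ite_eq, ← sum_filter, mem_univ, if_true, sq]
    _ = _ := by rw [hswap]; ring

theorem le_of_forall_pos_le_add_mul {K : Type*} [Field K] [LinearOrder K] [IsStrictOrderedRing K]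
    {a b c : K} (h : ∀ δ > 0, a ≤ b + c * δ) : a ≤ b := by
  refine le_of_forall_pos_le_add fun ε hε => ?_
  rcases le_or_gt c 0 with hc | hc
  · linarith [h 1 one_pos]
  · simpa [mul_div_cancel₀ ε hc.ne'] using h (ε / c) (div_pos hε hc)

theorem nonneg_of_forall_one_le_mul_add_nonneg {K : Type*} [Field K] [LinearOrder K]
    [IsStrictOrderedRing K] {a b : K} (h : ∀ t ≥ 1, 0 ≤ a * t + b) : 0 ≤ a := by
  by_contra! ha
  have ht : a * (1 + |b| / -a) = a - |b| := by field_simp [ha.ne]; ring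
  have := h (1 + |b| / -a) (le_add_of_nonneg_right (div_nonneg (abs_nonneg b) (by linarith)))
  linarith [le_abs_self b]

noncomputable def bananaF {ι : Type*} [Fintype ι] [DecidableEq ι] (m : ι → ℝ) (s : ℝ)
    (u : ι → ℝ) : ℝ :=
  (∑ i, m i * u i) * (∑ j, ∏ k ∈ univ.erase j, u k) - s * ∏ k, u k

section
variable {ι : Type*} [Fintype ι] {m u : ι → ℝ} {s : ℝ}

theorem sum_prod_erase_eq_prod_mul_sum_inv [DecidableEq ι] {K : Type*} [Field K] {u : ι → K}
    (hu : ∀ i, u i ≠ 0) :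
    ∑ j, ∏ k ∈ univ.erase j, u k = (∏ k, u k) * ∑ j, (u j)⁻¹ := by
  rw [mul_sum]
  refine sum_congr rfl fun j _ => ?_
  rw [← mul_prod_erase univ u (mem_univ j), mul_comm (u j), mul_inv_cancel_right₀ (hu j)]

theorem bananaF_eq_prod_mul [DecidableEq ι] (hu : ∀ i, u i ≠ 0) :
    bananaF m s u = (∏ k, u k) * ((∑ i, m i * u i) * ∑ i, (u i)⁻¹ - s) := by
  rw [bananaF, sum_prod_erase_eq_prod_mul_sum_inv hu]
  ring

theorem sq_sum_sqrt_le_mul_sum_inv (hm : ∀ i, 0 ≤ m i) (hu : ∀ i, 0 < u i) :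
    (∑ i, √(m i)) ^ 2 ≤ (∑ i, m i * u i) * ∑ i, (u i)⁻¹ :=
  sum_sq_le_sum_mul_sum_of_sq_le_mul univ (fun i _ => mul_nonneg (hm i) (hu i).le)
    (fun i _ => inv_nonneg.mpr (hu i).le) fun i _ => by
      rw [Real.sq_sqrt (hm i), mul_inv_cancel_right₀ (hu i).ne']

theorem bananaF_nonneg [DecidableEq ι] (hm : ∀ i, 0 ≤ m i) (hs : s ≤ (∑ i, √(m i)) ^ 2)
    (hu : ∀ i, 0 ≤ u i) : 0 ≤ bananaF m s u := by
  by_cases hzero : ∃ k, u k = 0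
  · obtain ⟨k, hk⟩ := hzero
    rw [bananaF, prod_eq_zero (mem_univ k) hk, mul_zero, sub_zero]
    exact mul_nonneg (sum_nonneg fun i _ => mul_nonneg (hm i) (hu i))
      (sum_nonneg fun j _ => prod_nonneg fun k _ => hu k)
  · push Not at hzero
    have hpos : ∀ i, 0 < u i := fun i => (hu i).lt_of_ne' (hzero i)
    rw [bananaF_eq_prod_mul hzero]
    exact mul_nonneg (prod_nonneg fun k _ => hu k)
      (sub_nonneg.mpr (hs.trans (sq_sum_sqrt_le_mul_sum_inv hm hpos)))

theorem le_mul_sum_inv_of_bananaF_nonneg [DecidableEq ι]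
    (h : ∀ u, (∀ i, 0 ≤ u i) → 0 ≤ bananaF m s u) (hu : ∀ i, 0 < u i) :
    s ≤ (∑ i, m i * u i) * ∑ i, (u i)⁻¹ := by
  have := h u fun i => (hu i).le
  rw [bananaF_eq_prod_mul fun i => (hu i).ne'] at this
  exact sub_nonneg.mp (nonneg_of_mul_nonneg_right this (prod_pos fun k _ => hu k))

theorem nonneg_of_forall_le_mul_sum_inv [Nontrivial ι]
    (h : ∀ u : ι → ℝ, (∀ i, 0 < u i) → s ≤ (∑ i, m i * u i) * ∑ i, (u i)⁻¹) (i : ι) :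
    0 ≤ m i := by
  classical
  set C := ∑ j ∈ {i}ᶜ, m j
  set N := (Fintype.card ι : ℝ) - 1
  have hN : 0 < N := by
    have : (1 : ℝ) < Fintype.card ι := by exact_mod_cast Fintype.one_lt_card
    linarith
  refine nonneg_of_mul_nonneg_right (nonneg_of_forall_one_le_mul_add_nonneg
    (b := m i + |C| + N * C - s) fun t ht => ?_) hN
  have ht0 : 0 < t := by linarith
  have hst := h (fun j => if j = i then t else 1) fun j => by split_ifs <;> linarith
  have hcard : (#({i}ᶜ : Finset ι) : ℝ) = N := by
    rw [card_compl, card_singleton, Nat.cast_sub Fintype.card_pos, Nat.cast_one]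
  rw [Fintype.sum_eq_add_sum_compl i, Fintype.sum_eq_add_sum_compl i] at hst
  simp (disch := simp_all) only [if_pos, if_neg, mul_one, inv_one, sum_const, nsmul_eq_mul,
    hcard] at hst
  have hexpand : (m i * t + C) * (t⁻¹ + N) = N * m i * t + (m i + C * t⁻¹ + N * C) := by
    field_simp
    ring
  have hC : C * t⁻¹ ≤ |C| :=
    (mul_le_mul_of_nonneg_right (le_abs_self C) (by positivity)).trans
      (mul_le_of_le_one_right (abs_nonneg C) (inv_le_one_of_one_le₀ ht))
  linarith

theorem le_sq_sum_sqrt_of_forall_le_mul_sum_inv (hm : ∀ i, 0 ≤ m i)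
    (h : ∀ u : ι → ℝ, (∀ i, 0 < u i) → s ≤ (∑ i, m i * u i) * ∑ i, (u i)⁻¹) :
    s ≤ (∑ i, √(m i)) ^ 2 := by
  refine le_of_forall_pos_le_add_mul (c := Fintype.card ι * ∑ i, √(m i)) fun δ hδ => ?_
  have hpos : ∀ i, 0 < √(m i) + δ := fun i => by positivity
  have hterm : ∀ i, m i * (√(m i) + δ)⁻¹ ≤ √(m i) := fun i => by
    rw [← div_eq_mul_inv, div_le_iff₀ (hpos i)]
    nlinarith [Real.mul_self_sqrt (hm i), Real.sqrt_nonneg (m i)]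
  calc s ≤ (∑ i, m i * (√(m i) + δ)⁻¹) * ∑ i, ((√(m i) + δ)⁻¹)⁻¹ :=
        h _ fun i => inv_pos.mpr (hpos i)
    _ ≤ (∑ i, √(m i)) * ((∑ i, √(m i)) + Fintype.card ι * δ) := by
      simp only [inv_inv, sum_add_distrib, sum_const, card_univ, nsmul_eq_mul]
      exact mul_le_mul_of_nonneg_right (sum_le_sum fun i _ => hterm i) (by positivity)
    _ = (∑ i, √(m i)) ^ 2 + (Fintype.card ι * ∑ i, √(m i)) * δ := by ring

end

/-- The copositive cone of the banana graph with `n` internal edges: the second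
Symanzik polynomial `F(x) = (Σᵢ mᵢxᵢ)·(Σⱼ Π_{k≠j} x_k) − s·Π_k x_k` is nonnegative
on the nonnegative orthant iff all `mᵢ ≥ 0` and
`Σᵢ mᵢ + 2 Σ_{i<j} √mᵢ√mⱼ ≥ s`. -/
theorem banana_copositive (n : ℕ) (hn : 2 ≤ n) (m : Fin n → ℝ) (s : ℝ) :
    (∀ u : Fin n → ℝ, (∀ i, 0 ≤ u i) →
      0 ≤ (∑ i, m i * u i) * (∑ j, ∏ k ∈ Finset.univ.erase j, u k) - s * ∏ k, u k)
    ↔ ((∀ i, 0 ≤ m i) ∧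
        s ≤ (∑ i, m i) + 2 * ∑ i, ∑ j ∈ Finset.univ.filter (fun j => i < j),
          Real.sqrt (m i) * Real.sqrt (m j)) := by
  have : Nontrivial (Fin n) := Fin.nontrivial_iff_two_le.mpr hn
  have hsq (hm : ∀ i, 0 ≤ m i) : (∑ i, m i) + 2 * ∑ i, ∑ j ∈ univ.filter (fun j => i < j),
      √(m i) * √(m j) = (∑ i, √(m i)) ^ 2 := by
    simp only [sq_sum_eq_sum_sq_add_two_mul_sum_lt, Real.sq_sqrt (hm _)]
  change (∀ u, (∀ i, 0 ≤ u i) → 0 ≤ bananaF m s u) ↔ _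
  constructor
  · intro h
    have hle := fun u hu => le_mul_sum_inv_of_bananaF_nonneg (u := u) h hu
    have hm := nonneg_of_forall_le_mul_sum_inv hle
    exact ⟨hm, (hsq hm).symm ▸ le_sq_sum_sqrt_of_forall_le_mul_sum_inv hm hle⟩
  · rintro ⟨hm, hs⟩ u hu
    exact bananaF_nonneg hm (hsq hm ▸ hs) hu
end

section
/- Let M be a matroid on the ground set {1,…,n} with nonempty collection of bases B. Define A_U = { Σ_{j∉T} e_j : T ∈ B } ⊂ ℕⁿ, A¹ = { e_k + Σ_{j∉T} e_j : T ∈ B, k ∈ T }, and A² = { 2e_q + Σ_{j∈{1,…,n}∖(T∪{q})} e_j : T ∈ B, q ∉ T }. Then the convex hull of A¹ ∪ A² equals the Minkowski sum of the convex hull of A_U and the simplex conv({e₁,…,e_n}): conv(A¹ ∪ A²) = conv(A_U) + conv({e₁,…,e_n}). -/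
/-!
Splitting `A²` according to the doubled coordinate `q ∉ T` shows that
`2e_q + 𝟙_{(T ∪ {q})ᶜ} = e_q + 𝟙_{Tᶜ}`, so `A¹ ∪ A²` is exactly the Minkowski sum
`A_U + {e₁, …, e_n}` (with `A¹` the summands where `k ∈ T`, `A²` those where `k ∉ T`).
The theorem follows since convex hulls commute with Minkowski sums.
-/

open Pointwise

theorem indicator_compl_insert_add_single_two {α R : Type*} [DecidableEq α]
    [AddMonoidWithOne R] {T : Set α} {q : α} (hq : q ∉ T) :
    Set.indicator (T ∪ {q})ᶜ (fun _ => (1 : R)) + Pi.single q 2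
      = Set.indicator Tᶜ (fun _ => (1 : R)) + Pi.single q 1 := by
  funext j
  by_cases hj : j = q
  · subst hj
    simp [hq, one_add_one_eq_two]
  · by_cases hT : j ∈ T <;> simp [hj, hT]

theorem indicator_compl_bases_add_singles {α R : Type*} [DecidableEq α]
    [AddMonoidWithOne R] (M : Matroid α) :
    {v : α → R | ∃ T k, M.IsBase T ∧ k ∈ T ∧
        v = Set.indicator Tᶜ (fun _ => (1 : R)) + Pi.single k 1} ∪
      {v : α → R | ∃ T q, M.IsBase T ∧ q ∉ T ∧
        v = Set.indicator (T ∪ {q})ᶜ (fun _ => (1 : R)) + Pi.single q 2}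
      = {v : α → R | ∃ T, M.IsBase T ∧ v = Set.indicator Tᶜ (fun _ => (1 : R))}
        + {v : α → R | ∃ i, v = Pi.single i 1} := by
  ext v
  constructor
  · rintro (⟨T, k, hT, -, rfl⟩ | ⟨T, q, hT, hq, rfl⟩)
    · exact ⟨_, ⟨T, hT, rfl⟩, _, ⟨k, rfl⟩, rfl⟩
    · exact ⟨_, ⟨T, hT, rfl⟩, _, ⟨q, rfl⟩, (indicator_compl_insert_add_single_two hq).symm⟩
  · rintro ⟨_, ⟨T, hT, rfl⟩, _, ⟨i, rfl⟩, rfl⟩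
    by_cases hi : i ∈ T
    · exact Or.inl ⟨T, i, hT, hi, rfl⟩
    · exact Or.inr ⟨T, i, hT, hi, (indicator_compl_insert_add_single_two hi).symm⟩

open Pointwise in
theorem newton_polytope_minkowski_general (n : ℕ) (M : Matroid (Fin n)) :
    convexHull ℝ
      ({v : Fin n → ℝ | ∃ T k, M.IsBase T ∧ k ∈ T ∧
          v = Set.indicator Tᶜ (fun _ => (1 : ℝ)) + Pi.single k 1} ∪
       {v : Fin n → ℝ | ∃ T q, M.IsBase T ∧ q ∉ T ∧
          v = Set.indicator (T ∪ {q})ᶜ (fun _ => (1 : ℝ)) + Pi.single q 2})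
    = convexHull ℝ {v : Fin n → ℝ | ∃ T, M.IsBase T ∧
          v = Set.indicator Tᶜ (fun _ => (1 : ℝ))}
      + convexHull ℝ {v : Fin n → ℝ | ∃ i, v = Pi.single i 1} := by
  rw [indicator_compl_bases_add_singles, convexHull_add]

open Pointwise in
/-- For a matroid `M` on `{1,…,n}` with bases `B`, the convex hull of
`A¹ ∪ A² = {e_k + Σ_{j∉T} e_j : T ∈ B, k ∈ T} ∪ {2e_q + Σ_{j∉T∪{q}} e_j : T ∈ B, q ∉ T}`
is the Minkowski sum of the convex hull of `A_U = {Σ_{j∉T} e_j : T ∈ B}` and the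
standard simplex `conv {e₁,…,e_n}`. -/
theorem newton_polytope_minkowski (n : ℕ) (M : Matroid (Fin n))
    (hE : M.E = Set.univ) (hB : ∃ T, M.IsBase T) :
    convexHull ℝ
      ({v : Fin n → ℝ | ∃ T k, M.IsBase T ∧ k ∈ T ∧
          v = Set.indicator Tᶜ (fun _ => (1 : ℝ)) + Pi.single k 1} ∪
       {v : Fin n → ℝ | ∃ T q, M.IsBase T ∧ q ∉ T ∧
          v = Set.indicator (T ∪ {q})ᶜ (fun _ => (1 : ℝ)) + Pi.single q 2})
    = convexHull ℝ {v : Fin n → ℝ | ∃ T, M.IsBase T ∧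
          v = Set.indicator Tᶜ (fun _ => (1 : ℝ))}
      + convexHull ℝ {v : Fin n → ℝ | ∃ i, v = Pi.single i 1} :=
  newton_polytope_minkowski_general n M
end

section
/- Let A ⊂ ℕⁿ be a finite nonempty set all of whose elements have the same coordinate sum. For c ∈ ℝ^A, the point c lies in the topological interior of the copositive cone C_A in ℝ^A if and only if for every w ∈ ℝⁿ the facial restriction f_c|_w(x) = Σ_{a∈A_w} c_a x^a is strictly positive at every x ∈ ℝⁿ_{>0}, where A_w = { a ∈ A : ⟨w,a⟩ = min_{b∈A} ⟨w,b⟩ }. -/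
/-!
In logarithmic coordinates `u = exp y` the polynomial becomes the exponential sum
`∑ c_a exp ⟪a, y⟫`. A perturbation argument in the sup norm shows that `c` is interior exactly
when `f_c ≥ δ ∑_a u^a` for some `δ > 0`, and by continuity it suffices to check this on the open
orthant, i.e. for all `y`.

Such a uniform bound passes to the facial restrictions: along `y - t w`, `t → ∞`, the terms off
`A_w` become negligible compared with `∑_a exp ⟪a, y - t w⟫`.

Conversely, argue by induction on faces. If the weighted mean `∑ c_a exp ⟪a, y⟫ / ∑ exp ⟪a, y⟫`
had infimum `0`, choose an ultrafilter along which it tends to `0`, supported on the span of the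
differences of points of `A` (projecting onto that span does not change the mean). If the
ultrafilter converges, positivity of the mean at the limit is contradicted. Otherwise `y / ‖y‖`
converges to some `v ≠ 0` in that span, the mean concentrates on the proper face `A_{-v}`, and
the uniform bound for that face, available by induction, keeps it away from `0`.
-/

open Filter Topology Real
open scoped RealInnerProductSpace

theorem Ultrafilter.exists_le_nhds_or_tendsto_norm_atTop {E : Type*} [SeminormedAddCommGroup E]
    [ProperSpace E] (U : Ultrafilter E) :
    (∃ x, (U : Filter E) ≤ 𝓝 x) ∨ Tendsto (‖·‖) (U : Filter E) atTop := by
  by_cases h : ∃ R, Metric.closedBall (0 : E) R ∈ U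
  · obtain ⟨R, hR⟩ := h
    obtain ⟨x, -, hx⟩ := (isCompact_closedBall 0 R).ultrafilter_le_nhds U (le_principal_iff.2 hR)
    exact .inl ⟨x, hx⟩
  · push Not at h
    refine .inr (tendsto_atTop.2 fun R => ?_)
    filter_upwards [Ultrafilter.compl_mem_iff_notMem.2 (h R)] with y hy
    exact (by simpa using hy : R < ‖y‖).le

theorem Ultrafilter.exists_tendsto_inv_norm_smul {E : Type*} [NormedAddCommGroup E]
    [NormedSpace ℝ E] [ProperSpace E] (U : Ultrafilter E)
    (hU : Tendsto (‖·‖) (U : Filter E) atTop) :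
    ∃ v : E, ‖v‖ = 1 ∧ Tendsto (fun y => ‖y‖⁻¹ • y) U (𝓝 v) := by
  have hsphere : ∀ᶠ y in U, ‖y‖⁻¹ • y ∈ Metric.sphere (0 : E) 1 := by
    filter_upwards [hU.eventually_gt_atTop 0] with y hy
    rw [mem_sphere_zero_iff_norm, norm_smul, norm_inv, norm_norm, inv_mul_cancel₀ hy.ne']
  obtain ⟨v, hv, hUv⟩ :=
    (isCompact_sphere (0 : E) 1).ultrafilter_le_nhds (U.map _) (le_principal_iff.2 hsphere)
  exact ⟨v, mem_sphere_zero_iff_norm.1 hv, hUv⟩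

section ExpSum

variable {ι E : Type*} [NormedAddCommGroup E] [InnerProductSpace ℝ E]

noncomputable def expSum (V : ι → E) (c : ι → ℝ) (s : Finset ι) (y : E) : ℝ :=
  ∑ a ∈ s, c a * exp ⟪V a, y⟫

variable (V : ι → E) {c : ι → ℝ} {s B F : Finset ι}

@[simp]
theorem expSum_one (s : Finset ι) (y : E) : expSum V 1 s y = ∑ a ∈ s, exp ⟪V a, y⟫ := by
  simp [expSum]

theorem expSum_one_pos (hB : B.Nonempty) (y : E) : 0 < expSum V 1 B y := by
  simpa using Finset.sum_pos (fun a _ => exp_pos ⟪V a, y⟫) hB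

theorem continuous_expSum (c : ι → ℝ) (s : Finset ι) : Continuous (expSum V c s) := by
  unfold expSum; fun_prop

theorem expSum_add_of_inner_eq {z : E} {κ : ℝ} (h : ∀ a ∈ s, ⟪V a, z⟫ = κ) (y : E) :
    expSum V c s (y + z) = exp κ * expSum V c s y := by
  simp only [expSum, Finset.mul_sum, inner_add_right, exp_add]
  exact Finset.sum_congr rfl fun a ha => by rw [h a ha]; ring

theorem expSum_sdiff_add [DecidableEq ι] (h : F ⊆ B) (c : ι → ℝ) (y : E) :
    expSum V c (B \ F) y + expSum V c F y = expSum V c B y :=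
  Finset.sum_sdiff h

theorem exp_inner_div_expSum_le {a b : ι} (hb : b ∈ B) (y : E) :
    exp ⟪V a, y⟫ / expSum V 1 B y ≤ exp ⟪V a - V b, y⟫ := by
  have hle : exp ⟪V b, y⟫ ≤ expSum V 1 B y := by
    simpa using Finset.single_le_sum (f := fun a => exp ⟪V a, y⟫) (fun _ _ => by positivity) hb
  rw [inner_sub_left, exp_sub]
  exact div_le_div_of_nonneg_left (exp_pos _).le (exp_pos _) hle

noncomputable def minFace (B : Finset ι) (w : E) : Finset ι :=
  {a ∈ B | ∀ b ∈ B, ⟪w, V a⟫ ≤ ⟪w, V b⟫}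

@[simp]
theorem mem_minFace {w : E} {a : ι} :
    a ∈ minFace V B w ↔ a ∈ B ∧ ∀ b ∈ B, ⟪w, V a⟫ ≤ ⟪w, V b⟫ :=
  Finset.mem_filter

theorem minFace_subset (w : E) : minFace V B w ⊆ B :=
  Finset.filter_subset _ _

@[simp]
theorem minFace_zero : minFace V B 0 = B :=
  Finset.filter_true_of_mem fun _ _ _ _ => by simp

theorem inner_eq_of_mem_minFace {w : E} {a b : ι} (ha : a ∈ minFace V B w)
    (hb : b ∈ minFace V B w) : ⟪w, V a⟫ = ⟪w, V b⟫ := by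
  rw [mem_minFace] at ha hb
  exact le_antisymm (ha.2 b hb.1) (hb.2 a ha.1)

theorem exists_inner_lt_of_notMem_minFace {w : E} {a : ι} (ha : a ∈ B)
    (h : a ∉ minFace V B w) : ∃ b ∈ B, ⟪w, V b⟫ < ⟪w, V a⟫ := by
  simpa [ha] using h

theorem eventually_add_mul_le_add_mul_iff (x₁ x₂ y₁ y₂ : ℝ) :
    ∀ᶠ N : ℝ in atTop, (x₁ + N * y₁ ≤ x₂ + N * y₂ ↔ y₁ < y₂ ∨ y₁ = y₂ ∧ x₁ ≤ x₂) := by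
  rcases lt_trichotomy y₁ y₂ with h | rfl | h
  · filter_upwards [eventually_ge_atTop ((x₁ - x₂) / (y₂ - y₁))] with N hN
    rw [div_le_iff₀ (sub_pos.2 h)] at hN
    simp only [h, true_or, iff_true]
    nlinarith
  · simp
  · filter_upwards [eventually_gt_atTop ((x₂ - x₁) / (y₁ - y₂))] with N hN
    rw [div_lt_iff₀ (sub_pos.2 h)] at hN
    simp only [h.not_gt, h.ne', false_and, or_false, iff_false, not_le]
    nlinarith

theorem eventually_minFace_add_smul (v w : E) :
    ∀ᶠ N : ℝ in atTop, minFace V B (w + N • v) = minFace V (minFace V B v) w := by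
  have lex : ∀ a ∈ B, ∀ᶠ N : ℝ in atTop, ∀ b ∈ B,
      (⟪w + N • v, V a⟫ ≤ ⟪w + N • v, V b⟫ ↔
        ⟪v, V a⟫ < ⟪v, V b⟫ ∨ ⟪v, V a⟫ = ⟪v, V b⟫ ∧ ⟪w, V a⟫ ≤ ⟪w, V b⟫) := by
    intro a _
    refine (eventually_all_finset B).2 fun b _ => ?_
    simpa only [inner_add_left, real_inner_smul_left] using
      eventually_add_mul_le_add_mul_iff _ _ _ _
  filter_upwards [(eventually_all_finset B).2 lex] with N hN
  ext a
  simp only [mem_minFace]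
  constructor
  · rintro ⟨ha, hmin⟩
    have hlex := fun b hb => (hN a ha b hb).1 (hmin b hb)
    refine ⟨⟨ha, fun b hb => ?_⟩, fun b ⟨hb, hbmin⟩ => ?_⟩
    · rcases hlex b hb with h | h
      exacts [h.le, h.1.le]
    · rcases hlex b hb with h | h
      exacts [absurd (hbmin a ha) h.not_ge, h.2]
  · rintro ⟨⟨ha, hamin⟩, hface⟩
    refine ⟨ha, fun b hb => (hN a ha b hb).2 ?_⟩
    by_cases hbmin : ∀ b' ∈ B, ⟪v, V b⟫ ≤ ⟪v, V b'⟫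
    · exact .inr ⟨le_antisymm (hamin b hb) (hbmin a ha), hface b ⟨hb, hbmin⟩⟩
    · push Not at hbmin
      obtain ⟨b', hb', hlt⟩ := hbmin
      exact .inl ((hamin b' hb').trans_lt hlt)

theorem minFace_ne_of_mem_vectorSpan {v : E} (hv : v ∈ vectorSpan ℝ (V '' B)) (hv0 : v ≠ 0) :
    minFace V B v ≠ B := by
  intro hface
  have hspan : vectorSpan ℝ (V '' B) ≤ LinearMap.ker (innerₛₗ ℝ v) := by
    refine Submodule.span_le.2 ?_
    rintro _ ⟨_, ⟨a, ha, rfl⟩, _, ⟨b, hb, rfl⟩, rfl⟩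
    rw [← hface] at ha hb
    simp [inner_sub_right, inner_eq_of_mem_minFace V ha hb]
  exact hv0 (inner_self_eq_zero.1 (hspan hv))

theorem tendsto_inner_add_smul_atBot {α : Type*} {l : Filter α} {s : α → ℝ} {u : α → E}
    {v x : E} (hs : Tendsto s l atTop) (hu : Tendsto u l (𝓝 v)) (hxv : ⟪x, v⟫ < 0) (y : E) :
    Tendsto (fun t => ⟪x, y + s t • u t⟫) l atBot := by
  simp only [inner_add_right, real_inner_smul_right]
  exact tendsto_atBot_add_const_left _ _ (hs.atTop_mul_neg hxv (tendsto_const_nhds.inner hu))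

theorem tendsto_exp_inner_div_expSum {α : Type*} {l : Filter α} {z : α → E} {a b : ι}
    (hb : b ∈ B) (h : Tendsto (fun t => ⟪V a - V b, z t⟫) l atBot) :
    Tendsto (fun t => exp ⟪V a, z t⟫ / expSum V 1 B (z t)) l (𝓝 0) :=
  squeeze_zero (fun _ => div_nonneg (exp_pos _).le (expSum_one_pos V ⟨b, hb⟩ _).le)
    (fun t => exp_inner_div_expSum_le V hb (z t)) (tendsto_exp_atBot.comp h)

theorem tendsto_expSum_sdiff_minFace_div [DecidableEq ι] {α : Type*} {l : Filter α}
    {s : α → ℝ} {u : α → E} {v : E} (hs : Tendsto s l atTop) (hu : Tendsto u l (𝓝 v))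
    (c : ι → ℝ) (y : E) :
    Tendsto (fun t => expSum V c (B \ minFace V B (-v)) (y + s t • u t) /
      expSum V 1 B (y + s t • u t)) l (𝓝 0) := by
  simp only [expSum, Finset.sum_div, mul_div_assoc]
  rw [← Finset.sum_const_zero (s := B \ minFace V B (-v))]
  refine tendsto_finsetSum _ fun a ha => ?_
  obtain ⟨haB, haF⟩ := Finset.mem_sdiff.1 ha
  obtain ⟨b, hb, hlt⟩ := exists_inner_lt_of_notMem_minFace V haB haF
  have hneg : ⟪V a - V b, v⟫ < 0 := by
    rw [inner_neg_left, inner_neg_left] at hlt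
    rw [inner_sub_left, real_inner_comm v (V a), real_inner_comm v (V b)]
    linarith
  simpa using (tendsto_exp_inner_div_expSum V hb
    (tendsto_inner_add_smul_atBot hs hu hneg y)).const_mul (c a)

variable (c B) in
def FacesPositive : Prop :=
  ∀ w y : E, 0 < expSum V c (minFace V B w) y

variable (c B) in
def UniformlyPositive : Prop :=
  ∃ δ > 0, ∀ y : E, δ * expSum V 1 B y ≤ expSum V c B y

variable {V}

theorem FacesPositive.expSum_pos (h : FacesPositive V c B) (y : E) : 0 < expSum V c B y := by
  simpa using h 0 y

theorem FacesPositive.nonempty (h : FacesPositive V c B) : B.Nonempty := by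
  rw [Finset.nonempty_iff_ne_empty]
  rintro rfl
  simpa [expSum] using h.expSum_pos 0

theorem FacesPositive.minFace (h : FacesPositive V c B) (v : E) :
    FacesPositive V c (minFace V B v) := fun w y => by
  obtain ⟨N, hN⟩ := (eventually_minFace_add_smul V v w).exists
  exact hN ▸ h _ y

theorem UniformlyPositive.facesPositive (hB : B.Nonempty) (h : UniformlyPositive V c B) :
    FacesPositive V c B := by
  classical
  obtain ⟨δ, hδ, hbound⟩ := h
  intro w y
  obtain ⟨a₀, ha₀B, ha₀⟩ := B.exists_min_image (fun a => ⟪w, V a⟫) hB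
  have ha₀w : a₀ ∈ minFace V B w := (mem_minFace V).2 ⟨ha₀B, ha₀⟩
  have hoff := tendsto_expSum_sdiff_minFace_div V (B := B) (s := fun t => t) tendsto_id
    (tendsto_const_nhds (x := -w)) c y
  rw [neg_neg] at hoff
  have hev : ∀ᶠ t : ℝ in atTop, 0 < expSum V c (minFace V B w) (y + t • -w) := by
    filter_upwards [hoff.eventually (gt_mem_nhds hδ)] with t ht
    rw [div_lt_iff₀ (expSum_one_pos V hB _)] at ht
    linarith [hbound (y + t • -w),
      expSum_sdiff_add V (minFace_subset (B := B) V w) c (y + t • -w)]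
  obtain ⟨t, ht⟩ := hev.exists
  have hshift : ∀ a ∈ minFace V B w, ⟪V a, t • -w⟫ = ⟪V a₀, t • -w⟫ := fun a ha => by
    simp only [real_inner_smul_right, inner_neg_right, real_inner_comm w,
      inner_eq_of_mem_minFace V ha ha₀w]
  rwa [expSum_add_of_inner_eq V hshift, mul_pos_iff_of_pos_left (exp_pos _)] at ht

theorem not_tendsto_expSum_div_of_uniformlyPositive_minFace {l : Filter E} [l.NeBot] {v : E}
    (hB : B.Nonempty) (hl : Tendsto (‖·‖) l atTop) (hv : Tendsto (fun y => ‖y‖⁻¹ • y) l (𝓝 v))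
    (hF : UniformlyPositive V c (minFace V B (-v))) :
    ¬ Tendsto (fun y => expSum V c B y / expSum V 1 B y) l (𝓝 0) := by
  classical
  intro hH
  obtain ⟨δ, hδ, hbound⟩ := hF
  have hFB : minFace V B (-v) ⊆ B := minFace_subset V _
  have hy : ∀ᶠ y in l, 0 + ‖y‖ • (‖y‖⁻¹ • y) = y := by
    filter_upwards [hl.eventually_gt_atTop 0] with y hy
    rw [zero_add, smul_inv_smul₀ hy.ne']
  have hoff (d : ι → ℝ) :
      Tendsto (fun y => expSum V d (B \ minFace V B (-v)) y / expSum V 1 B y) l (𝓝 0) :=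
    (tendsto_expSum_sdiff_minFace_div V hl hv d 0).congr' (hy.mono fun y h => by rw [h])
  have hsplit (d : ι → ℝ) (y : E) :
      expSum V d (minFace V B (-v)) y / expSum V 1 B y =
        expSum V d B y / expSum V 1 B y - expSum V d (B \ minFace V B (-v)) y / expSum V 1 B y :=
    eq_sub_of_add_eq' (by rw [← add_div, expSum_sdiff_add V hFB])
  have hF1 : Tendsto (fun y => expSum V 1 (minFace V B (-v)) y / expSum V 1 B y) l (𝓝 1) := by
    simpa only [hsplit, div_self (expSum_one_pos V hB _).ne', sub_zero]
      using tendsto_const_nhds.sub (hoff 1)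
  have hFc : Tendsto (fun y => expSum V c (minFace V B (-v)) y / expSum V 1 B y) l (𝓝 0) := by
    simpa only [hsplit, sub_zero] using hH.sub (hoff c)
  have hδ0 : δ * 1 ≤ 0 := le_of_tendsto_of_tendsto' (hF1.const_mul δ) hFc fun y => by
    rw [← mul_div_assoc]
    exact div_le_div_of_nonneg_right (hbound y) (expSum_one_pos V hB y).le
  linarith

variable [FiniteDimensional ℝ E]

variable (V) in
theorem expSum_div_starProjection (hB : B.Nonempty) (c : ι → ℝ) (y : E) :
    expSum V c B ((vectorSpan ℝ (V '' B)).starProjection y) /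
        expSum V 1 B ((vectorSpan ℝ (V '' B)).starProjection y) =
      expSum V c B y / expSum V 1 B y := by
  set W := vectorSpan ℝ (V '' B)
  obtain ⟨a₀, ha₀⟩ := hB
  have hshift : ∀ a ∈ B, ⟪V a, y - W.starProjection y⟫ = ⟪V a₀, y - W.starProjection y⟫ := by
    intro a ha
    rw [← sub_eq_zero, ← inner_sub_left]
    exact Submodule.inner_right_of_mem_orthogonal
      (vsub_mem_vectorSpan ℝ (Set.mem_image_of_mem V ha) (Set.mem_image_of_mem V ha₀))
      (W.sub_starProjection_mem_orthogonal y)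
  conv_rhs => rw [← add_sub_cancel (W.starProjection y) y]
  rw [expSum_add_of_inner_eq V hshift, expSum_add_of_inner_eq V hshift,
    mul_div_mul_left _ _ (exp_ne_zero _)]

theorem exists_ultrafilter_tendsto_expSum_div (hpos : ∀ y, 0 < expSum V c B y)
    (h : ¬ UniformlyPositive V c B) :
    ∃ U : Ultrafilter E, (vectorSpan ℝ (V '' B) : Set E) ∈ U ∧
      Tendsto (fun y => expSum V c B y / expSum V 1 B y) U (𝓝 0) := by
  have hB : B.Nonempty := Finset.nonempty_of_sum_ne_zero (hpos 0).ne'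
  set H := fun y => expSum V c B y / expSum V 1 B y
  set P := (vectorSpan ℝ (V '' B)).starProjection
  have hl : (comap H (𝓝 0)).NeBot := by
    refine comap_neBot_iff.2 fun t ht => ?_
    obtain ⟨ε, hε, hball⟩ := Metric.mem_nhds_iff.1 ht
    simp only [UniformlyPositive, not_exists, not_and, not_forall, not_le] at h
    obtain ⟨y, hy⟩ := h ε hε
    have hD := expSum_one_pos V hB y
    refine ⟨y, hball ?_⟩
    rw [mem_ball_zero_iff, norm_eq_abs, abs_of_pos (div_pos (hpos y) hD), div_lt_iff₀ hD]
    exact hy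
  refine ⟨Ultrafilter.of (map P (comap H (𝓝 0))), Ultrafilter.of_le _ ?_, ?_⟩
  · exact mem_map.2 (univ_mem' fun y => Submodule.starProjection_apply_mem _ y)
  · refine (tendsto_map'_iff.2 ?_).mono_left (Ultrafilter.of_le _)
    have hHP : H ∘ P = H := funext (expSum_div_starProjection V hB c)
    rw [hHP]
    exact tendsto_comap

theorem FacesPositive.uniformlyPositive (h : FacesPositive V c B) : UniformlyPositive V c B := by
  induction B using Finset.strongInduction with
  | H B ih =>
  by_contra hU
  have hB := h.nonempty
  obtain ⟨U, hWU, hHU⟩ := exists_ultrafilter_tendsto_expSum_div h.expSum_pos hU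
  rcases U.exists_le_nhds_or_tendsto_norm_atTop with ⟨x, hx⟩ | hnorm
  · have hcont : Continuous fun y => expSum V c B y / expSum V 1 B y :=
      (continuous_expSum V c B).div (continuous_expSum V 1 B) fun y =>
        (expSum_one_pos V hB y).ne'
    exact (div_pos (h.expSum_pos x) (expSum_one_pos V hB x)).ne'
      (tendsto_nhds_unique ((hcont.tendsto x).mono_left hx) hHU)
  · obtain ⟨v, hv1, hv⟩ := U.exists_tendsto_inv_norm_smul hnorm
    have hvW : -v ∈ vectorSpan ℝ (V '' B) := by
      refine Submodule.neg_mem _ ((Submodule.closed_of_finiteDimensional _).mem_of_tendsto hv ?_)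
      filter_upwards [hWU] with y hy using Submodule.smul_mem _ _ hy
    have hv0 : -v ≠ 0 := neg_ne_zero.2 (norm_ne_zero_iff.1 (hv1 ▸ one_ne_zero))
    have hFB := (minFace_subset V (-v)).ssubset_of_ne (minFace_ne_of_mem_vectorSpan V hvW hv0)
    exact not_tendsto_expSum_div_of_uniformlyPositive_minFace hB hnorm hv
      (ih _ hFB (h.minFace (-v))) hHU

theorem uniformlyPositive_iff_facesPositive (hB : B.Nonempty) :
    UniformlyPositive V c B ↔ FacesPositive V c B :=
  ⟨UniformlyPositive.facesPositive hB, FacesPositive.uniformlyPositive⟩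

end ExpSum

theorem mem_interior_setOf_forall_sum_mul_nonneg_iff {ι X : Type*} [Fintype ι] {S : Set X}
    {φ : ι → X → ℝ} (hφ : ∀ a, ∀ x ∈ S, 0 ≤ φ a x) (c : ι → ℝ) :
    c ∈ interior {c : ι → ℝ | ∀ x ∈ S, 0 ≤ ∑ a, c a * φ a x} ↔
      ∃ δ > 0, ∀ x ∈ S, δ * ∑ a, φ a x ≤ ∑ a, c a * φ a x := by
  rw [mem_interior_iff_mem_nhds, Metric.mem_nhds_iff]
  constructor
  · rintro ⟨ε, hε, hball⟩
    refine ⟨ε / 2, half_pos hε, fun x hx => ?_⟩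
    have hmem : (fun a => c a - ε / 2) ∈ Metric.ball c ε := by
      rw [Metric.mem_ball, dist_pi_lt_iff hε]
      intro a
      rw [Real.dist_eq, sub_sub_cancel_left, abs_neg, abs_of_pos (half_pos hε)]
      exact half_lt_self hε
    simpa [sub_mul, Finset.mul_sum] using hball hmem x hx
  · rintro ⟨δ, hδ, hbound⟩
    refine ⟨δ, hδ, fun c' hc' x hx => ?_⟩
    rw [Metric.mem_ball, dist_pi_lt_iff hδ] at hc'
    have hterm (a : ι) : c a * φ a x - δ * φ a x ≤ c' a * φ a x := by
      have := (abs_lt.1 (hc' a)).1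
      nlinarith [hφ a x hx]
    calc 0 ≤ ∑ a, c a * φ a x - δ * ∑ a, φ a x := sub_nonneg.2 (hbound x hx)
      _ = ∑ a, (c a * φ a x - δ * φ a x) := by rw [Finset.sum_sub_distrib, Finset.mul_sum]
      _ ≤ ∑ a, c' a * φ a x := Finset.sum_le_sum fun a _ => hterm a

theorem forall_nonneg_le_iff_forall_pos_le {ι : Type*} {f g : (ι → ℝ) → ℝ} (hf : Continuous f)
    (hg : Continuous g) :
    (∀ u : ι → ℝ, (∀ i, 0 ≤ u i) → f u ≤ g u) ↔ ∀ u : ι → ℝ, (∀ i, 0 < u i) → f u ≤ g u := by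
  refine ⟨fun h u hu => h u fun i => (hu i).le, fun h u hu => ?_⟩
  have hcl : closure (Set.univ.pi fun _ => Set.Ioi (0 : ℝ)) ⊆ {u | f u ≤ g u} :=
    closure_minimal (fun u hu => h u fun i => hu i (Set.mem_univ i)) (isClosed_le hf hg)
  rw [closure_pi_set] at hcl
  exact hcl fun i _ => by simpa using hu i

section Exponents

variable {n : ℕ}

def realExponent (a : Fin n → ℕ) : EuclideanSpace ℝ (Fin n) :=
  WithLp.toLp 2 fun i => (a i : ℝ)

theorem inner_toLp_realExponent (w : Fin n → ℝ) (a : Fin n → ℕ) :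
    ⟪WithLp.toLp 2 w, realExponent a⟫ = ∑ i, w i * a i := by
  simp [realExponent, PiLp.inner_apply, mul_comm]

theorem exp_inner_realExponent (a : Fin n → ℕ) (y : EuclideanSpace ℝ (Fin n)) :
    exp ⟪realExponent a, y⟫ = ∏ i, exp (y i) ^ a i := by
  simp [realExponent, PiLp.inner_apply, exp_sum, ← exp_nat_mul, mul_comm]

theorem forall_pos_iff_forall_exp {P : (Fin n → ℝ) → Prop} :
    (∀ u : Fin n → ℝ, (∀ i, 0 < u i) → P u) ↔
      ∀ y : EuclideanSpace ℝ (Fin n), P fun i => exp (y i) :=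
  ⟨fun h y => h _ fun _ => exp_pos _, fun h u hu => by
    simpa [exp_log (hu _)] using h (WithLp.toLp 2 fun i => log (u i))⟩

variable (A : Finset (Fin n → ℕ)) (c : A → ℝ)

theorem mem_interior_copositive_iff_uniformlyPositive :
    c ∈ interior {c : A → ℝ | ∀ u : Fin n → ℝ, (∀ i, 0 ≤ u i) →
      0 ≤ ∑ a ∈ A.attach, c a * ∏ i, u i ^ a.1 i} ↔
      UniformlyPositive (fun a : A => realExponent a.1) c Finset.univ := by
  rw [← Finset.univ_eq_attach]
  refine (mem_interior_setOf_forall_sum_mul_nonneg_iff (S := {u : Fin n → ℝ | ∀ i, 0 ≤ u i})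
    (fun a u hu => Finset.prod_nonneg fun i _ => pow_nonneg (hu i) _) c).trans
    (exists_congr fun δ => and_congr_right fun _ => ?_)
  refine (forall_nonneg_le_iff_forall_pos_le (by fun_prop) (by fun_prop)).trans ?_
  simp [forall_pos_iff_forall_exp, expSum, exp_inner_realExponent]

theorem facesPositive_iff :
    FacesPositive (fun a : A => realExponent a.1) c Finset.univ ↔
      ∀ w : Fin n → ℝ, ∀ x : Fin n → ℝ, (∀ i, 0 < x i) →
        0 < ∑ a ∈ A.attach.filter (fun a => ∀ b ∈ A,
              ∑ i, w i * (a.1 i : ℝ) ≤ ∑ i, w i * (b i : ℝ)),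
            c a * ∏ i, x i ^ a.1 i := by
  refine (WithLp.equiv 2 (Fin n → ℝ)).symm.forall_congr_right.symm.trans
    (forall_congr' fun w => ?_)
  have hface : minFace (fun a : A => realExponent a.1) Finset.univ (WithLp.toLp 2 w) =
      A.attach.filter (fun a => ∀ b ∈ A, ∑ i, w i * (a.1 i : ℝ) ≤ ∑ i, w i * (b i : ℝ)) := by
    ext a
    simp [inner_toLp_realExponent]
  rw [WithLp.equiv_symm_apply, hface, forall_pos_iff_forall_exp]
  simp [expSum, exp_inner_realExponent]

end Exponents

open scoped Classical in
theorem interior_copositive_cone_iff_general (n : ℕ) (A : Finset (Fin n → ℕ)) (hA : A.Nonempty)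
    (C : Set (↥A → ℝ))
    (hC : C = {c : ↥A → ℝ | ∀ u : Fin n → ℝ, (∀ i, 0 ≤ u i) →
      0 ≤ ∑ a ∈ A.attach, c a * ∏ i, u i ^ a.1 i})
    (c : ↥A → ℝ) :
    c ∈ interior C ↔
      ∀ w : Fin n → ℝ, ∀ x : Fin n → ℝ, (∀ i, 0 < x i) →
        0 < ∑ a ∈ A.attach.filter (fun a => ∀ b ∈ A,
              ∑ i, w i * (a.1 i : ℝ) ≤ ∑ i, w i * (b i : ℝ)),
            c a * ∏ i, x i ^ a.1 i := by
  subst hC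
  rw [mem_interior_copositive_iff_uniformlyPositive,
    uniformlyPositive_iff_facesPositive (Finset.univ_nonempty_iff.2 hA.to_subtype),
    facesPositive_iff]

open scoped Classical in
/-- For a support set `A ⊂ ℕⁿ` with constant coordinate sum, a coefficient vector `c`
lies in the interior of the copositive cone `C_A` iff every facial restriction
`f_c|_w = Σ_{a∈A_w} c_a x^a` (where `A_w` is the set of `⟨w,·⟩`-minimizers in `A`)
is strictly positive on the open positive orthant. -/
theorem interior_copositive_cone_iff (n : ℕ) (A : Finset (Fin n → ℕ)) (hA : A.Nonempty)
    (hdeg : ∃ d : ℕ, ∀ a ∈ A, ∑ i, a i = d) (C : Set (↥A → ℝ))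
    (hC : C = {c : ↥A → ℝ | ∀ u : Fin n → ℝ, (∀ i, 0 ≤ u i) →
      0 ≤ ∑ a ∈ A.attach, c a * ∏ i, u i ^ a.1 i})
    (c : ↥A → ℝ) :
    c ∈ interior C ↔
      ∀ w : Fin n → ℝ, ∀ x : Fin n → ℝ, (∀ i, 0 < x i) →
        0 < ∑ a ∈ A.attach.filter (fun a => ∀ b ∈ A,
              ∑ i, w i * (a.1 i : ℝ) ≤ ∑ i, w i * (b i : ℝ)),
            c a * ∏ i, x i ^ a.1 i :=
  interior_copositive_cone_iff_general n A hA C hC c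
end

section
/- Let A ⊂ ℕⁿ be a finite nonempty set all of whose elements have the same coordinate sum, and let c ∈ ℝ^A lie on the topological boundary of the copositive cone C_A. Then there exist a weight w ∈ ℝⁿ and a point u ∈ ℝⁿ_{>0} such that the facial restriction g(x) = Σ_{a∈A_w} c_a x^a satisfies g(u) = 0 and ∂g/∂x_i(u) = 0 for all i = 1, …, n. In particular, every boundary point of C_A gives a facial polynomial with a singular zero in the positive orthant, so the boundary of C_A is contained in the vanishing locus of the principal A-determinant. -/
/-!
In logarithmic coordinates `u = exp y` the exponent vectors `(⟨a, y⟩ + r)_a` form a linear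
subspace `V ⊆ ℝ^A`, and copositivity of `c` says `∑ c_a exp v_a ≥ 0` for all `v ∈ V`. If `c` is
not interior, there are `v ∈ V` with `∑ c_a exp v_a < t ∑ exp v_a` for every `t > 0`; the
normalized vectors `exp v / ∑ exp v` accumulate at a point `μ` of the simplex with
`∑ c_a μ_a = 0`. Such a limit is supported on a face `A_w` and equals `exp η` there for some
`η ∈ V`: if some coordinate of `μ` vanishes, a recession direction of the sequence cuts out a
smaller face still containing the support, and we recurse. Facial restrictions of copositive
sums are copositive, so `η` minimizes `∑_{A_w} c_a exp v_a` over `V` with value `0`, which makes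
`exp` of the corresponding `y` a singular zero of the facial polynomial.
-/
open Filter Topology Finset Real Matrix

namespace Copositive

variable {ι : Type*}

open Classical in
noncomputable def face (s : Finset ι) (w : ι → ℝ) : Finset ι := {i ∈ s | ∀ j ∈ s, w i ≤ w j}

lemma mem_face {s : Finset ι} {w : ι → ℝ} {i : ι} :
    i ∈ face s w ↔ i ∈ s ∧ ∀ j ∈ s, w i ≤ w j := by
  classical
  simp only [face, mem_filter]

lemma face_subset (s : Finset ι) (w : ι → ℝ) : face s w ⊆ s := fun _ h => (mem_face.1 h).1

lemma face_zero (s : Finset ι) : face s 0 = s := by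
  ext i; simp [mem_face]

lemma face_add_const (s : Finset ι) (w : ι → ℝ) (r : ℝ) : face s (w + r • 1) = face s w := by
  ext i; simp [mem_face]

lemma sum_mul_exp_add_const (s : Finset ι) (c v : ι → ℝ) (r : ℝ) :
    ∑ i ∈ s, c i * exp ((v + r • 1) i) = exp r * ∑ i ∈ s, c i * exp (v i) := by
  simp only [mul_sum, Pi.add_apply, Pi.smul_apply, Pi.one_apply, smul_eq_mul, mul_one, exp_add]
  exact sum_congr rfl fun i _ => by ring

lemma eventually_lt_add_mul {a b : ℝ} (h : a < b) (a' b' : ℝ) :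
    ∀ᶠ ε in 𝓝 (0 : ℝ), a + ε * a' < b + ε * b' := by
  have hcont : ∀ x x' : ℝ, Tendsto (fun ε : ℝ => x + ε * x') (𝓝 0) (𝓝 x) := fun x x' => by
    simpa using ((continuous_id.mul continuous_const).const_add x).tendsto' 0 _ (by simp)
  exact (hcont a a').eventually_lt (hcont b b') h

lemma exists_face_add_smul_eq_face_face (s : Finset ι) (w w' : ι → ℝ) :
    ∃ ε : ℝ, face s (w + ε • w') = face (face s w) w' := by
  have key : ∀ᶠ ε in 𝓝[>] (0 : ℝ), ∀ i ∈ s, ∀ j ∈ s,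
      (w i + ε * w' i ≤ w j + ε * w' j ↔ w i < w j ∨ (w i = w j ∧ w' i ≤ w' j)) := by
    simp only [eventually_all_finset]
    intro i _ j _
    rcases lt_trichotomy (w i) (w j) with h | h | h
    · filter_upwards [nhdsWithin_le_nhds (eventually_lt_add_mul h (w' i) (w' j))] with ε hε
      simp [hε.le, h]
    · filter_upwards [self_mem_nhdsWithin] with ε (hε : 0 < ε)
      simp [h, mul_le_mul_iff_right₀ hε]
    · filter_upwards [nhdsWithin_le_nhds (eventually_lt_add_mul h (w' j) (w' i))] with ε hε
      simp [not_le.2 hε, h.not_gt, h.ne']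
  obtain ⟨ε, hε⟩ := key.exists
  refine ⟨ε, ext fun i => ?_⟩
  simp only [mem_face, Pi.add_apply, Pi.smul_apply, smul_eq_mul]
  constructor
  · rintro ⟨hi, hmin⟩
    have hle : ∀ j ∈ s, w i ≤ w j := fun j hj =>
      ((hε i hi j hj).1 (hmin j hj)).elim le_of_lt (·.1.le)
    exact ⟨⟨hi, hle⟩, fun j ⟨hj, hjmin⟩ =>
      ((hε i hi j hj).1 (hmin j hj)).elim (fun h => absurd (hjmin i hi) (not_le.2 h)) (·.2)⟩
  · rintro ⟨⟨hi, hle⟩, hmin⟩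
    refine ⟨hi, fun j hj => (hε i hi j hj).2 ?_⟩
    rcases (hle j hj).lt_or_eq with h | h
    · exact .inl h
    · exact .inr ⟨h, hmin j ⟨hj, fun k hk => h ▸ hle k hk⟩⟩

lemma exists_mem_eqOn_of_tendsto {V : Submodule ℝ (ι → ℝ)} {s : Finset ι} {ℓ : ℕ → ι → ℝ}
    (hℓ : ∀ k, ℓ k ∈ V) {L : s → ℝ} (h : ∀ i : s, Tendsto (fun k => ℓ k i) atTop (𝓝 (L i))) :
    ∃ η ∈ V, ∀ i : s, η i = L i := by
  let R := LinearMap.funLeft ℝ ℝ ((↑) : s → ι)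
  have hclosed : IsClosed ((V.map R : Submodule ℝ (s → ℝ)) : Set (s → ℝ)) :=
    Submodule.closed_of_finiteDimensional _
  obtain ⟨η, hη, hηL⟩ := hclosed.mem_of_tendsto (tendsto_pi_nhds.2 h)
    (Eventually.of_forall fun k => ⟨ℓ k, hℓ k, rfl⟩)
  exact ⟨η, hη, fun i => congrFun hηL i⟩

lemma exists_recession_direction {V : Submodule ℝ (ι → ℝ)} {s : Finset ι} {ℓ : ℕ → ι → ℝ}
    (hℓ : ∀ k, ℓ k ∈ V) {μ : ι → ℝ}
    (hμ : ∀ i ∈ s, Tendsto (fun k => exp (ℓ k i)) atTop (𝓝 (μ i)))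
    {i₀ : ι} (hi₀ : i₀ ∈ s) (hμi₀ : μ i₀ = 0) :
    ∃ w ∈ V, (∀ i ∈ s, 0 ≤ w i) ∧ (∀ i ∈ s, μ i ≠ 0 → w i = 0) ∧ ∃ i ∈ s, 0 < w i := by
  set N : ℕ → ℝ := fun k => ‖fun i : s => ℓ k i‖
  have hN : Tendsto N atTop atTop := by
    refine tendsto_atTop_mono (fun k => norm_le_pi_norm (fun i : s => ℓ k i) ⟨i₀, hi₀⟩) ?_
    simpa [Function.comp_def] using tendsto_abs_atBot_atTop.comp
      (tendsto_exp_comp_nhds_zero.1 (hμi₀ ▸ hμ i₀ hi₀))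
  set u : ℕ → s → ℝ := fun k => (N k)⁻¹ • fun i : s => ℓ k i
  have hu : ∀ k, u k ∈ Metric.closedBall 0 1 := fun k => by
    simpa [u, norm_smul, N] using inv_mul_le_one_of_le₀ le_rfl (norm_nonneg _)
  obtain ⟨κ, -, φ, hφ, hκ⟩ := (isCompact_closedBall (0 : s → ℝ) 1).tendsto_subseq hu
  have hNφ := hN.comp hφ.tendsto_atTop
  have hNpos : ∀ᶠ k in atTop, 0 < N (φ k) := hNφ.eventually_gt_atTop 0
  have hκi : ∀ i : s, Tendsto (fun k => ℓ (φ k) i / N (φ k)) atTop (𝓝 (κ i)) := fun i => by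
    simpa [u, div_eq_inv_mul] using tendsto_pi_nhds.1 hκ i
  have hκ_norm : ‖κ‖ = 1 := by
    refine tendsto_nhds_unique (hκ.norm) (tendsto_const_nhds.congr' ?_)
    filter_upwards [hNpos] with k hk
    simp [u, norm_smul, N, hk.ne']
  have hκ_nonpos : ∀ i : s, κ i ≤ 0 := fun i => by
    have hbound : ∀ᶠ k in atTop, ℓ (φ k) i / N (φ k) ≤ μ i / N (φ k) := by
      filter_upwards [hNpos, (hμ i i.2).comp hφ.tendsto_atTop |>.eventually_lt_const
        (lt_add_one (μ i))] with k hk hexp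
      gcongr
      linarith [add_one_le_exp (ℓ (φ k) i), show exp (ℓ (φ k) i) < μ i + 1 from hexp]
    exact le_of_tendsto_of_tendsto (hκi i) (tendsto_const_nhds.div_atTop hNφ) hbound
  have hκ_supp : ∀ i : s, μ i ≠ 0 → κ i = 0 := fun i hi => by
    have hlog : Tendsto (fun k => ℓ (φ k) i) atTop (𝓝 (log (μ i))) := by
      simpa [Function.comp_def] using ((hμ i i.2).log hi).comp hφ.tendsto_atTop
    exact tendsto_nhds_unique (hκi i) (hlog.div_atTop hNφ)
  obtain ⟨w, hw, hwκ⟩ := exists_mem_eqOn_of_tendsto (L := -κ)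
    (fun k => V.smul_mem (-(N (φ k))⁻¹) (hℓ (φ k))) fun i => by
      simpa [neg_div, div_eq_inv_mul] using (hκi i).neg
  obtain ⟨i₁, hi₁⟩ := Function.ne_iff.1 (ne_zero_of_norm_ne_zero (hκ_norm.trans_ne one_ne_zero))
  refine ⟨w, hw, fun i hi => ?_, fun i hi hμi => ?_, i₁, i₁.2, ?_⟩
  · simpa [hwκ ⟨i, hi⟩] using hκ_nonpos ⟨i, hi⟩
  · simpa [hwκ ⟨i, hi⟩] using hκ_supp ⟨i, hi⟩ hμi
  · simpa [hwκ i₁] using (hκ_nonpos i₁).lt_of_ne hi₁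

theorem exists_face_of_tendsto_exp {V : Submodule ℝ (ι → ℝ)} (s : Finset ι) {ℓ : ℕ → ι → ℝ}
    (hℓ : ∀ k, ℓ k ∈ V) {μ : ι → ℝ}
    (hμ : ∀ i ∈ s, Tendsto (fun k => exp (ℓ k i)) atTop (𝓝 (μ i))) (hne : ∃ i ∈ s, μ i ≠ 0) :
    ∃ w ∈ V, ∃ η ∈ V, (∀ i ∈ face s w, μ i = exp (η i)) ∧ ∀ i ∈ s, i ∉ face s w → μ i = 0 := by
  induction s using Finset.strongInduction with
  | H s ih =>
  by_cases hpos : ∀ i ∈ s, μ i ≠ 0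
  · obtain ⟨η, hη, hημ⟩ := exists_mem_eqOn_of_tendsto hℓ (L := fun i : s => log (μ i))
      fun i => by simpa using (hμ i i.2).log (hpos i i.2)
    refine ⟨0, V.zero_mem, η, hη, fun i hi => ?_, fun i hi hi' => absurd hi (face_zero s ▸ hi')⟩
    rw [face_zero] at hi
    rw [hημ ⟨i, hi⟩,
      exp_log ((ge_of_tendsto' (hμ i hi) fun _ => (exp_pos _).le).lt_of_ne' (hpos i hi))]
  push Not at hpos
  obtain ⟨i₀, hi₀, hμi₀⟩ := hpos
  obtain ⟨w, hw, hw_nonneg, hw_supp, i₁, hi₁, hwi₁⟩ := exists_recession_direction hℓ hμ hi₀ hμi₀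
  have hsupp : ∀ i ∈ s, μ i ≠ 0 → i ∈ face s w := fun i hi h =>
    mem_face.2 ⟨hi, fun j hj => (hw_supp i hi h).symm ▸ hw_nonneg j hj⟩
  obtain ⟨j, hj, hμj⟩ := hne
  have hssub : face s w ⊂ s := ssubset_of_subset_of_ne (face_subset s w) fun h => by
    have := (mem_face.1 (by rw [h]; exact hi₁ : i₁ ∈ face s w)).2 j hj
    linarith [hw_supp j hj hμj]
  obtain ⟨w', hw', η, hη, hμη, hμ₀⟩ := ih _ hssub (fun i hi => hμ i (face_subset s w hi))
    ⟨j, hsupp j hj hμj, hμj⟩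
  obtain ⟨ε, hε⟩ := exists_face_add_smul_eq_face_face s w w'
  refine ⟨w + ε • w', V.add_mem hw (V.smul_mem ε hw'), η, hη, hε ▸ hμη, fun i hi hi' => ?_⟩
  rw [hε] at hi'
  by_cases hiw : i ∈ face s w
  · exact hμ₀ i hiw hi'
  · exact not_not.1 fun h => hiw (hsupp i hi h)

lemma sum_face_mul_exp_nonneg {V : Submodule ℝ (ι → ℝ)} {s : Finset ι} {c : ι → ℝ}
    (hc : ∀ v ∈ V, 0 ≤ ∑ i ∈ s, c i * exp (v i)) {w : ι → ℝ} (hw : w ∈ V) :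
    ∀ v ∈ V, 0 ≤ ∑ i ∈ face s w, c i * exp (v i) := by
  intro v hv
  rcases (face s w).eq_empty_or_nonempty with h | ⟨i₀, hi₀⟩
  · simp [h]
  obtain ⟨-, hi₀min⟩ := mem_face.1 hi₀
  -- Multiplying by `exp (t * w i₀)` keeps the terms on the face and kills the others as `t → ∞`.
  have hlim : Tendsto (fun t : ℝ => ∑ i ∈ s, c i * exp (v i - t * (w i - w i₀))) atTop
      (𝓝 (∑ i ∈ face s w, c i * exp (v i))) := by
    classical
    rw [face, sum_filter]
    refine tendsto_finsetSum _ fun i hi => ?_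
    split_ifs with hmin
    · simp [le_antisymm (hmin i₀ (mem_face.1 hi₀).1) (hi₀min i hi)]
    · have hlt : w i₀ < w i := (hi₀min i hi).lt_of_ne fun h =>
        hmin fun j hj => h ▸ hi₀min j hj
      have : Tendsto (fun t : ℝ => v i - t * (w i - w i₀)) atTop atBot :=
        tendsto_atBot_add_const_left _ _
          (tendsto_neg_atTop_atBot.comp (tendsto_id.atTop_mul_const (sub_pos.2 hlt)))
      simpa using (tendsto_exp_atBot.comp this).const_mul (c i)
  refine ge_of_tendsto' hlim fun t => ?_
  have hterm : ∀ i, c i * exp (v i - t * (w i - w i₀))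
      = exp (t * w i₀) * (c i * exp ((v - t • w) i)) := fun i => by
    simp only [Pi.sub_apply, Pi.smul_apply, smul_eq_mul, mul_left_comm (exp _), ← exp_add]
    ring_nf
  simp only [hterm, ← mul_sum]
  exact mul_nonneg (exp_pos _).le (hc _ (V.sub_mem hv (V.smul_mem t hw)))

lemma sum_mul_mul_exp_eq_zero {V : Submodule ℝ (ι → ℝ)} {s : Finset ι} {c : ι → ℝ}
    (hc : ∀ v ∈ V, 0 ≤ ∑ i ∈ s, c i * exp (v i)) {η : ι → ℝ} (hη : η ∈ V)
    (hη₀ : ∑ i ∈ s, c i * exp (η i) = 0) {d : ι → ℝ} (hd : d ∈ V) :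
    ∑ i ∈ s, c i * d i * exp (η i) = 0 := by
  set f : ℝ → ℝ := fun t => ∑ i ∈ s, c i * exp (η i + t * d i)
  have hmin : IsLocalMin f 0 := IsMinOn.isLocalMin (s := Set.univ) (fun t _ => by
    simpa [f, hη₀] using hc _ (V.add_mem hη (V.smul_mem t hd))) Filter.univ_mem
  have hderiv : HasDerivAt f (∑ i ∈ s, c i * (exp (η i + 0 * d i) * (1 * d i))) 0 :=
    HasDerivAt.fun_sum fun i _ =>
      ((((hasDerivAt_id' (0 : ℝ)).mul_const (d i)).const_add (η i)).exp).const_mul (c i)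
  simpa [mul_assoc, mul_comm (d _)] using hmin.hasDerivAt_eq_zero hderiv

theorem exists_face_sum_mul_exp_eq_zero [Fintype ι] {V : Submodule ℝ (ι → ℝ)}
    (hV : (1 : ι → ℝ) ∈ V) {c : ι → ℝ} (hc : ∀ v ∈ V, 0 ≤ ∑ i, c i * exp (v i))
    (hinf : ∀ t > 0, ∃ v ∈ V, ∑ i, c i * exp (v i) < t * ∑ i, exp (v i)) :
    ∃ w ∈ V, ∃ η ∈ V, (∀ v ∈ V, 0 ≤ ∑ i ∈ face univ w, c i * exp (v i)) ∧
      ∑ i ∈ face univ w, c i * exp (η i) = 0 := by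
  choose v hv hvc using fun k : ℕ => hinf (1 / (k + 1)) Nat.one_div_pos_of_nat
  set S : ℕ → ℝ := fun k => ∑ i, exp (v k i)
  have : Nonempty ι := by
    by_contra h
    simpa [not_nonempty_iff.1 h] using hvc 0
  have hS : ∀ k, 0 < S k := fun k => sum_pos (fun i _ => exp_pos _) univ_nonempty
  set ℓ : ℕ → ι → ℝ := fun k => v k - log (S k) • 1
  have hℓ : ∀ k, ℓ k ∈ V := fun k => V.sub_mem (hv k) (V.smul_mem _ hV)
  have hexp : ∀ k i, exp (ℓ k i) = exp (v k i) / S k := fun k i => by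
    simp [ℓ, exp_sub, exp_log (hS k)]
  have hsimplex : ∀ k, (fun i => exp (ℓ k i)) ∈ stdSimplex ℝ ι := fun k =>
    ⟨fun i => (exp_pos _).le, by simp only [hexp]; rw [← sum_div, div_self (hS k).ne']⟩
  obtain ⟨μ, hμ, φ, hφ, hlim⟩ := (isCompact_stdSimplex ℝ ι).tendsto_subseq hsimplex
  have hμi : ∀ i, Tendsto (fun k => exp (ℓ (φ k) i)) atTop (𝓝 (μ i)) := tendsto_pi_nhds.1 hlim
  have hcμ : ∑ i, c i * μ i = 0 := by
    have hsmall (k : ℕ) : ∑ i, c i * exp (ℓ k i) ∈ Set.Ico (0 : ℝ) (1 / ((k : ℝ) + 1)) := by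
      have hsum : ∑ i, c i * exp (ℓ k i) = (∑ i, c i * exp (v k i)) / S k := by
        simp_rw [hexp, mul_div_assoc', sum_div]
      rw [hsum, Set.mem_Ico, div_lt_iff₀ (hS k)]
      exact ⟨div_nonneg (hc _ (hv k)) (hS k).le, hvc k⟩
    refine tendsto_nhds_unique (tendsto_finsetSum _ fun i _ => (hμi i).const_mul (c i)) ?_
    refine squeeze_zero (fun k => (hsmall (φ k)).1) (fun k => (hsmall (φ k)).2.le) ?_
    exact (tendsto_one_div_add_atTop_nhds_zero_nat).comp hφ.tendsto_atTop
  have hne : ∃ i ∈ univ, μ i ≠ 0 := by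
    by_contra! h
    simpa [h] using hμ.2
  obtain ⟨w, hw, η, hη, hμη, hμ₀⟩ := exists_face_of_tendsto_exp univ (fun k => hℓ (φ k))
    (fun i _ => hμi i) hne
  refine ⟨w, hw, η, hη, sum_face_mul_exp_nonneg hc hw, ?_⟩
  rw [← hcμ, ← sum_subset (subset_univ _) fun i _ hi => by rw [hμ₀ i (mem_univ i) hi, mul_zero]]
  exact sum_congr rfl fun i hi => by rw [hμη i hi]

lemma nonneg_of_forall_pos {κ : Type*} [Fintype κ] {f : (κ → ℝ) → ℝ} (hf : Continuous f)
    (h : ∀ u, (∀ i, 0 < u i) → 0 ≤ f u) (u : κ → ℝ) (hu : ∀ i, 0 ≤ u i) : 0 ≤ f u := by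
  have hcl : closure (Set.univ.pi fun _ => Set.Ioi (0 : ℝ)) ⊆ {u | 0 ≤ f u} :=
    (isClosed_le continuous_const hf).closure_subset_iff.2 fun u hu => h u fun i => hu i trivial
  rw [closure_pi_set, closure_Ioi] at hcl
  exact hcl fun i _ => hu i

variable {n : ℕ}

def exponentMatrix (α : ι → Fin n → ℕ) : Matrix (Fin n) ι ℝ := Matrix.of fun i a => α a i

lemma prod_exp_pow (α : ι → Fin n → ℕ) (y : Fin n → ℝ) (a : ι) :
    ∏ i, exp (y i) ^ α a i = exp ((y ᵥ* exponentMatrix α) a) := by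
  simp only [vecMul, dotProduct, exponentMatrix, of_apply, exp_sum, ← exp_nat_mul,
    mul_comm]

variable [Fintype ι]

def copositiveCone (α : ι → Fin n → ℕ) : Set (ι → ℝ) :=
  {c | ∀ u : Fin n → ℝ, (∀ i, 0 ≤ u i) → 0 ≤ ∑ a, c a * ∏ i, u i ^ α a i}

lemma sum_mul_exp_nonneg_of_mem_closure {α : ι → Fin n → ℕ} {c : ι → ℝ}
    (hc : c ∈ closure (copositiveCone α)) (y : Fin n → ℝ) :
    0 ≤ ∑ a, c a * exp ((y ᵥ* exponentMatrix α) a) := by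
  have hclosed : IsClosed
      {c : ι → ℝ | ∀ y : Fin n → ℝ, 0 ≤ ∑ a, c a * exp ((y ᵥ* exponentMatrix α) a)} := by
    simp only [Set.ofPred_forall]
    exact isClosed_iInter fun y => isClosed_le continuous_const (by fun_prop)
  refine closure_minimal (fun c hc y => ?_) hclosed hc y
  simpa only [prod_exp_pow] using hc (fun i => exp (y i)) fun i => (exp_pos _).le

lemma mem_interior_copositiveCone {α : ι → Fin n → ℕ} {c : ι → ℝ} {t : ℝ} (ht : 0 < t)
    (h : ∀ y : Fin n → ℝ, t * ∑ a, exp ((y ᵥ* exponentMatrix α) a) ≤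
      ∑ a, c a * exp ((y ᵥ* exponentMatrix α) a)) :
    c ∈ interior (copositiveCone α) := by
  have hshift : ∀ u : Fin n → ℝ, (∀ i, 0 ≤ u i) →
      0 ≤ ∑ a, c a * ∏ i, u i ^ α a i - t * ∑ a, ∏ i, u i ^ α a i := by
    refine nonneg_of_forall_pos (by fun_prop) fun u hu => ?_
    have hlog : u = fun i => exp (log (u i)) := funext fun i => (exp_log (hu i)).symm
    rw [hlog]
    simpa only [prod_exp_pow, sub_nonneg] using h fun i => log (u i)
  refine mem_interior.2 ⟨Metric.ball c t, fun c' hc' u hu => ?_, Metric.isOpen_ball,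
    Metric.mem_ball_self ht⟩
  have hcoef : ∀ a, 0 ≤ c' a - c a + t := fun a => by
    have := (dist_pi_lt_iff ht).1 hc' a
    rw [Real.dist_eq, abs_lt] at this
    linarith
  have hsplit : ∑ a, c' a * ∏ i, u i ^ α a i = ∑ a, (c' a - c a + t) * ∏ i, u i ^ α a i +
      (∑ a, c a * ∏ i, u i ^ α a i - t * ∑ a, ∏ i, u i ^ α a i) := by
    simp only [mul_sum, ← sum_add_distrib, ← sum_sub_distrib]
    exact sum_congr rfl fun a _ => by ring
  rw [hsplit]
  exact add_nonneg (sum_nonneg fun a _ => mul_nonneg (hcoef a)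
    (prod_nonneg fun i _ => pow_nonneg (hu i) _)) (hshift u hu)

open MvPolynomial in
lemma X_mul_pderiv_C_mul_prod_X_pow (r : ℝ) (a : Fin n → ℕ) (j : Fin n) :
    X j * pderiv j (C r * ∏ i, X i ^ a i : MvPolynomial (Fin n) ℝ) =
      C (a j * r) * ∏ i, X i ^ a i := by
  have hmono : ∀ r : ℝ, C r * ∏ i, X i ^ a i = monomial (Finsupp.equivFunOnFinite.symm a) r :=
    fun r => by
      rw [monomial_eq, Finsupp.prod_fintype _ _ fun i => pow_zero _]
      rfl
  rw [hmono, hmono, X_mul_pderiv_monomial, smul_monomial, nsmul_eq_mul]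
  rfl

open MvPolynomial in
theorem exists_face_singular_zero_of_mem_frontier {α : ι → Fin n → ℕ} {c : ι → ℝ}
    (hc : c ∈ frontier (copositiveCone α)) :
    ∃ W Y : Fin n → ℝ,
      let g : MvPolynomial (Fin n) ℝ :=
        ∑ a ∈ face univ (W ᵥ* exponentMatrix α), C (c a) * ∏ i, X i ^ α a i
      eval (fun i => exp (Y i)) g = 0 ∧ ∀ j, eval (fun i => exp (Y i)) (pderiv j g) = 0 := by
  set E := exponentMatrix α
  set V : Submodule ℝ (ι → ℝ) := LinearMap.range (vecMulLinear E) ⊔ ℝ ∙ 1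
  have hmemV : ∀ v ∈ V, ∃ (y : Fin n → ℝ) (r : ℝ), v = y ᵥ* E + r • 1 := fun v hv => by
    obtain ⟨_, ⟨y, rfl⟩, _, hr, rfl⟩ := Submodule.mem_sup.1 hv
    obtain ⟨r, rfl⟩ := Submodule.mem_span_singleton.1 hr
    exact ⟨y, r, rfl⟩
  have hvecMul : ∀ y, y ᵥ* E ∈ V := fun y => Submodule.mem_sup_left ⟨y, rfl⟩
  have hcV : ∀ v ∈ V, 0 ≤ ∑ a, c a * exp (v a) := fun v hv => by
    obtain ⟨y, r, rfl⟩ := hmemV v hv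
    rw [sum_mul_exp_add_const]
    exact mul_nonneg (exp_pos r).le (sum_mul_exp_nonneg_of_mem_closure hc.1 y)
  have hinf : ∀ t > 0, ∃ v ∈ V, ∑ a, c a * exp (v a) < t * ∑ a, exp (v a) := fun t ht => by
    by_contra! h
    exact hc.2 (mem_interior_copositiveCone ht fun y => h _ (hvecMul y))
  obtain ⟨w, hw, η, hη, hF, hFη⟩ := exists_face_sum_mul_exp_eq_zero
    (Submodule.mem_sup_right (Submodule.mem_span_singleton_self 1)) hcV hinf
  obtain ⟨W, r, rfl⟩ := hmemV w hw
  obtain ⟨Y, r', rfl⟩ := hmemV η hη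
  rw [face_add_const] at hF hFη
  rw [sum_mul_exp_add_const, mul_eq_zero, or_iff_right (exp_pos r').ne'] at hFη
  have heval : ∀ (F : Finset ι) (d : ι → ℝ), eval (fun i => exp (Y i))
      (∑ a ∈ F, C (d a) * ∏ i, X i ^ α a i) = ∑ a ∈ F, d a * exp ((Y ᵥ* E) a) := fun F d => by
    simp [← prod_exp_pow, E]
  refine ⟨W, Y, by simpa only [heval] using hFη, fun j => ?_⟩
  have hgrad := sum_mul_mul_exp_eq_zero hF (hvecMul Y) hFη (hvecMul (Pi.single j 1))
  rw [← mul_right_inj' (exp_pos (Y j)).ne', mul_zero, ← eval_X (f := fun i => exp (Y i)) j,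
    ← map_mul, map_sum, mul_sum]
  simp only [X_mul_pderiv_C_mul_prod_X_pow, heval]
  simpa [E, exponentMatrix, single_vecMul, mul_comm] using hgrad

end Copositive

open Copositive

open MvPolynomial in
open scoped Classical in
theorem boundary_in_principal_A_determinant_general (n : ℕ) (A : Finset (Fin n → ℕ))
    (C : Set (↥A → ℝ))
    (hC : C = {c : ↥A → ℝ | ∀ u : Fin n → ℝ, (∀ i, 0 ≤ u i) →
      0 ≤ ∑ a ∈ A.attach, c a * ∏ i, u i ^ a.1 i})
    (c : ↥A → ℝ) (hc : c ∈ frontier C) :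
    ∃ (w : Fin n → ℝ) (u : Fin n → ℝ), (∀ i, 0 < u i) ∧
      (let g : MvPolynomial (Fin n) ℝ :=
        ∑ a ∈ A.attach.filter (fun a => ∀ b ∈ A,
            ∑ i, w i * (a.1 i : ℝ) ≤ ∑ i, w i * (b i : ℝ)),
          MvPolynomial.C (c a) * ∏ i, X i ^ a.1 i
      eval u g = 0 ∧ ∀ i, eval u (pderiv i g) = 0) := by
  have hcone : C = copositiveCone (Subtype.val : A → Fin n → ℕ) := by
    rw [hC, attach_eq_univ]
    rfl
  obtain ⟨w, y, hg⟩ := exists_face_singular_zero_of_mem_frontier (hcone ▸ hc)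
  have hface : A.attach.filter (fun a => ∀ b ∈ A,
        ∑ i, w i * (a.1 i : ℝ) ≤ ∑ i, w i * (b i : ℝ)) =
      face univ (w ᵥ* exponentMatrix Subtype.val) := by
    ext a
    simp [mem_face, vecMul, dotProduct, exponentMatrix]
  exact ⟨w, fun i => Real.exp (y i), fun i => Real.exp_pos _, by simpa only [hface] using hg⟩

open MvPolynomial in
open scoped Classical in
/-- Every boundary point `c` of the copositive cone `C_A` yields a facial restriction
`g = Σ_{a∈A_w} c_a x^a` with a singular zero in the positive orthant: `g(u) = 0` and
all partial derivatives of `g` vanish at `u`. Hence the boundary of `C_A` lies in the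
vanishing locus of the principal `A`-determinant. -/
theorem boundary_in_principal_A_determinant (n : ℕ) (A : Finset (Fin n → ℕ))
    (hA : A.Nonempty) (hdeg : ∃ d : ℕ, ∀ a ∈ A, ∑ i, a i = d)
    (C : Set (↥A → ℝ))
    (hC : C = {c : ↥A → ℝ | ∀ u : Fin n → ℝ, (∀ i, 0 ≤ u i) →
      0 ≤ ∑ a ∈ A.attach, c a * ∏ i, u i ^ a.1 i})
    (c : ↥A → ℝ) (hc : c ∈ frontier C) :
    ∃ (w : Fin n → ℝ) (u : Fin n → ℝ), (∀ i, 0 < u i) ∧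
      (let g : MvPolynomial (Fin n) ℝ :=
        ∑ a ∈ A.attach.filter (fun a => ∀ b ∈ A,
            ∑ i, w i * (a.1 i : ℝ) ≤ ∑ i, w i * (b i : ℝ)),
          MvPolynomial.C (c a) * ∏ i, X i ^ a.1 i
      eval u g = 0 ∧ ∀ i, eval u (pderiv i g) = 0) :=
  boundary_in_principal_A_determinant_general n A C hC c hc
end

section
/- Let A ⊂ ℕⁿ be a finite nonempty set all of whose elements have the same coordinate sum, and let c ∈ C_A be a point of the copositive cone. Then c lies on the topological boundary of C_A in ℝ^A if and only if there exist w ∈ ℝⁿ and u ∈ ℝⁿ_{>0} such that Σ_{a∈A_w} c_a u^a = 0, where A_w = { a ∈ A : ⟨w,a⟩ = min_{b∈A} ⟨w,b⟩ }. (Equivalently: a copositive f_c lies on the boundary of C_A exactly when it has a zero on the nonnegative part of the toric variety X_A.) -/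
/-!
Substituting `t ^ w * u` into `f_c` and dividing by the lowest power of `t` that occurs, the limit
`t → 0⁺` is the facial restriction of `f_c` to `A_w` evaluated at `u`. So if that restriction
vanishes at some `u > 0`, then `c - ε δ_a` (for `a ∈ A_w`, `ε > 0`) takes negative values, and `c`
is a limit of points outside the cone.

Conversely, let `c_j → c` with `f_{c_j}(u_j) < 0` for some `u_j > 0`, and let `y` be a limit of the
normalized monomial vectors `(u_j ^ a)_a / ‖(u_j ^ a)_a‖`. Then `⟨c, y⟩ = 0`. Taking logarithms,
the exponents `a` with `y_a ≠ 0` turn out to form a face `A_w`, on which `y` is a positive multiple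
of `(u ^ a)_a` for some `u > 0`: limit points of the positive part of the toric variety lie on
torus orbits of faces. Then `⟨c, y⟩ = 0` says that the facial restriction vanishes at `u`.
-/

open Filter Topology

theorem LinearMap.exists_tendsto_of_tendsto_comp {𝕜 E F α : Type*}
    [NontriviallyNormedField 𝕜] [CompleteSpace 𝕜]
    [AddCommGroup E] [TopologicalSpace E] [IsTopologicalAddGroup E] [Module 𝕜 E]
    [ContinuousSMul 𝕜 E] [AddCommGroup F] [TopologicalSpace F] [IsTopologicalAddGroup F]
    [Module 𝕜 F] [ContinuousSMul 𝕜 F] [T2Space F] [FiniteDimensional 𝕜 F]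
    (f : E →ₗ[𝕜] F) {l : Filter α} [l.NeBot] {x : α → E} {y : F}
    (h : Tendsto (f ∘ x) l (𝓝 y)) :
    ∃ (x' : α → E) (p : E), (∀ a, f (x' a) = f (x a)) ∧ Tendsto x' l (𝓝 p) ∧ f p = y := by
  have hy : y ∈ LinearMap.range f :=
    f.range.closed_of_finiteDimensional.mem_of_tendsto h
      (Eventually.of_forall fun a => ⟨x a, rfl⟩)
  obtain ⟨g, hg⟩ := f.rangeRestrict.exists_rightInverse_of_surjective f.range_rangeRestrict
  have hfg (z : LinearMap.range f) : f (g z) = z :=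
    congrArg Subtype.val (LinearMap.congr_fun hg z)
  refine ⟨fun a => g (f.rangeRestrict (x a)), g ⟨y, hy⟩, fun a => hfg _, ?_, hfg _⟩
  exact (g.continuous_of_finiteDimensional.tendsto _).comp (tendsto_subtype_rng.2 h)

namespace CopositiveCone

variable {ι κ : Type*} [Fintype ι]

noncomputable def monomialVector (e : κ → ι → ℕ) (u : ι → ℝ) : κ → ℝ :=
  fun k => ∏ i, u i ^ e k i

def weight (w : ι → ℝ) (a : ι → ℕ) : ℝ := w ⬝ᵥ fun i => (a i : ℝ)

lemma weight_sub (w w' : ι → ℝ) (a : ι → ℕ) :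
    weight (w - w') a = weight w a - weight w' a :=
  sub_dotProduct w w' _

lemma continuous_weight (a : ι → ℕ) : Continuous fun w : ι → ℝ => weight w a :=
  continuous_id.dotProduct continuous_const

variable {e : κ → ι → ℕ}

lemma monomialVector_pos {u : ι → ℝ} (hu : ∀ i, 0 < u i) (k : κ) :
    0 < monomialVector e u k :=
  Finset.prod_pos fun i _ => pow_pos (hu i) _

lemma monomialVector_rpow_mul {t : ℝ} (ht : 0 < t) (w u : ι → ℝ) (k : κ) :
    monomialVector e (fun i => t ^ w i * u i) k = t ^ weight w (e k) * monomialVector e u k := by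
  simp only [monomialVector, weight, dotProduct, Real.rpow_sum_of_pos ht,
    ← Finset.prod_mul_distrib]
  refine Finset.prod_congr rfl fun i _ => ?_
  rw [mul_pow, ← Real.rpow_natCast (t ^ w i), ← Real.rpow_mul ht.le]

lemma log_monomialVector {u : ι → ℝ} (hu : ∀ i, 0 < u i) (k : κ) :
    Real.log (monomialVector e u k) = weight (fun i => Real.log (u i)) (e k) := by
  rw [monomialVector, Real.log_prod fun i _ => (pow_pos (hu i) _).ne']
  simp only [Real.log_pow, weight, dotProduct, mul_comm]

lemma monomialVector_exp (p : ι → ℝ) (k : κ) :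
    monomialVector e (fun i => Real.exp (p i)) k = Real.exp (weight p (e k)) := by
  have h := log_monomialVector (e := e) (fun i => Real.exp_pos (p i)) k
  simp only [Real.log_exp] at h
  rw [← h, Real.exp_log (monomialVector_pos (fun i => Real.exp_pos (p i)) k)]

variable [Fintype κ]

open scoped Classical in
noncomputable def minFace (e : κ → ι → ℕ) (w : ι → ℝ) : Finset κ :=
  Finset.univ.filter fun k => ∀ l, weight w (e k) ≤ weight w (e l)

noncomputable def facialSum (e : κ → ι → ℕ) (w : ι → ℝ) (c : κ → ℝ) (u : ι → ℝ) : ℝ :=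
  ∑ k ∈ minFace e w, c k * monomialVector e u k

def copositiveCone (e : κ → ι → ℕ) : Set (κ → ℝ) :=
  {c | ∀ u : ι → ℝ, (∀ i, 0 ≤ u i) → 0 ≤ c ⬝ᵥ monomialVector e u}

lemma mem_minFace {w : ι → ℝ} {k : κ} :
    k ∈ minFace e w ↔ ∀ l, weight w (e k) ≤ weight w (e l) := by
  simp [minFace]

lemma minFace_nonempty [Nonempty κ] (e : κ → ι → ℕ) (w : ι → ℝ) : (minFace e w).Nonempty := by
  obtain ⟨k, hk⟩ := Finite.exists_min fun k => weight w (e k)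
  exact ⟨k, mem_minFace.2 hk⟩

lemma weight_eq_of_mem_minFace {w : ι → ℝ} {k k₀ : κ} (hk : k ∈ minFace e w)
    (hk₀ : k₀ ∈ minFace e w) : weight w (e k) = weight w (e k₀) :=
  le_antisymm (mem_minFace.1 hk k₀) (mem_minFace.1 hk₀ k)

lemma weight_lt_of_notMem_minFace {w : ι → ℝ} {k k₀ : κ} (hk : k ∉ minFace e w)
    (hk₀ : k₀ ∈ minFace e w) : weight w (e k₀) < weight w (e k) := by
  by_contra! h
  exact hk (mem_minFace.2 fun l => h.trans (mem_minFace.1 hk₀ l))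

lemma mem_minFace_iff_of_weight {w : ι → ℝ} {S : Set κ} {k₀ : κ} (hk₀ : k₀ ∈ S)
    (hS : ∀ k ∈ S, weight w (e k) = weight w (e k₀))
    (hSc : ∀ k ∉ S, weight w (e k₀) < weight w (e k)) (k : κ) :
    k ∈ minFace e w ↔ k ∈ S := by
  refine ⟨fun hk => ?_, fun hk => mem_minFace.2 fun l => ?_⟩
  · by_contra hkS
    exact (mem_minFace.1 hk k₀).not_gt (hS k₀ hk₀ ▸ hSc k hkS)
  · by_cases hl : l ∈ S
    · rw [hS k hk, hS l hl]
    · exact (hS k hk).le.trans (hSc l hl).le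

lemma tendsto_facialSum (c : κ → ℝ) {w : ι → ℝ} (u : ι → ℝ) {k₀ : κ}
    (hk₀ : k₀ ∈ minFace e w) :
    Tendsto
      (fun t : ℝ => t ^ (-weight w (e k₀)) * c ⬝ᵥ monomialVector e (fun i => t ^ w i * u i))
      (𝓝[>] 0) (𝓝 (facialSum e w c u)) := by
  set d : κ → ℝ := fun k => weight w (e k) - weight w (e k₀)
  have hd : ∀ k, 0 ≤ d k := fun k => sub_nonneg.2 (mem_minFace.1 hk₀ k)
  have hlim : Tendsto (fun t : ℝ => ∑ k, c k * (t ^ d k * monomialVector e u k)) (𝓝[>] 0)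
      (𝓝 (∑ k, c k * ((0 : ℝ) ^ d k * monomialVector e u k))) := by
    refine (tendsto_finsetSum _ fun k _ => ?_).mono_left nhdsWithin_le_nhds
    exact ((Real.continuousAt_rpow_const 0 (d k) (Or.inr (hd k))).tendsto.mul_const _).const_mul
      _
  have hface : ∑ k, c k * ((0 : ℝ) ^ d k * monomialVector e u k) = facialSum e w c u := by
    rw [facialSum, minFace, Finset.sum_filter]
    refine Finset.sum_congr rfl fun k _ => ?_
    split_ifs with hk
    · simp [d, weight_eq_of_mem_minFace (mem_minFace.2 hk) hk₀]
    · have hdk : 0 < d k :=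
        sub_pos.2 (weight_lt_of_notMem_minFace (fun h => hk (mem_minFace.1 h)) hk₀)
      simp [Real.zero_rpow hdk.ne']
  rw [← hface]
  refine hlim.congr' (eventually_nhdsWithin_of_forall fun t (ht : 0 < t) => ?_)
  simp only [dotProduct, monomialVector_rpow_mul ht, Finset.mul_sum, d, sub_eq_add_neg,
    Real.rpow_add ht]
  exact Finset.sum_congr rfl fun k _ => by ring

lemma notMem_copositiveCone_of_facialSum_neg {c : κ → ℝ} {w u : ι → ℝ}
    (hu : ∀ i, 0 ≤ u i)
    (h : facialSum e w c u < 0) : c ∉ copositiveCone e := by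
  intro hc
  obtain ⟨k₀, hk₀⟩ : (minFace e w).Nonempty := Finset.nonempty_of_sum_ne_zero h.ne
  obtain ⟨t, hneg, ht⟩ := (((tendsto_facialSum c u hk₀).eventually (gt_mem_nhds h)).and
    self_mem_nhdsWithin).exists
  have hnonneg := hc (fun i => t ^ w i * u i)
    fun i => mul_nonneg (Real.rpow_nonneg (le_of_lt ht) _) (hu i)
  exact (mul_nonneg (Real.rpow_nonneg (le_of_lt ht) _) hnonneg).not_gt hneg

lemma mem_closure_compl_copositiveCone [Nonempty κ] {c : κ → ℝ} {w u : ι → ℝ}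
    (hu : ∀ i, 0 < u i) (h : facialSum e w c u = 0) : c ∈ closure (copositiveCone e)ᶜ := by
  classical
  obtain ⟨k₀, hk₀⟩ := minFace_nonempty e w
  have hlim : Tendsto (fun ε : ℝ => c - ε • Pi.single k₀ 1) (𝓝[>] 0) (𝓝 c) :=
    ((continuous_const.sub (continuous_id.smul continuous_const)).tendsto' 0 c
      (by simp)).mono_left nhdsWithin_le_nhds
  refine mem_closure_of_tendsto hlim (eventually_nhdsWithin_of_forall fun ε (hε : 0 < ε) => ?_)
  refine notMem_copositiveCone_of_facialSum_neg (w := w) (fun i => (hu i).le) ?_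
  have : facialSum e w (c - ε • Pi.single k₀ 1) u =
      facialSum e w c u - ε * monomialVector e u k₀ := by
    simp [facialSum, sub_mul, Finset.sum_sub_distrib, Pi.single_apply, hk₀]
  rw [this, h, zero_sub, neg_neg_iff_pos]
  exact mul_pos hε (monomialVector_pos hu k₀)

lemma exists_pos_dotProduct_neg_of_notMem {c : κ → ℝ} (hc : c ∉ copositiveCone e) :
    ∃ u : ι → ℝ, (∀ i, 0 < u i) ∧ c ⬝ᵥ monomialVector e u < 0 := by
  simp only [copositiveCone, Set.mem_ofPred_eq, not_forall, not_le] at hc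
  obtain ⟨u, hu, hneg⟩ := hc
  have hcont : Continuous fun δ : ℝ => c ⬝ᵥ monomialVector e (fun i => u i + δ) :=
    continuous_const.dotProduct <| continuous_pi fun k =>
      continuous_finsetProd _ fun i _ => (continuous_const.add continuous_id).pow _
  have hlim := (hcont.tendsto' 0 (c ⬝ᵥ monomialVector e u) (by simp)).mono_left
    (nhdsWithin_le_nhds (s := Set.Ioi 0))
  obtain ⟨δ, hδneg, hδ⟩ := ((hlim.eventually (gt_mem_nhds hneg)).and self_mem_nhdsWithin).exists
  exact ⟨_, fun i => add_pos_of_nonneg_of_pos (hu i) hδ, hδneg⟩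

lemma exists_minFace_eq_of_tendsto_weight_sub {α : Type*} {l : Filter α} [l.NeBot]
    {v : α → ι → ℝ} {S : Set κ} {k₀ : κ} (hk₀ : k₀ ∈ S) {ℓ : κ → ℝ}
    (hS : ∀ k ∈ S, Tendsto (fun j => weight (v j) (e k) - weight (v j) (e k₀)) l (𝓝 (ℓ k)))
    (hSc : ∀ k ∉ S, Tendsto (fun j => weight (v j) (e k) - weight (v j) (e k₀)) l atBot) :
    ∃ p w : ι → ℝ, (∀ k ∈ S, weight p (e k) - weight p (e k₀) = ℓ k) ∧
      ∀ k, k ∈ minFace e w ↔ k ∈ S := by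
  let T : (ι → ℝ) →ₗ[ℝ] (S → ℝ) :=
    { toFun := fun v k => weight v (e k) - weight v (e k₀)
      map_add' := fun v v' => by ext; simp only [weight, add_dotProduct, Pi.add_apply]; ring
      map_smul' := fun r v => by ext; simp only [weight, smul_dotProduct, smul_eq_mul,
        RingHom.id_apply, Pi.smul_apply]; ring }
  obtain ⟨q, p, hqv, hq, hpℓ⟩ :=
    T.exists_tendsto_of_tendsto_comp (y := fun k => ℓ k) (tendsto_pi_nhds.2 fun k => hS k k.2)
  have hqS (j : α) (k : κ) (hk : k ∈ S) :
      weight (q j) (e k) - weight (q j) (e k₀) = weight (v j) (e k) - weight (v j) (e k₀) :=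
    congrFun (hqv j) ⟨k, hk⟩
  -- `q j` pairs like `v j` with the `e k - e k₀`, `k ∈ S`, but stays bounded, so `q j - v j`
  -- eventually pairs positively with the other differences.
  have hev : ∀ᶠ j in l, ∀ k ∉ S,
      0 < weight (q j - v j) (e k) - weight (q j - v j) (e k₀) := by
    refine eventually_all.2 fun k => ?_
    by_cases hk : k ∈ S
    · exact Eventually.of_forall fun _ h => absurd hk h
    have hq' := (((continuous_weight (e k)).sub (continuous_weight (e k₀))).tendsto p).comp hq
    have := hq'.add_atTop (tendsto_neg_atBot_atTop.comp (hSc k hk))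
    refine (this.eventually_gt_atTop 0).mono fun j hj _ => ?_
    simp only [Function.comp_apply, Pi.sub_apply, weight_sub] at hj ⊢
    linarith
  obtain ⟨J, hJ⟩ := hev.exists
  refine ⟨p, q J - v J, fun k hk => congrFun hpℓ ⟨k, hk⟩, mem_minFace_iff_of_weight hk₀
    (fun k hk => ?_) (fun k hk => sub_pos.1 (hJ k hk))⟩
  rw [weight_sub, weight_sub]
  linarith [hqS J k hk]

lemma exists_minFace_of_tendsto_smul_monomialVector {α : Type*} {l : Filter α} [l.NeBot] {s : α → ℝ}
    {u : α → ι → ℝ} {y : κ → ℝ} (hs : ∀ j, 0 < s j) (hu : ∀ j i, 0 < u j i) (hy : y ≠ 0)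
    (h : Tendsto (fun j => s j • monomialVector e (u j)) l (𝓝 y)) :
    ∃ (w u' : ι → ℝ) (r : ℝ), (∀ i, 0 < u' i) ∧ 0 < r ∧
      (∀ k ∈ minFace e w, y k = r * monomialVector e u' k) ∧ ∀ k ∉ minFace e w, y k = 0 := by
  set z : α → κ → ℝ := fun j => s j • monomialVector e (u j)
  have hz (j : α) (k : κ) : 0 < z j k := mul_pos (hs j) (monomialVector_pos (hu j) k)
  have hzy (k : κ) : Tendsto (fun j => z j k) l (𝓝 (y k)) := tendsto_pi_nhds.1 h k
  have hy_nonneg (k : κ) : 0 ≤ y k := ge_of_tendsto' (hzy k) fun j => (hz j k).le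
  obtain ⟨k₀, hk₀⟩ : ∃ k, y k ≠ 0 := Function.ne_iff.1 hy
  set v : α → ι → ℝ := fun j i => Real.log (u j i)
  have hlog (j : α) (k : κ) :
      weight (v j) (e k) - weight (v j) (e k₀) = Real.log (z j k) - Real.log (z j k₀) := by
    simp only [z, Pi.smul_apply, smul_eq_mul, Real.log_mul (hs j).ne'
      (monomialVector_pos (hu j) _).ne', log_monomialVector (hu j), v]
    ring
  have hlim_log (k : κ) (hk : y k ≠ 0) :
      Tendsto (fun j => Real.log (z j k)) l (𝓝 (Real.log (y k))) := (hzy k).log hk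
  obtain ⟨p, w, hp, hw⟩ := exists_minFace_eq_of_tendsto_weight_sub (e := e) (v := v)
    (S := {k | y k ≠ 0})
    (ℓ := fun k => Real.log (y k) - Real.log (y k₀)) hk₀
    (fun k hk => by simpa only [hlog] using (hlim_log k hk).sub (hlim_log k₀ hk₀))
    (fun k hk => by
      have hzero : Tendsto (fun j => z j k) l (𝓝[>] 0) :=
        tendsto_nhdsWithin_iff.2 ⟨not_not.1 hk ▸ hzy k, Eventually.of_forall fun j => hz j k⟩
      simpa only [hlog, sub_eq_add_neg, Function.comp_def] using
        (Real.tendsto_log_nhdsGT_zero.comp hzero).atBot_add (hlim_log k₀ hk₀).neg)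
  refine ⟨w, fun i => Real.exp (p i), y k₀ / Real.exp (weight p (e k₀)),
    fun i => Real.exp_pos _, div_pos ((hy_nonneg k₀).lt_of_ne' hk₀) (Real.exp_pos _),
    fun k hk => ?_,
    fun k hk => not_not.1 ((hw k).not.1 hk)⟩
  · rw [hw] at hk
    have hyk : y k = y k₀ * Real.exp (weight p (e k) - weight p (e k₀)) := by
      rw [hp k hk, Real.exp_sub, Real.exp_log ((hy_nonneg k).lt_of_ne' hk),
        Real.exp_log ((hy_nonneg k₀).lt_of_ne' hk₀)]
      field_simp
    rw [hyk, monomialVector_exp, Real.exp_sub]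
    ring

lemma exists_facialSum_eq_zero_of_mem_closure_compl {c : κ → ℝ} (hc : c ∈ copositiveCone e)
    (hc' : c ∈ closure (copositiveCone e)ᶜ) :
    ∃ w u : ι → ℝ, (∀ i, 0 < u i) ∧ facialSum e w c u = 0 := by
  classical
  obtain ⟨cs, hcs, hcs_lim⟩ := mem_closure_iff_seq_limit.1 hc'
  choose u hu hneg using fun j => exists_pos_dotProduct_neg_of_notMem (hcs j)
  set m : ℕ → κ → ℝ := fun j => monomialVector e (u j)
  have hm (j : ℕ) : m j ≠ 0 := fun h0 => (hneg j).ne (by simp [m, h0])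
  have hz (j : ℕ) : ‖m j‖⁻¹ • m j ∈ Metric.sphere 0 1 := by
    simpa using norm_smul_inv_norm (𝕜 := ℝ) (hm j)
  obtain ⟨y, hy, φ, hφ, hzy⟩ := (isCompact_sphere 0 1).tendsto_subseq hz
  have hdot_lim {d : ℕ → κ → ℝ} {d₀ : κ → ℝ} (hd : Tendsto d atTop (𝓝 d₀)) :
      Tendsto (fun j => d j ⬝ᵥ (‖m (φ j)‖⁻¹ • m (φ j))) atTop (𝓝 (d₀ ⬝ᵥ y)) :=
    ((continuous_fst.dotProduct continuous_snd).tendsto _).comp (hd.prodMk_nhds hzy)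
  have hcy : c ⬝ᵥ y = 0 := by
    refine le_antisymm (le_of_tendsto' (hdot_lim (hcs_lim.comp hφ.tendsto_atTop)) fun j => ?_)
      (ge_of_tendsto' (hdot_lim tendsto_const_nhds) fun j => ?_)
    · rw [Function.comp_apply, dotProduct_smul, smul_eq_mul]
      exact mul_nonpos_of_nonneg_of_nonpos (inv_nonneg.2 (norm_nonneg _)) (hneg _).le
    · rw [dotProduct_smul, smul_eq_mul]
      exact mul_nonneg (inv_nonneg.2 (norm_nonneg _)) (hc _ fun i => (hu _ i).le)
  obtain ⟨w, u', r, hu', hr, hface, hoff⟩ := exists_minFace_of_tendsto_smul_monomialVector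
    (fun j => inv_pos.2 (norm_pos_iff.2 (hm (φ j)))) (fun j => hu (φ j))
    (fun h0 => by simp [h0] at hy) hzy
  have hcy' : c ⬝ᵥ y = r * facialSum e w c u' := by
    rw [dotProduct, ← Finset.sum_add_sum_compl (minFace e w),
      Finset.sum_eq_zero (s := (minFace e w)ᶜ)
        fun k hk => by rw [hoff k (Finset.mem_compl.1 hk), mul_zero],
      add_zero, facialSum, Finset.mul_sum]
    exact Finset.sum_congr rfl fun k hk => by rw [hface k hk]; ring
  exact ⟨w, u', hu', (mul_eq_zero.1 (hcy' ▸ hcy)).resolve_left hr.ne'⟩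

theorem mem_frontier_copositiveCone_iff [Nonempty κ] {c : κ → ℝ}
    (hc : c ∈ copositiveCone e) :
    c ∈ frontier (copositiveCone e) ↔
      ∃ w u : ι → ℝ, (∀ i, 0 < u i) ∧ facialSum e w c u = 0 := by
  rw [frontier_eq_closure_inter_closure, Set.mem_inter_iff, and_iff_right (subset_closure hc)]
  exact ⟨exists_facialSum_eq_zero_of_mem_closure_compl hc,
    fun ⟨w, u, hu, h⟩ => mem_closure_compl_copositiveCone hu h⟩

end CopositiveCone

open scoped Classical in
theorem frontier_copositive_cone_iff_general (n : ℕ) (A : Finset (Fin n → ℕ)) (hA : A.Nonempty)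
    (C : Set (↥A → ℝ))
    (hC : C = {c : ↥A → ℝ | ∀ u : Fin n → ℝ, (∀ i, 0 ≤ u i) →
      0 ≤ ∑ a ∈ A.attach, c a * ∏ i, u i ^ a.1 i})
    (c : ↥A → ℝ) (hc : c ∈ C) :
    c ∈ frontier C ↔
      ∃ (w : Fin n → ℝ) (u : Fin n → ℝ), (∀ i, 0 < u i) ∧
        ∑ a ∈ A.attach.filter (fun a => ∀ b ∈ A,
            ∑ i, w i * (a.1 i : ℝ) ≤ ∑ i, w i * (b i : ℝ)),
          c a * ∏ i, u i ^ a.1 i = 0 := by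
  have : Nonempty A := hA.to_subtype
  have hC' : C = CopositiveCone.copositiveCone (Subtype.val : A → Fin n → ℕ) := hC
  subst hC'
  have hface (w : Fin n → ℝ) : CopositiveCone.minFace (Subtype.val : A → Fin n → ℕ) w =
      A.attach.filter (fun a => ∀ b ∈ A, ∑ i, w i * (a.1 i : ℝ) ≤ ∑ i, w i * (b i : ℝ)) := by
    ext a
    simp [CopositiveCone.mem_minFace, CopositiveCone.weight, dotProduct]
  simp only [CopositiveCone.mem_frontier_copositiveCone_iff hc, CopositiveCone.facialSum, hface]
  rfl

open scoped Classical in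
/-- A copositive coefficient vector `c ∈ C_A` lies on the topological boundary of the
copositive cone `C_A` iff some facial restriction `Σ_{a∈A_w} c_a u^a` vanishes at a
strictly positive point `u`, i.e. iff `f_c` has a zero on the nonnegative part of the
toric variety `X_A`. -/
theorem frontier_copositive_cone_iff (n : ℕ) (A : Finset (Fin n → ℕ)) (hA : A.Nonempty)
    (hdeg : ∃ d : ℕ, ∀ a ∈ A, ∑ i, a i = d) (C : Set (↥A → ℝ))
    (hC : C = {c : ↥A → ℝ | ∀ u : Fin n → ℝ, (∀ i, 0 ≤ u i) →
      0 ≤ ∑ a ∈ A.attach, c a * ∏ i, u i ^ a.1 i})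
    (c : ↥A → ℝ) (hc : c ∈ C) :
    c ∈ frontier C ↔
      ∃ (w : Fin n → ℝ) (u : Fin n → ℝ), (∀ i, 0 < u i) ∧
        ∑ a ∈ A.attach.filter (fun a => ∀ b ∈ A,
            ∑ i, w i * (a.1 i : ℝ) ≤ ∑ i, w i * (b i : ℝ)),
          c a * ∏ i, u i ^ a.1 i = 0 :=
  frontier_copositive_cone_iff_general n A hA C hC c hc
end

section
/- Let M be a matroid on the ground set {1,…,n} with nonempty collection of bases B and with no coloops (every element of {1,…,n} lies outside at least one base). With A¹ = { e_k + Σ_{j∉T} e_j : T ∈ B, k ∈ T } and A² = { 2e_q + Σ_{j∈{1,…,n}∖(T∪{q})} e_j : T ∈ B, q ∉ T }, the following holds: for every proper subset I ⊊ {1,…,n} and every b ∈ A¹, there exists a ∈ A² such that a_i ≤ b_i for all i ∈ I. -/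
/-! Let `b` come from the base `T` and pick `m ∉ I`. Since `m` is not a coloop, a basis exchange
yields a base `T'` avoiding `m` with `T ⊆ T' ∪ {m}`; the point of `A²` built from `T'` and `q = m`
is then at most `b` off `m`, in particular on `I`. -/

theorem Matroid.IsBase.exists_isBase_notMem_subset_union_singleton {α : Type*} {M : Matroid α}
    {B B₀ : Set α} {e : α} (hB : M.IsBase B) (hB₀ : M.IsBase B₀) (he : e ∉ B₀) :
    ∃ B', M.IsBase B' ∧ e ∉ B' ∧ B ⊆ B' ∪ {e} := by
  by_cases heB : e ∈ B
  · obtain ⟨y, ⟨-, hyB⟩, hB'⟩ := hB.exchange_mem hB₀ heB he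
    refine ⟨insert y (B \ {e}), hB', ?_, ?_⟩
    · rintro (rfl | ⟨-, hne⟩)
      exacts [hyB heB, hne rfl]
    · intro x hx
      by_cases hxe : x = e
      · exact Or.inr hxe
      · exact Or.inl (Or.inr ⟨hx, hxe⟩)
  · exact ⟨B, hB, heB, Set.subset_union_left⟩

open scoped Classical in
theorem polya_condition_one_general (n : ℕ) (M : Matroid (Fin n))
    (hcoloop : ∀ k : Fin n, ∃ T, M.IsBase T ∧ k ∉ T)
    (I : Set (Fin n)) (hI : I ≠ Set.univ)
    (b : Fin n → ℕ)
    (hb : ∃ T k, M.IsBase T ∧ k ∈ T ∧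
      b = Set.indicator Tᶜ (fun _ => 1) + Pi.single k 1) :
    ∃ a : Fin n → ℕ,
      (∃ T q, M.IsBase T ∧ q ∉ T ∧
        a = Set.indicator (T ∪ {q})ᶜ (fun _ => 1) + Pi.single q 2) ∧
      ∀ i ∈ I, a i ≤ b i := by
  obtain ⟨T, k, hT, -, rfl⟩ := hb
  obtain ⟨m, hm⟩ : ∃ m, m ∉ I := by simpa [Set.eq_univ_iff_forall] using hI
  obtain ⟨T₀, hT₀, hmT₀⟩ := hcoloop m
  obtain ⟨T', hT', hmT', hTT'⟩ := hT.exists_isBase_notMem_subset_union_singleton hT₀ hmT₀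
  refine ⟨_, ⟨T', m, hT', hmT', rfl⟩, fun i hi => ?_⟩
  have him : i ≠ m := ne_of_mem_of_not_mem hi hm
  calc _ = (T' ∪ {m})ᶜ.indicator (fun _ => 1) i := by simp [Pi.single_eq_of_ne him]
    _ ≤ Tᶜ.indicator (fun _ => 1) i :=
      Set.indicator_le_indicator_of_subset (Set.compl_subset_compl.2 hTT') (fun _ => Nat.zero_le _) i
    _ ≤ _ := Nat.le_add_right _ _

open scoped Classical in
/-- For a matroid on `{1,…,n}` without coloops, with
`A¹ = {e_k + Σ_{j∉T} e_j : T base, k ∈ T}` and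
`A² = {2e_q + Σ_{j∉T∪{q}} e_j : T base, q ∉ T}`: for every proper subset
`I ⊊ {1,…,n}` and every `b ∈ A¹` there is `a ∈ A²` with `a_i ≤ b_i` for all `i ∈ I`. -/
theorem polya_condition_one (n : ℕ) (M : Matroid (Fin n)) (hE : M.E = Set.univ)
    (hB : ∃ T, M.IsBase T) (hcoloop : ∀ k : Fin n, ∃ T, M.IsBase T ∧ k ∉ T)
    (I : Set (Fin n)) (hI : I ≠ Set.univ)
    (b : Fin n → ℕ)
    (hb : ∃ T k, M.IsBase T ∧ k ∈ T ∧
      b = Set.indicator Tᶜ (fun _ => 1) + Pi.single k 1) :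
    ∃ a : Fin n → ℕ,
      (∃ T q, M.IsBase T ∧ q ∉ T ∧
        a = Set.indicator (T ∪ {q})ᶜ (fun _ => 1) + Pi.single q 2) ∧
      ∀ i ∈ I, a i ≤ b i :=
  polya_condition_one_general n M hcoloop I hI b hb
end

section
/- Let M be a matroid on the ground set {1,…,n} with nonempty collection of bases B and with no coloops, and let A¹ = { e_k + Σ_{j∉T} e_j : T ∈ B, k ∈ T }, A² = { 2e_q + Σ_{j∈{1,…,n}∖(T∪{q})} e_j : T ∈ B, q ∉ T }, and A = A¹ ∪ A². Let I ⊊ {1,…,n} be a proper subset and let a ∈ A² be minimal for I in A², i.e., there is no a' ∈ A² with a'_i ≤ a_i for all i ∈ I and a'_i < a_i for some i ∈ I. Then the set Γ_{I,a} = { b ∈ A : b_i = a_i for all i ∈ I } is the intersection of A with a face of the polytope conv(A): there exists v ∈ ℝⁿ such that Γ_{I,a} = { b ∈ A : ⟨v,b⟩ = min_{c∈A} ⟨v,c⟩ }. -/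
/-!
Every point of `A` is `1_{Tᶜ} + e_k` for a base `T` and an arbitrary `k` (`k ∈ T` gives `A¹`,
`k ∉ T` gives `A²`). Hence `⟨v, ·⟩` splits on `A` as `∑_{i ∉ T} v i + v k`, and its minimizers are
the points whose base minimizes the first summand and whose `k` minimizes `v`.

Write `a = 1_{Tᶜ} + e_q` with `q ∉ T`. Comparing `a` with `1_{T'ᶜ} + e_{q'}` for `q' ∉ T' ∪ I`,
minimality shows that a base containing `T ∩ I` meets `I` exactly in `T ∩ I` (if no such `q'`
exists, `T ⊆ T'` and the bases coincide). It follows that `1_{T'ᶜ} + e_k` agrees with `a` on `I`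
iff `T ∩ I ⊆ T'` and `k ∈ I ∨ q ∈ I → k = q`, and `faceWeight` turns both conditions into
minimization conditions.
-/

namespace SymanzikSupport

open scoped Classical

variable {n : ℕ}

noncomputable def point (T : Set (Fin n)) (k : Fin n) : Fin n → ℕ :=
  Set.indicator Tᶜ (fun _ => 1) + Pi.single k 1

theorem point_apply (T : Set (Fin n)) (k i : Fin n) :
    point T k i = (if i ∈ T then 0 else 1) + if i = k then 1 else 0 := by
  simp [point, Set.indicator_apply, Pi.single_apply]

theorem indicator_add_single_two {T : Set (Fin n)} {q : Fin n} (hq : q ∉ T) :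
    Set.indicator (T ∪ {q})ᶜ (fun _ => 1) + Pi.single q 2 = point T q := by
  ext i
  rw [point_apply]
  by_cases hi : i = q
  · subst hi; simp [hq]
  · simp [Set.indicator_apply, hi]

theorem union_eq_setOf_point (P : Set (Fin n) → Prop) :
    {b | ∃ T k, P T ∧ k ∈ T ∧ b = Set.indicator Tᶜ (fun _ => 1) + Pi.single k 1} ∪
      {a | ∃ T q, P T ∧ q ∉ T ∧ a = Set.indicator (T ∪ {q})ᶜ (fun _ => 1) + Pi.single q 2} =
      {b | ∃ T k, P T ∧ b = point T k} := by
  ext b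
  simp only [Set.mem_union, Set.mem_ofPred_eq]
  constructor
  · rintro (⟨T, k, hT, -, rfl⟩ | ⟨T, q, hT, hq, rfl⟩)
    · exact ⟨T, k, hT, rfl⟩
    · exact ⟨T, q, hT, indicator_add_single_two hq⟩
  · rintro ⟨T, k, hT, rfl⟩
    by_cases hk : k ∈ T
    · exact Or.inl ⟨T, k, hT, hk, rfl⟩
    · exact Or.inr ⟨T, k, hT, hk, (indicator_add_single_two hk).symm⟩

theorem sum_mul_point {R : Type*} [NonAssocSemiring R] (v : Fin n → R) (T : Set (Fin n))
    (k : Fin n) : ∑ i, v i * (point T k i : R) = ∑ i, Tᶜ.indicator v i + v k := by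
  simp only [point, Pi.add_apply, Nat.cast_add, mul_add, Finset.sum_add_distrib]
  congr 1
  · refine Finset.sum_congr rfl fun i _ => ?_
    simp [Set.indicator_apply]
  · simp [Pi.single_apply]

theorem forall_add_le_add_iff {α β R : Type*} [AddCommMonoid R] [PartialOrder R]
    [IsOrderedCancelAddMonoid R] {P : α → Prop} {f : α → R} {g : β → R} {x : α} {y : β}
    (hx : P x) :
    (∀ x', P x' → ∀ y', f x + g y ≤ f x' + g y') ↔
      (∀ x', P x' → f x ≤ f x') ∧ ∀ y', g y ≤ g y' :=
  ⟨fun h => ⟨fun x' hx' => le_of_add_le_add_right (h x' hx' y),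
    fun y' => le_of_add_le_add_left (h x hx y')⟩,
    fun h x' hx' y' => add_le_add (h.1 x' hx') (h.2 y')⟩

theorem forall_sum_mul_point_le_iff {R : Type*} [Ring R] [PartialOrder R] [IsOrderedRing R]
    {P : Set (Fin n) → Prop} (v : Fin n → R) {T : Set (Fin n)} (hT : P T) (k : Fin n) :
    (∀ T', P T' → ∀ k', ∑ i, v i * (point T k i : R) ≤ ∑ i, v i * (point T' k' i : R)) ↔
      (∀ T', P T' → ∑ i, Tᶜ.indicator v i ≤ ∑ i, T'ᶜ.indicator v i) ∧ ∀ k', v k ≤ v k' := by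
  simp only [sum_mul_point]
  exact forall_add_le_add_iff (f := fun T => ∑ i, Tᶜ.indicator v i) (g := v) hT

theorem sum_indicator_compl_congr {R : Type*} [AddCommMonoid R] {v : Fin n → R}
    {I T T' : Set (Fin n)} (hv : ∀ i ∉ I, v i = 0) (h : T' ∩ I = T ∩ I) :
    ∑ i, T'ᶜ.indicator v i = ∑ i, Tᶜ.indicator v i := by
  refine Finset.sum_congr rfl fun i _ => ?_
  by_cases hi : i ∈ I
  · have : i ∈ T' ↔ i ∈ T := by
      simpa [hi] using Set.ext_iff.1 h i
    simp [Set.indicator_apply, this]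
  · simp [Set.indicator_apply, hv i hi]

/-- The entries `n + 2` on `T ∩ I` outweigh all the others together, so minimizing
`∑ i ∉ T', v i` over bases `T'` forces `T ∩ I ⊆ T'`; the entry `-1` makes `q` the unique
minimizer of `v` when `q ∈ I`. -/
noncomputable def faceWeight (I T : Set (Fin n)) (q i : Fin n) : ℝ :=
  if i ∈ I then (if i ∈ T then n + 2 else if i = q then -1 else 1) else 0

section FaceWeight

variable {I T T' : Set (Fin n)} {q : Fin n}

theorem faceWeight_of_notMem {i : Fin n} (hi : i ∉ I) : faceWeight I T q i = 0 := if_neg hi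

theorem forall_faceWeight_le_iff (hqT : q ∉ T) {k₀ : Fin n} (hk₀ : k₀ ∉ I) (k : Fin n) :
    (∀ k', faceWeight I T q k ≤ faceWeight I T q k') ↔ (k ∈ I ∨ q ∈ I → k = q) := by
  constructor
  · intro h hkq
    by_contra hne
    by_cases hqI : q ∈ I
    · have := h q
      simp only [faceWeight, if_pos hqI, if_neg hqT, if_neg hne] at this
      split_ifs at this <;> linarith
    · have := h k₀
      simp only [faceWeight, if_pos (hkq.resolve_right hqI), if_neg hk₀, if_neg hne] at this
      split_ifs at this <;> linarith
  · intro hK k'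
    by_cases hk : k ∈ I
    · obtain rfl := hK (Or.inl hk)
      simp only [faceWeight, if_pos hk, if_neg hqT]
      split_ifs <;> linarith
    · have hqI : q ∉ I := fun hqI => hk (hK (Or.inr hqI) ▸ hqI)
      rw [faceWeight_of_notMem hk]
      unfold faceWeight
      split_ifs with h₁ h₂ h₃ <;> first | linarith | exact absurd (h₃ ▸ h₁) hqI

theorem sum_indicator_faceWeight_le :
    ∑ i, Tᶜ.indicator (faceWeight I T q) i ≤ n := by
  calc ∑ i, Tᶜ.indicator (faceWeight I T q) i ≤ ∑ _i : Fin n, (1 : ℝ) := by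
        refine Finset.sum_le_sum fun i _ => ?_
        unfold Set.indicator faceWeight
        split_ifs <;> simp_all
    _ = n := by simp

theorem le_sum_indicator_faceWeight {i₀ : Fin n} (hi₀ : i₀ ∈ T ∩ I) (hi₀' : i₀ ∉ T') :
    (n : ℝ) + 1 ≤ ∑ i, T'ᶜ.indicator (faceWeight I T q) i := by
  calc (n : ℝ) + 1 = ∑ i, ((if i = i₀ then (n : ℝ) + 2 else 0) + if i = q then -1 else 0) := by
        rw [Finset.sum_add_distrib, Finset.sum_ite_eq', Finset.sum_ite_eq']
        simp only [Finset.mem_univ, if_true]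
        ring
    _ ≤ ∑ i, T'ᶜ.indicator (faceWeight I T q) i := by
        refine Finset.sum_le_sum fun i _ => ?_
        obtain ⟨hi₀T, hi₀I⟩ := hi₀
        unfold Set.indicator faceWeight
        split_ifs <;> simp_all <;> linarith

theorem sum_indicator_faceWeight_lt (h : ¬T ∩ I ⊆ T') :
    ∑ i, Tᶜ.indicator (faceWeight I T q) i < ∑ i, T'ᶜ.indicator (faceWeight I T q) i := by
  obtain ⟨i₀, hi₀, hi₀'⟩ := Set.not_subset.1 h
  linarith [sum_indicator_faceWeight_le (I := I) (T := T) (q := q),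
    le_sum_indicator_faceWeight (q := q) hi₀ hi₀']

end FaceWeight

/-- Minimality for `I` in `A²`. -/
def IsMinimalFor (M : Matroid (Fin n)) (I : Set (Fin n)) (a : Fin n → ℕ) : Prop :=
  ∀ T q, M.IsBase T → q ∉ T → (∀ i ∈ I, point T q i ≤ a i) → ∀ i ∈ I, point T q i = a i

section Minimal

variable {M : Matroid (Fin n)} {I T T' : Set (Fin n)} {q k : Fin n}

theorem IsMinimalFor.inter_subset (hmin : IsMinimalFor M I (point T q)) (hT : M.IsBase T)
    (hT' : M.IsBase T') (hsub : T ∩ I ⊆ T') : T' ∩ I ⊆ T := by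
  rintro i ⟨hiT', hiI⟩
  by_contra hiT
  by_cases hcov : ∃ q', q' ∉ T' ∧ q' ∉ I
  · obtain ⟨q', hq'T', hq'I⟩ := hcov
    have hne : ∀ j ∈ I, j ≠ q' := fun j hj h => hq'I (h ▸ hj)
    have hle : ∀ j ∈ I, point T' q' j ≤ point T q j := by
      intro j hj
      rw [point_apply, point_apply, if_neg (hne j hj), add_zero]
      by_cases hjT : j ∈ T
      · simp [hsub ⟨hjT, hj⟩]
      · rw [if_neg hjT]; split_ifs <;> omega
    have := hmin T' q' hT' hq'T' hle i hiI
    rw [point_apply, point_apply, if_pos hiT', if_neg hiT, if_neg (hne i hiI)] at this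
    omega
  · push Not at hcov
    have hTT' : T ⊆ T' := fun x hx => by_contra fun hx' => hx' (hsub ⟨hx, hcov x hx'⟩)
    exact hiT ((hT.eq_of_subset_isBase hT' hTT') ▸ hiT')

theorem IsMinimalFor.eq_of_eqOn_point (hmin : IsMinimalFor M I (point T q))
    (hT : M.IsBase T) (hqT : q ∉ T) (hT' : M.IsBase T')
    (h : Set.EqOn (point T' k) (point T q) I) (hkq : k ∈ I ∨ q ∈ I) : k = q := by
  by_contra hne
  by_cases hqI : q ∈ I
  · have hq := h hqI
    rw [point_apply, point_apply, if_neg hqT, if_neg (Ne.symm hne)] at hq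
    split_ifs at hq <;> omega
  · have hkI : k ∈ I := hkq.resolve_right hqI
    have hne : ∀ i ∈ I, i ≠ q := fun i hi h => hqI (h ▸ hi)
    have hk := h hkI
    rw [point_apply, point_apply, if_pos rfl, if_neg (hne k hkI)] at hk
    have hkT' : k ∈ T' := by
      by_contra hc; rw [if_neg hc] at hk; split_ifs at hk <;> omega
    have hkT : k ∉ T := by
      intro hc; rw [if_pos hc, if_pos hkT'] at hk; omega
    refine hkT (hmin.inter_subset hT hT' ?_ ⟨hkT', hkI⟩)
    rintro i ⟨hiT, hiI⟩
    by_contra hiT'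
    have hi := h hiI
    rw [point_apply, point_apply, if_neg hiT', if_pos hiT, if_neg (hne i hiI)] at hi
    split_ifs at hi <;> omega

theorem IsMinimalFor.eqOn_point_iff (hmin : IsMinimalFor M I (point T q)) (hT : M.IsBase T)
    (hqT : q ∉ T) (hT' : M.IsBase T') :
    Set.EqOn (point T' k) (point T q) I ↔ T ∩ I ⊆ T' ∧ (k ∈ I ∨ q ∈ I → k = q) := by
  refine ⟨fun h => ⟨?_, hmin.eq_of_eqOn_point hT hqT hT' h⟩, ?_⟩
  · rintro i ⟨hiT, hiI⟩
    by_contra hiT'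
    have hi := h hiI
    rw [point_apply, point_apply, if_neg hiT', if_pos hiT,
      if_neg (fun hiq : i = q => hqT (hiq ▸ hiT))] at hi
    split_ifs at hi <;> omega
  · rintro ⟨hsub, hK⟩ i hi
    have hiT : i ∈ T' ↔ i ∈ T :=
      ⟨fun h => hmin.inter_subset hT hT' hsub ⟨h, hi⟩, fun h => hsub ⟨h, hi⟩⟩
    have hik : i = k ↔ i = q := by
      constructor <;> rintro rfl
      · exact hK (Or.inl hi)
      · exact (hK (Or.inr hi)).symm
    simp only [point_apply, hiT, hik]

theorem IsMinimalFor.forall_sum_indicator_faceWeight_le_iff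
    (hmin : IsMinimalFor M I (point T q)) (hT : M.IsBase T) (hT' : M.IsBase T') :
    (∀ T'', M.IsBase T'' → ∑ i, T'ᶜ.indicator (faceWeight I T q) i ≤
        ∑ i, T''ᶜ.indicator (faceWeight I T q) i) ↔ T ∩ I ⊆ T' := by
  have heq : ∀ {T'}, M.IsBase T' → T ∩ I ⊆ T' →
      ∑ i, T'ᶜ.indicator (faceWeight I T q) i = ∑ i, Tᶜ.indicator (faceWeight I T q) i :=
    fun hT' hsub => sum_indicator_compl_congr (fun _ => faceWeight_of_notMem) <|
      (Set.subset_inter (hmin.inter_subset hT hT' hsub)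
        Set.inter_subset_right).antisymm (Set.subset_inter hsub Set.inter_subset_right)
  refine ⟨fun h => ?_, fun hsub T'' hT'' => ?_⟩
  · by_contra hsub
    exact (h T hT).not_gt (sum_indicator_faceWeight_lt hsub)
  · rw [heq hT' hsub]
    by_cases h'' : T ∩ I ⊆ T''
    · rw [heq hT'' h'']
    · exact (sum_indicator_faceWeight_lt h'').le

end Minimal

end SymanzikSupport

open SymanzikSupport

open scoped Classical in
theorem minimal_sets_are_faces_general (n : ℕ) (M : Matroid (Fin n))
    (A1 A2 : Set (Fin n → ℕ))
    (hA1 : A1 = {b | ∃ T k, M.IsBase T ∧ k ∈ T ∧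
        b = Set.indicator Tᶜ (fun _ => 1) + Pi.single k 1})
    (hA2 : A2 = {a | ∃ T q, M.IsBase T ∧ q ∉ T ∧
        a = Set.indicator (T ∪ {q})ᶜ (fun _ => 1) + Pi.single q 2})
    (I : Set (Fin n)) (hI : I ≠ Set.univ)
    (a : Fin n → ℕ) (ha : a ∈ A2)
    (hmin : ¬ ∃ a' ∈ A2, (∀ i ∈ I, a' i ≤ a i) ∧ ∃ i ∈ I, a' i < a i) :
    ∃ v : Fin n → ℝ,
      {b ∈ A1 ∪ A2 | ∀ i ∈ I, b i = a i} =
      {b ∈ A1 ∪ A2 | ∀ c ∈ A1 ∪ A2, ∑ i, v i * (b i : ℝ) ≤ ∑ i, v i * (c i : ℝ)} := by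
  have hA : A1 ∪ A2 = {b | ∃ T k, M.IsBase T ∧ b = point T k} := by
    rw [hA1, hA2]
    exact union_eq_setOf_point M.IsBase
  rw [hA2] at ha hmin
  obtain ⟨T, q, hT, hqT, rfl⟩ := ha
  rw [indicator_add_single_two hqT] at hmin ⊢
  have hmin' : IsMinimalFor M I (point T q) := fun T' q' hT' hq' hle i hi =>
    by_contra fun hne => hmin ⟨point T' q', ⟨T', q', hT', hq', (indicator_add_single_two hq').symm⟩,
      hle, i, hi, (hle i hi).lt_of_ne hne⟩
  obtain ⟨k₀, hk₀⟩ := (Set.ne_univ_iff_exists_notMem I).1 hI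
  have hface : ∀ T' k, M.IsBase T' → (Set.EqOn (point T' k) (point T q) I ↔
      ∀ T'', M.IsBase T'' → ∀ k', ∑ i, faceWeight I T q i * (point T' k i : ℝ) ≤
        ∑ i, faceWeight I T q i * (point T'' k' i : ℝ)) := fun T' k hT' => by
    rw [hmin'.eqOn_point_iff hT hqT hT', forall_sum_mul_point_le_iff _ hT',
      hmin'.forall_sum_indicator_faceWeight_le_iff hT hT', forall_faceWeight_le_iff hqT hk₀]
  refine ⟨faceWeight I T q, ?_⟩
  ext b
  simp only [hA, Set.mem_ofPred_eq, forall_exists_index, and_imp]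
  refine and_congr_right fun ⟨T', k, hT', hb⟩ => ?_
  subst hb
  exact (hface T' k hT').trans
    ⟨fun h c T'' k' hT'' hc => hc ▸ h T'' hT'' k', fun h T'' hT'' k' => h _ T'' k' hT'' rfl⟩

open scoped Classical in
/-- For a matroid on `{1,…,n}` without coloops and `A = A¹ ∪ A²` the support of the
second Symanzik polynomial: if `I ⊊ {1,…,n}` and `a ∈ A²` is minimal for `I` in `A²`,
then `Γ_{I,a} = {b ∈ A : b_i = a_i for i ∈ I}` is the set of minimizers over `A` of a
linear functional `⟨v,·⟩`, i.e. the intersection of `A` with a face of `conv(A)`. -/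
theorem minimal_sets_are_faces (n : ℕ) (M : Matroid (Fin n)) (hE : M.E = Set.univ)
    (hB : ∃ T, M.IsBase T) (hcoloop : ∀ k : Fin n, ∃ T, M.IsBase T ∧ k ∉ T)
    (A1 A2 : Set (Fin n → ℕ))
    (hA1 : A1 = {b | ∃ T k, M.IsBase T ∧ k ∈ T ∧
        b = Set.indicator Tᶜ (fun _ => 1) + Pi.single k 1})
    (hA2 : A2 = {a | ∃ T q, M.IsBase T ∧ q ∉ T ∧
        a = Set.indicator (T ∪ {q})ᶜ (fun _ => 1) + Pi.single q 2})
    (I : Set (Fin n)) (hI : I ≠ Set.univ)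
    (a : Fin n → ℕ) (ha : a ∈ A2)
    (hmin : ¬ ∃ a' ∈ A2, (∀ i ∈ I, a' i ≤ a i) ∧ ∃ i ∈ I, a' i < a i) :
    ∃ v : Fin n → ℝ,
      {b ∈ A1 ∪ A2 | ∀ i ∈ I, b i = a i} =
      {b ∈ A1 ∪ A2 | ∀ c ∈ A1 ∪ A2, ∑ i, v i * (b i : ℝ) ≤ ∑ i, v i * (c i : ℝ)} :=
  minimal_sets_are_faces_general n M A1 A2 hA1 hA2 I hI a ha hmin
end

section
/- (Pólya's Theorem with Zeros, Castle–Powers–Reznick.) Let f = Σ_{a∈𝒜} c_a x^a be a nonzero homogeneous polynomial in x₁,…,x_n with support 𝒜 ⊂ ℕⁿ, which is copositive (f(u) ≥ 0 for all u ∈ ℝⁿ_{≥0}) and whose zero set inside the standard simplex Δ = { x ∈ ℝⁿ_{≥0} : x₁+⋯+x_n = 1 } is a (possibly empty) union of faces Δ_I = { x ∈ Δ : x_i = 0 for all i ∈ I }. Set 𝒜⁺ = { a ∈ 𝒜 : c_a > 0 } and 𝒜⁻ = { a ∈ 𝒜 : c_a < 0 }. Then there exists N ∈ ℕ such that (x₁+⋯+x_n)^N·f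 has no negative coefficients (equivalently, every nonzero coefficient is positive) if and only if for every I ⊆ {1,…,n} with Δ_I nonempty and Δ_I contained in the zero set of f, the following two conditions hold: (1) for each b ∈ 𝒜⁻ there exists a ∈ 𝒜⁺ with a_i ≤ b_i for all i ∈ I; (2) for each a ∈ 𝒜⁺ that is minimal for I in 𝒜⁺, the polynomial Σ_{b∈Γ_{I,a}} c_b x^b is strictly positive at every x ∈ ℝⁿ_{>0}, where Γ_{I,a} = { b ∈ 𝒜 : b_i = a_i for all i ∈ I }. -/
/-!
If `(x₁+⋯+xₙ)^N f` has nonnegative coefficients and `j ∉ I`, its coefficient at `N eⱼ + b` with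
`c_b < 0` involves only the `c_{b'}` with `b' ⪯_I b`, which forces (1). For `a` minimal for `I`,
the terms of `(x₁+⋯+xₙ)^N f` whose exponents agree with `a` on `I` form the product of
`∑_{b ∈ Γ_{I,a}} c_b x^b` with a nonzero polynomial with nonnegative coefficients, which
forces (2).

Conversely, for `|μ| = N + d` the coefficient of `x^μ` in `(x₁+⋯+xₙ)^N f` is `N!/μ!` times
`∑_a c_a ∏ᵢ (μᵢ)_{aᵢ}` (falling factorials). If one of them were negative for every `N`, a
subsequence of `μ/|μ|` would converge to a zero `x` of `f` in the simplex, and `I = {i | xᵢ = 0}`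
would satisfy the hypotheses of (1) and (2). Group the falling-factorial sum by the restriction of
the exponents to `I`: the group of a restriction `m` minimal among those of `𝒜⁺` is asymptotically
the positive value of (2) at `x`, and by (1) every other restriction lies strictly above such an
`m`, so its group is negligible against that of `m` because `xᵢ = 0` on `I`. Hence the sum is
eventually nonnegative, a contradiction.
-/

open Filter Topology Finset
open scoped Nat

theorem descFactorial_div_pow_le {K : Type*} [Field K] [LinearOrder K] [IsStrictOrderedRing K]
    {n l k : ℕ} (hlk : l ≤ k) {t : K} (ht : 0 < t) :
    (n.descFactorial k : K) / t ^ k ≤ n.descFactorial l / t ^ l * (n / t) ^ (k - l) := by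
  have hnat : n.descFactorial k ≤ n.descFactorial l * n ^ (k - l) := by
    rw [← Nat.descFactorial_mul_descFactorial hlk, mul_comm]
    exact Nat.mul_le_mul_left _ ((Nat.descFactorial_le_pow _ _).trans
      (Nat.pow_le_pow_left (Nat.sub_le _ _) _))
  rw [div_pow, div_mul_div_comm, ← pow_add, Nat.add_sub_cancel' hlk]
  gcongr
  exact_mod_cast hnat

theorem tendsto_descFactorial_div_pow {m : ℕ → ℕ} {t : ℕ → ℝ} {c : ℝ}
    (ht : Tendsto t atTop atTop) (hm : Tendsto (fun N ↦ (m N : ℝ) / t N) atTop (𝓝 c)) (k : ℕ) :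
    Tendsto (fun N ↦ ((m N).descFactorial k : ℝ) / t N ^ k) atTop (𝓝 (c ^ k)) := by
  have hfactor (l : ℕ) : Tendsto (fun N ↦ ((m N - l : ℕ) : ℝ) / t N) atTop (𝓝 c) := by
    have hlow : Tendsto (fun N ↦ (m N : ℝ) / t N - l / t N) atTop (𝓝 c) := by
      simpa using hm.sub (tendsto_const_nhds.div_atTop ht)
    refine tendsto_of_tendsto_of_tendsto_of_le_of_le' hlow hm ?_ ?_ <;>
      filter_upwards [ht.eventually_gt_atTop 0] with N hN
    · rw [← sub_div]
      gcongr
      rcases le_total l (m N) with h | h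
      · rw [Nat.cast_sub h]
      · rw [Nat.sub_eq_zero_of_le h, Nat.cast_zero, sub_nonpos]
        exact_mod_cast h
    · gcongr
      exact Nat.sub_le _ _
  convert tendsto_finsetProd (range k) fun l _ ↦ hfactor l using 1
  · ext N
    rw [Nat.descFactorial_eq_prod_range, Nat.cast_prod, prod_div_distrib, prod_const, card_range]
  · rw [prod_const, card_range]

/-- Each `γ ∉ M` is charged to the elements of `M` below it. -/
theorem Finset.sum_mul_nonneg_of_dominated {α K : Type*} [Preorder α] [DecidableEq α]
    [DecidableLT α] [CommRing K] [LinearOrder K] [IsStrictOrderedRing K] {P M : Finset α}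
    (hM : M ⊆ P) (hP : ∀ γ ∈ P, γ ∉ M → ∃ m ∈ M, m < γ) {w τ : α → K} {ρ : α → α → K}
    (hw : ∀ γ ∈ P, 0 ≤ w γ)
    (hwρ : ∀ m ∈ M, ∀ γ ∈ P, m < γ → w γ ≤ w m * ρ m γ)
    (hτ : ∀ m ∈ M, ∑ γ ∈ P with m < γ, ρ m γ * |τ γ| ≤ τ m) :
    0 ≤ ∑ γ ∈ P, w γ * τ γ := by
  have hterm : ∀ γ ∈ P, (if γ ∈ M then w γ * τ γ else 0) -
      ∑ m ∈ M with m < γ, w m * (ρ m γ * |τ γ|) ≤ w γ * τ γ := by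
    intro γ hγ
    have hbound : ∀ m ∈ M.filter (· < γ), w γ * |τ γ| ≤ w m * (ρ m γ * |τ γ|) := fun m hm ↦ by
      rw [mem_filter] at hm
      rw [← mul_assoc]
      exact mul_le_mul_of_nonneg_right (hwρ m hm.1 γ hγ hm.2) (abs_nonneg _)
    have hnonneg : 0 ≤ w γ * |τ γ| := mul_nonneg (hw γ hγ) (abs_nonneg _)
    split_ifs with hγM
    · linarith [sum_nonneg fun m hm ↦ hnonneg.trans (hbound m hm)]
    · obtain ⟨m, hm, hlt⟩ := hP γ hγ hγM
      have hm' : m ∈ M.filter (· < γ) := mem_filter.2 ⟨hm, hlt⟩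
      have hsingle := single_le_sum (fun m hm ↦ hnonneg.trans (hbound m hm)) hm'
      have habs := mul_le_mul_of_nonneg_left (neg_abs_le (τ γ)) (hw γ hγ)
      linarith [hbound m hm']
  calc 0 ≤ ∑ m ∈ M, w m * (τ m - ∑ γ ∈ P with m < γ, ρ m γ * |τ γ|) :=
        sum_nonneg fun m hm ↦ mul_nonneg (hw m (hM hm)) (sub_nonneg.2 (hτ m hm))
    _ = ∑ γ ∈ P, ((if γ ∈ M then w γ * τ γ else 0) -
          ∑ m ∈ M with m < γ, w m * (ρ m γ * |τ γ|)) := by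
        simp only [mul_sub, mul_sum, sum_sub_distrib, sum_ite_mem, inter_eq_right.2 hM]
        congr 1
        exact sum_comm' fun m γ ↦ by simp only [mem_filter]; tauto
    _ ≤ ∑ γ ∈ P, w γ * τ γ := sum_le_sum hterm

namespace MvPolynomial

variable {σ R : Type*}

section Restrict

variable [CommSemiring R]

noncomputable def restrictSupportTo (P : (σ →₀ ℕ) → Prop) [DecidablePred P]
    (p : MvPolynomial σ R) : MvPolynomial σ R :=
  ∑ b ∈ p.support with P b, monomial b (coeff b p)

variable (P : (σ →₀ ℕ) → Prop) [DecidablePred P] (p : MvPolynomial σ R)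

theorem coeff_restrictSupportTo (m : σ →₀ ℕ) :
    coeff m (p.restrictSupportTo P) = if P m then coeff m p else 0 := by
  classical
  simp only [restrictSupportTo, coeff_sum, coeff_monomial, sum_ite_eq', mem_filter,
    mem_support_iff]
  by_cases h : P m <;> by_cases h' : coeff m p = 0 <;> simp [h, h']

theorem eval_restrictSupportTo [Fintype σ] (x : σ → R) :
    eval x (p.restrictSupportTo P) = ∑ b ∈ p.support with P b, coeff b p * ∏ i, x i ^ b i := by
  simp only [restrictSupportTo, map_sum, eval_monomial, Finsupp.prod_pow]

theorem coeff_restrictSupportTo_nonneg [PartialOrder R] {p : MvPolynomial σ R}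
    (hp : ∀ μ, 0 ≤ coeff μ p) (μ : σ →₀ ℕ) :
    0 ≤ coeff μ (p.restrictSupportTo P) := by
  rw [coeff_restrictSupportTo]
  split_ifs
  exacts [hp μ, le_rfl]

theorem restrictSupportTo_mul {p q : MvPolynomial σ R} {I : Finset σ} {a : σ →₀ ℕ}
    [DecidablePred fun μ : σ →₀ ℕ ↦ ∀ i ∈ I, μ i = a i]
    [DecidablePred fun ν : σ →₀ ℕ ↦ ∀ i ∈ I, ν i = 0]
    (hq : ∀ b ∈ q.support, (∀ i ∈ I, b i ≤ a i) → ∀ i ∈ I, b i = a i) :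
    (p * q).restrictSupportTo (fun μ ↦ ∀ i ∈ I, μ i = a i) =
      p.restrictSupportTo (fun ν ↦ ∀ i ∈ I, ν i = 0) *
        q.restrictSupportTo (fun μ ↦ ∀ i ∈ I, μ i = a i) := by
  classical
  ext μ
  simp only [coeff_restrictSupportTo, coeff_mul]
  split_ifs with hμ
  · refine sum_congr rfl fun ⟨ν, b⟩ hνb ↦ ?_
    have hsum i : ν i + b i = μ i := congrArg (· i) (mem_antidiagonal.1 hνb)
    by_cases hb : coeff b q = 0
    · simp [hb]
    have hba := hq b (mem_support_iff.2 hb) fun i hi ↦ by have := hsum i; grind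
    rw [if_pos fun i hi ↦ by have := hsum i; grind, if_pos hba]
  · refine (sum_eq_zero fun ⟨ν, b⟩ hνb ↦ ?_).symm
    have hsum i : ν i + b i = μ i := congrArg (· i) (mem_antidiagonal.1 hνb)
    split_ifs with hν hb <;> try simp
    exact absurd (fun i hi ↦ by have := hsum i; grind) hμ

end Restrict

section Conditions

variable [CommSemiring R] [LinearOrder R]

variable (p : MvPolynomial σ R) (I : Finset σ)

/-- Condition (1) for `I`. -/
def NegTermsDominatedOn : Prop :=
  ∀ b ∈ p.support, p.coeff b < 0 → ∃ a ∈ p.support, 0 < p.coeff a ∧ ∀ i ∈ I, a i ≤ b i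

/-- Condition (2) for `I`. The decidability instance is a parameter so that, for a concrete index
type such as `Fin n`, the filter is syntactically the one found by instance search there. -/
def MinimalPartsPosOn [Fintype σ]
    [∀ a : σ →₀ ℕ, DecidablePred fun b : σ →₀ ℕ ↦ ∀ i ∈ I, b i = a i] : Prop :=
  ∀ a ∈ p.support, 0 < p.coeff a →
    (¬ ∃ a' ∈ p.support, 0 < p.coeff a' ∧ (∀ i ∈ I, a' i ≤ a i) ∧ ∃ i ∈ I, a' i < a i) →
    ∀ x : σ → R, (∀ i, 0 < x i) →
      0 < ∑ b ∈ p.support.filter (fun b => ∀ i ∈ I, b i = a i), p.coeff b * ∏ i, x i ^ b i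

variable {p I}

theorem NegTermsDominatedOn.exists_minimal_lt [DecidableEq σ] (h : p.NegTermsDominatedOn I)
    {b : σ →₀ ℕ} (hb : b ∈ p.support)
    (hb' : ¬ Minimal (· ∈ {a ∈ p.support | 0 < p.coeff a}.image (Finsupp.filter (· ∈ I)))
      (b.filter (· ∈ I))) :
    ∃ m < b.filter (· ∈ I),
      Minimal (· ∈ {a ∈ p.support | 0 < p.coeff a}.image (Finsupp.filter (· ∈ I))) m := by
  obtain ⟨a, ha, hapos, hab⟩ : ∃ a ∈ p.support, 0 < p.coeff a ∧ ∀ i ∈ I, a i ≤ b i := by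
    rcases (mem_support_iff.1 hb).lt_or_gt with hneg | hpos
    exacts [h b hb hneg, ⟨b, hb, hpos, fun _ _ ↦ le_rfl⟩]
  obtain ⟨m, hma, hm⟩ := exists_minimal_le_of_wellFoundedLT
    (· ∈ {a ∈ p.support | 0 < p.coeff a}.image (Finsupp.filter (· ∈ I))) (a.filter (· ∈ I))
    (mem_image_of_mem _ (mem_filter.2 ⟨ha, hapos⟩))
  refine ⟨m, (hma.trans fun i ↦ ?_).lt_of_ne fun hmb ↦ hb' (hmb ▸ hm), hm⟩
  simp only [Finsupp.filter_apply]
  split_ifs with hi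
  exacts [hab i hi, le_rfl]

end Conditions

section Ordered

variable [Fintype σ] [CommRing R] [LinearOrder R] [IsStrictOrderedRing R]

theorem coeff_sum_X_pow_nonneg (N : ℕ) (ν : σ →₀ ℕ) :
    0 ≤ coeff ν ((∑ i, X i : MvPolynomial σ R) ^ N) := by
  rw [coeff_sum_X_pow_of_fintype]
  split_ifs <;> positivity

theorem coeff_sum_X_pow_single_pos (N : ℕ) (j : σ) :
    0 < coeff (Finsupp.single j N) ((∑ i, X i : MvPolynomial σ R) ^ N) := by
  rw [coeff_sum_X_pow_of_fintype, if_pos (by simp)]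
  exact_mod_cast Nat.multinomial_pos _ _

theorem eval_nonneg_of_coeff_nonneg {p : MvPolynomial σ R} (hp : ∀ μ, 0 ≤ coeff μ p)
    {x : σ → R} (hx : ∀ i, 0 ≤ x i) : 0 ≤ eval x p := by
  rw [eval_eq']
  exact sum_nonneg fun μ _ ↦ mul_nonneg (hp μ) (prod_nonneg fun i _ ↦ pow_nonneg (hx i) _)

theorem eval_pos_of_coeff_nonneg {p : MvPolynomial σ R} (hp : ∀ μ, 0 ≤ coeff μ p) (h0 : p ≠ 0)
    {x : σ → R} (hx : ∀ i, 0 < x i) : 0 < eval x p := by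
  rw [eval_eq']
  refine sum_pos (fun μ hμ ↦ mul_pos ((hp μ).lt_of_ne' (mem_support_iff.1 hμ)) ?_)
    (support_nonempty.2 h0)
  exact prod_pos fun i _ ↦ pow_pos (hx i) _

variable {p : MvPolynomial σ R} {I : Finset σ}

theorem negTermsDominatedOn_of_coeff_nonneg {N : ℕ}
    (hN : ∀ μ, 0 ≤ coeff μ ((∑ i, X i) ^ N * p)) {j : σ} (hj : j ∉ I) :
    NegTermsDominatedOn p I := by
  classical
  intro b _ hb
  by_contra! h
  have hterm : ∀ q ∈ antidiagonal (Finsupp.single j N + b),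
      coeff q.1 ((∑ i, X i : MvPolynomial σ R) ^ N) * coeff q.2 p ≤ 0 := by
    rintro ⟨ν, c⟩ hq
    refine mul_nonpos_of_nonneg_of_nonpos (coeff_sum_X_pow_nonneg N ν) (not_lt.1 fun hc ↦ ?_)
    obtain ⟨i, hi, hlt⟩ := h c (mem_support_iff.2 hc.ne') hc
    have hci := congrArg (· i) (mem_antidiagonal.1 hq)
    simp only [Finsupp.add_apply, Finsupp.single_apply, if_neg (ne_of_mem_of_not_mem hi hj).symm]
      at hci
    omega
  have hneg : coeff (Finsupp.single j N + b) ((∑ i, X i) ^ N * p) < 0 := by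
    rw [coeff_mul, ← sum_const_zero (s := antidiagonal (Finsupp.single j N + b))]
    exact sum_lt_sum hterm ⟨(Finsupp.single j N, b), mem_antidiagonal.2 rfl,
      mul_neg_of_pos_of_neg (coeff_sum_X_pow_single_pos N j) hb⟩
  exact (hN _).not_gt hneg

section

variable [∀ a : σ →₀ ℕ, DecidablePred fun b : σ →₀ ℕ ↦ ∀ i ∈ I, b i = a i]

theorem minimalPartsPosOn_of_coeff_nonneg {N : ℕ}
    (hN : ∀ μ, 0 ≤ coeff μ ((∑ i, X i) ^ N * p)) {j : σ} (hj : j ∉ I)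
    (hdom : NegTermsDominatedOn p I) : MinimalPartsPosOn p I := by
  intro a ha hapos hmin x hx
  have hbelow : ∀ b ∈ p.support, (∀ i ∈ I, b i ≤ a i) → ∀ i ∈ I, b i = a i := by
    intro b hb hle
    by_contra! hne
    obtain ⟨i₀, hi₀, hne⟩ := hne
    have hlt : b i₀ < a i₀ := (hle i₀ hi₀).lt_of_ne hne
    rcases (mem_support_iff.1 hb).lt_or_gt with hneg | hpos
    · obtain ⟨a', ha', ha'pos, ha'le⟩ := hdom b hb hneg
      exact hmin ⟨a', ha', ha'pos, fun i hi ↦ (ha'le i hi).trans (hle i hi), i₀, hi₀,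
        (ha'le i₀ hi₀).trans_lt hlt⟩
    · exact hmin ⟨b, hb, hpos, hle, i₀, hi₀, hlt⟩
  set A := ((∑ i, X i : MvPolynomial σ R) ^ N).restrictSupportTo (fun ν ↦ ∀ i ∈ I, ν i = 0)
  have hA0 : A ≠ 0 := by
    refine ne_zero_iff.2 ⟨Finsupp.single j N, ?_⟩
    rw [coeff_restrictSupportTo, if_pos fun i hi ↦ by
      rw [Finsupp.single_eq_of_ne (ne_of_mem_of_not_mem hi hj)]]
    exact (coeff_sum_X_pow_single_pos N j).ne'
  have hF0 : p.restrictSupportTo (fun μ ↦ ∀ i ∈ I, μ i = a i) ≠ 0 :=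
    ne_zero_iff.2 ⟨a, by rwa [coeff_restrictSupportTo, if_pos fun _ _ ↦ rfl, ← mem_support_iff]⟩
  have hG := eval_pos_of_coeff_nonneg (coeff_restrictSupportTo_nonneg _ hN)
    (by rw [restrictSupportTo_mul hbelow]; exact mul_ne_zero hA0 hF0) hx
  rw [restrictSupportTo_mul hbelow, map_mul] at hG
  rw [← eval_restrictSupportTo]
  exact pos_of_mul_pos_right hG <| eval_nonneg_of_coeff_nonneg
    (coeff_restrictSupportTo_nonneg _ (coeff_sum_X_pow_nonneg N)) fun i ↦ (hx i).le

end

theorem MinimalPartsPosOn.sum_pos_of_minimal [DecidableEq σ]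
    [∀ a : σ →₀ ℕ, DecidablePred fun b : σ →₀ ℕ ↦ ∀ i ∈ I, b i = a i]
    (h : p.MinimalPartsPosOn I) {m : σ →₀ ℕ}
    (hm : Minimal (· ∈ {a ∈ p.support | 0 < p.coeff a}.image (Finsupp.filter (· ∈ I))) m)
    {x : σ → R} (hx : ∀ i ∉ I, 0 < x i) :
    0 < ∑ b ∈ p.support with b.filter (· ∈ I) = m, p.coeff b * ∏ j ∈ Iᶜ, x j ^ b j := by
  obtain ⟨a, ha, rfl⟩ := mem_image.1 hm.prop
  obtain ⟨ha, hapos⟩ := mem_filter.1 ha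
  have hfilter_eq (b : σ →₀ ℕ) : b.filter (· ∈ I) = a.filter (· ∈ I) ↔ ∀ i ∈ I, b i = a i := by
    simp only [Finsupp.ext_iff, Finsupp.filter_apply]
    exact ⟨fun h i hi ↦ by simpa [hi] using h i,
      fun h i ↦ by split_ifs with hi; exacts [h i hi, rfl]⟩
  have hmin : ¬ ∃ a' ∈ p.support, 0 < p.coeff a' ∧ (∀ i ∈ I, a' i ≤ a i) ∧
      ∃ i ∈ I, a' i < a i := by
    rintro ⟨a', ha', ha'pos, hle, i, hi, hlt⟩
    have hle' : a'.filter (· ∈ I) ≤ a.filter (· ∈ I) := fun j ↦ by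
      simp only [Finsupp.filter_apply]; split_ifs with hj; exacts [hle j hj, le_rfl]
    have := hm.2 (mem_image_of_mem _ (mem_filter.2 ⟨ha', ha'pos⟩)) hle' i
    simp only [Finsupp.filter_apply, if_pos hi] at this
    omega
  have hpos := h a ha hapos hmin (fun i ↦ if i ∈ I then 1 else x i) fun i ↦ by
    split_ifs with hi; exacts [one_pos, hx i hi]
  refine hpos.trans_eq (sum_congr ?_ fun b _ ↦ ?_)
  · ext b
    simp only [mem_filter, hfilter_eq]
  rw [← prod_mul_prod_compl I, prod_eq_one fun i hi ↦ by rw [if_pos hi, one_pow], one_mul]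
  exact congrArg _ (prod_congr rfl fun j hj ↦ by rw [if_neg (mem_compl.1 hj)])

end Ordered

section Falling

variable [Fintype σ]

noncomputable def fallingEval [CommSemiring R] (p : MvPolynomial σ R) (μ : σ →₀ ℕ) : R :=
  ∑ a ∈ p.support, p.coeff a * ∏ i, ((μ i).descFactorial (a i) : R)

theorem coeff_sum_X_pow_mul_monomial_mul_prod_factorial [CommSemiring R] {N : ℕ}
    {a μ : σ →₀ ℕ} (hμ : μ.degree = N + a.degree) :
    coeff μ ((∑ i, X i : MvPolynomial σ R) ^ N * monomial a 1) * ∏ i, ((μ i)! : R) =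
      N ! * ∏ i, ((μ i).descFactorial (a i) : R) := by
  rw [coeff_mul_monomial', mul_one]
  split_ifs with ha
  · have hsum : (μ - a).degree = N := by
      have := map_add Finsupp.degree (μ - a) a
      rw [tsub_add_cancel_of_le ha] at this
      omega
    rw [coeff_sum_X_pow_of_fintype, if_pos (by exact hsum)]
    suffices (μ - a).multinomial * ∏ i, (μ i)! = N ! * ∏ i, (μ i).descFactorial (a i) by
      exact_mod_cast congrArg (Nat.cast : ℕ → R) this
    rw [← hsum, Finsupp.degree_eq_sum, ← Nat.multinomial_spec,
      ← Finsupp.multinomial_of_support_subset (subset_univ _), mul_comm _ (Nat.multinomial _ _),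
      mul_assoc, ← prod_mul_distrib]
    congr 1
    refine prod_congr rfl fun i _ ↦ ?_
    rw [Finsupp.tsub_apply, Nat.factorial_mul_descFactorial (ha i)]
  · obtain ⟨i, hi⟩ : ∃ i, μ i < a i := by
      by_contra! h
      exact ha h
    rw [zero_mul, eq_comm, prod_eq_zero (mem_univ i)
      (by rw [Nat.descFactorial_eq_zero_iff_lt.2 hi, Nat.cast_zero]), mul_zero]

theorem IsHomogeneous.coeff_sum_X_pow_mul_mul_prod_factorial [CommSemiring R]
    {p : MvPolynomial σ R} {d : ℕ} (hp : p.IsHomogeneous d) {N : ℕ} {μ : σ →₀ ℕ}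
    (hμ : μ.degree = N + d) :
    coeff μ ((∑ i, X i) ^ N * p) * ∏ i, ((μ i)! : R) = N ! * p.fallingEval μ := by
  conv_lhs => rw [p.as_sum]
  simp only [mul_sum, coeff_sum, sum_mul, fallingEval]
  refine sum_congr rfl fun a ha ↦ ?_
  rw [← mul_one (coeff a p), ← C_mul_monomial, mul_left_comm, coeff_C_mul, mul_assoc,
    coeff_sum_X_pow_mul_monomial_mul_prod_factorial
      (by rw [hμ, hp.degree_eq_sum_deg_support ha, Finsupp.degree_apply]), mul_one,
    mul_left_comm]

theorem sum_coeff_mul_prod_eq_sum_filter [CommSemiring R] [DecidableEq σ]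
    (p : MvPolynomial σ R) (I : Finset σ) (v : σ → ℕ → R) :
    ∑ b ∈ p.support, p.coeff b * ∏ i, v i (b i) =
      ∑ γ ∈ p.support.image (Finsupp.filter (· ∈ I)), (∏ i ∈ I, v i (γ i)) *
        ∑ b ∈ p.support with b.filter (· ∈ I) = γ, p.coeff b * ∏ j ∈ Iᶜ, v j (b j) := by
  rw [← sum_fiberwise_of_maps_to fun b hb ↦ mem_image_of_mem (Finsupp.filter (· ∈ I)) hb]
  refine sum_congr rfl fun γ _ ↦ ?_
  rw [mul_sum]
  refine sum_congr rfl fun b hb ↦ ?_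
  rw [← (mem_filter.1 hb).2, ← prod_mul_prod_compl I fun i ↦ v i (b i), mul_left_comm]
  congr 1
  exact prod_congr rfl fun i hi ↦ by rw [Finsupp.filter_apply, if_pos hi]

theorem IsHomogeneous.fallingEval_div_pow [Field R] {p : MvPolynomial σ R} {d : ℕ}
    (hp : p.IsHomogeneous d) (μ : σ →₀ ℕ) (t : R) :
    p.fallingEval μ / t ^ d =
      ∑ b ∈ p.support, p.coeff b * ∏ i, ((μ i).descFactorial (b i) : R) / t ^ b i := by
  rw [fallingEval, sum_div]
  refine sum_congr rfl fun b hb ↦ ?_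
  rw [mul_div_assoc, prod_div_distrib, prod_pow_eq_pow_sum, hp.degree_eq_sum_deg_support hb,
    sum_subset (subset_univ _) fun i _ hi ↦ Finsupp.notMem_support_iff.1 hi]

end Falling

section Asymptotics

variable [Fintype σ] {p : MvPolynomial σ ℝ} {d : ℕ} {I : Finset σ} {μ : ℕ → σ →₀ ℕ}
  {t : ℕ → ℝ} {x : σ → ℝ}

theorem IsHomogeneous.tendsto_fallingEval_div_pow (hp : p.IsHomogeneous d)
    (ht : Tendsto t atTop atTop) (hμ : ∀ i, Tendsto (fun N ↦ (μ N i : ℝ) / t N) atTop (𝓝 (x i))) :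
    Tendsto (fun N ↦ p.fallingEval (μ N) / t N ^ d) atTop (𝓝 (eval x p)) := by
  simp only [hp.fallingEval_div_pow, eval_eq']
  exact tendsto_finsetSum _ fun b _ ↦ (tendsto_finsetProd _ fun i _ ↦
    tendsto_descFactorial_div_pow ht (hμ i) (b i)).const_mul _

theorem tendsto_prod_div_pow_sub_of_lt
    (hμ : ∀ i, Tendsto (fun N ↦ (μ N i : ℝ) / t N) atTop (𝓝 (x i))) (hxI : ∀ i ∈ I, x i = 0)
    {m γ : σ →₀ ℕ} (hγ : ∀ i ∉ I, γ i = 0) (hmγ : m < γ) :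
    Tendsto (fun N ↦ ∏ i ∈ I, ((μ N i : ℝ) / t N) ^ (γ i - m i)) atTop (𝓝 0) := by
  obtain ⟨i, hi⟩ : ∃ i, m i < γ i := by
    by_contra! h
    exact hmγ.not_ge h
  have hiI : i ∈ I := by
    by_contra hiI
    rw [hγ i hiI] at hi
    omega
  convert tendsto_finsetProd I fun i _ ↦ (hμ i).pow (γ i - m i)
  exact (prod_eq_zero hiI (by rw [hxI i hiI, zero_pow (by omega)])).symm

theorem IsHomogeneous.eventually_fallingEval_nonneg
    [∀ a : σ →₀ ℕ, DecidablePred fun b : σ →₀ ℕ ↦ ∀ i ∈ I, b i = a i] (hp : p.IsHomogeneous d)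
    (ht : Tendsto t atTop atTop) (hμ : ∀ i, Tendsto (fun N ↦ (μ N i : ℝ) / t N) atTop (𝓝 (x i)))
    (hxI : ∀ i ∈ I, x i = 0) (hxpos : ∀ i ∉ I, 0 < x i)
    (h₁ : p.NegTermsDominatedOn I) (h₂ : p.MinimalPartsPosOn I) :
    ∀ᶠ N in atTop, 0 ≤ p.fallingEval (μ N) := by
  classical
  set pat : (σ →₀ ℕ) → σ →₀ ℕ := Finsupp.filter (· ∈ I)
  set P := p.support.image pat
  set M := P.filter (Minimal (· ∈ {a ∈ p.support | 0 < p.coeff a}.image pat))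
  have hdom : ∀ γ ∈ P, γ ∉ M → ∃ m ∈ M, m < γ := by
    intro γ hγ hγM
    obtain ⟨b, hb, rfl⟩ := mem_image.1 hγ
    obtain ⟨m, hmb, hm⟩ := h₁.exists_minimal_lt hb fun h ↦ hγM (mem_filter.2 ⟨hγ, h⟩)
    exact ⟨m, mem_filter.2 ⟨image_subset_image (filter_subset _ _) hm.prop, hm⟩, hmb⟩
  -- Divided by `t N ^ d`, `p.fallingEval (μ N)` is `∑ γ ∈ P, (∏ i ∈ I, v N i (γ i)) * τ γ N`.
  set v : ℕ → σ → ℕ → ℝ := fun N i k ↦ ((μ N i).descFactorial k : ℝ) / t N ^ k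
  set τ : (σ →₀ ℕ) → ℕ → ℝ := fun γ N ↦
    ∑ b ∈ p.support with pat b = γ, p.coeff b * ∏ j ∈ Iᶜ, v N j (b j)
  set L : (σ →₀ ℕ) → ℝ := fun γ ↦
    ∑ b ∈ p.support with pat b = γ, p.coeff b * ∏ j ∈ Iᶜ, x j ^ b j
  have hτ γ : Tendsto (τ γ) atTop (𝓝 (L γ)) :=
    tendsto_finsetSum _ fun b _ ↦ (tendsto_finsetProd _ fun j _ ↦
      tendsto_descFactorial_div_pow ht (hμ j) (b j)).const_mul _
  set ρ : (σ →₀ ℕ) → (σ →₀ ℕ) → ℕ → ℝ := fun m γ N ↦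
    ∏ i ∈ I, ((μ N i : ℝ) / t N) ^ (γ i - m i)
  have hsmall : ∀ᶠ N in atTop, ∀ m ∈ M, ∑ γ ∈ P with m < γ, ρ m γ N * |τ γ N| ≤ τ m N := by
    refine (eventually_all_finset M).2 fun m hm ↦ ?_
    have hρ : ∀ γ ∈ P.filter (m < ·), Tendsto (ρ m γ) atTop (𝓝 0) := fun γ hγ ↦ by
      obtain ⟨⟨b, -, rfl⟩, hmγ⟩ := And.imp_left mem_image.1 (mem_filter.1 hγ)
      exact tendsto_prod_div_pow_sub_of_lt hμ hxI (fun i hi ↦ by simp [pat, hi]) hmγ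
    have hlim : Tendsto (fun N ↦ τ m N - ∑ γ ∈ P with m < γ, ρ m γ N * |τ γ N|) atTop
        (𝓝 (L m - ∑ γ ∈ P with m < γ, 0 * |L γ|)) :=
      (hτ m).sub (tendsto_finsetSum _ fun γ hγ ↦ (hρ γ hγ).mul (hτ γ).abs)
    simp only [zero_mul, sum_const_zero, sub_zero] at hlim
    filter_upwards [hlim.eventually_const_lt (h₂.sum_pos_of_minimal (mem_filter.1 hm).2 hxpos)]
      with N hN
    linarith
  filter_upwards [hsmall, ht.eventually_gt_atTop 0] with N hN htN
  have hsum : 0 ≤ ∑ γ ∈ P, (∏ i ∈ I, v N i (γ i)) * τ γ N := by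
    refine sum_mul_nonneg_of_dominated (filter_subset _ _) hdom (fun γ _ ↦ ?_)
      (fun m _ γ _ hmγ ↦ ?_) hN
    · exact prod_nonneg fun i _ ↦ by positivity
    · rw [← prod_mul_distrib]
      exact prod_le_prod (fun i _ ↦ by positivity)
        fun i _ ↦ descFactorial_div_pow_le (hmγ.le i) htN
  rw [← sum_coeff_mul_prod_eq_sum_filter, ← hp.fallingEval_div_pow] at hsum
  exact (div_nonneg_iff.1 hsum).elim And.left fun h ↦ absurd h.2 (not_le.2 (by positivity))

end Asymptotics

section Backward

variable [Fintype σ] {f : MvPolynomial σ ℝ} {d : ℕ}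

theorem IsHomogeneous.fallingEval_neg_of_coeff_neg (hf : f.IsHomogeneous d) {N : ℕ}
    {μ : σ →₀ ℕ} (hμ : coeff μ ((∑ i, X i) ^ N * f) < 0) :
    μ.degree = N + d ∧ f.fallingEval μ < 0 := by
  have hhom : ((∑ i, X i : MvPolynomial σ ℝ) ^ N * f).IsHomogeneous (N + d) := by
    simpa using ((IsHomogeneous.sum _ _ _ fun i _ ↦ isHomogeneous_X ℝ i).pow N).mul hf
  have hdeg : μ.degree = N + d := by
    by_contra h
    exact hμ.ne (hhom.coeff_eq_zero h)
  refine ⟨hdeg, neg_of_mul_neg_right (a := (N ! : ℝ)) ?_ (by positivity)⟩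
  rw [← hf.coeff_sum_X_pow_mul_mul_prod_factorial hdeg]
  exact mul_neg_of_neg_of_pos hμ (prod_pos fun i _ ↦ by positivity)

theorem exists_tendsto_div_of_degree_eq {μ : ℕ → σ →₀ ℕ} (hμ : ∀ N, (μ N).degree = N + d) :
    ∃ x ∈ stdSimplex ℝ σ, ∃ ψ : ℕ → ℕ, StrictMono ψ ∧
      ∀ i, Tendsto (fun N ↦ (μ (ψ N) i : ℝ) / (ψ N + d : ℕ)) atTop (𝓝 (x i)) := by
  have hmem : ∃ᶠ N in atTop, (fun i ↦ (μ N i : ℝ) / (N + d : ℕ)) ∈ stdSimplex ℝ σ := by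
    refine Eventually.frequently ((eventually_gt_atTop 0).mono fun N hN ↦ ⟨fun i ↦ ?_, ?_⟩)
    · positivity
    · rw [← sum_div, ← Nat.cast_sum, ← Finsupp.degree_eq_sum, hμ, div_self (by positivity)]
  obtain ⟨x, hx, ψ, hψ, hlim⟩ := (isCompact_stdSimplex ℝ σ).tendsto_subseq' hmem
  exact ⟨x, hx, ψ, hψ, tendsto_pi_nhds.1 hlim⟩

theorem eval_eq_zero_of_zeros_subset
    (hfaces : ∃ S : Set (Set σ),
      {x : σ → ℝ | (∀ i, 0 ≤ x i) ∧ (∑ i, x i = 1) ∧ eval x f = 0} =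
        ⋃ I ∈ S, {x : σ → ℝ | (∀ i, 0 ≤ x i) ∧ (∑ i, x i = 1) ∧ ∀ i ∈ I, x i = 0})
    {x y : σ → ℝ} (hx : x ∈ stdSimplex ℝ σ) (hfx : eval x f = 0) (hy : y ∈ stdSimplex ℝ σ)
    (hyx : ∀ i, x i = 0 → y i = 0) : eval y f = 0 := by
  obtain ⟨S, hS⟩ := hfaces
  have hxZ : x ∈ {x : σ → ℝ | (∀ i, 0 ≤ x i) ∧ (∑ i, x i = 1) ∧ eval x f = 0} :=
    ⟨hx.1, hx.2, hfx⟩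
  rw [hS, Set.mem_iUnion₂] at hxZ
  obtain ⟨J, hJ, -, -, hxJ⟩ := hxZ
  have hyZ : y ∈ ⋃ I ∈ S, {x : σ → ℝ | (∀ i, 0 ≤ x i) ∧ (∑ i, x i = 1) ∧ ∀ i ∈ I, x i = 0} :=
    Set.mem_iUnion₂.2 ⟨J, hJ, hy.1, hy.2, fun i hi ↦ hyx i (hxJ i hi)⟩
  rw [← hS] at hyZ
  exact hyZ.2.2

theorem IsHomogeneous.exists_coeff_sum_X_pow_mul_nonneg
    [∀ (I : Finset σ) (a : σ →₀ ℕ), DecidablePred fun b : σ →₀ ℕ ↦ ∀ i ∈ I, b i = a i]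
    (hf : f.IsHomogeneous d) (hcopos : ∀ u : σ → ℝ, (∀ i, 0 ≤ u i) → 0 ≤ eval u f)
    (hfaces : ∃ S : Set (Set σ),
      {x : σ → ℝ | (∀ i, 0 ≤ x i) ∧ (∑ i, x i = 1) ∧ eval x f = 0} =
        ⋃ I ∈ S, {x : σ → ℝ | (∀ i, 0 ≤ x i) ∧ (∑ i, x i = 1) ∧ ∀ i ∈ I, x i = 0})
    (hcond : ∀ I : Finset σ,
      (∃ x : σ → ℝ, (∀ i, 0 ≤ x i) ∧ (∑ i, x i = 1) ∧ ∀ i ∈ I, x i = 0) →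
      (∀ x : σ → ℝ, (∀ i, 0 ≤ x i) → (∑ i, x i = 1) → (∀ i ∈ I, x i = 0) → eval x f = 0) →
      f.NegTermsDominatedOn I ∧ f.MinimalPartsPosOn I) :
    ∃ N : ℕ, ∀ μ, 0 ≤ coeff μ ((∑ i, X i) ^ N * f) := by
  by_contra! h
  choose μ hμ using h
  have hdeg N := (hf.fallingEval_neg_of_coeff_neg (hμ N)).1
  have hneg N := (hf.fallingEval_neg_of_coeff_neg (hμ N)).2
  obtain ⟨x, hx, ψ, hψ, hlim⟩ := exists_tendsto_div_of_degree_eq hdeg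
  have ht : Tendsto (fun N ↦ ((ψ N + d : ℕ) : ℝ)) atTop atTop :=
    tendsto_natCast_atTop_atTop.comp ((tendsto_add_atTop_nat d).comp hψ.tendsto_atTop)
  have hfx : eval x f = 0 := by
    refine le_antisymm (le_of_tendsto (hf.tendsto_fallingEval_div_pow ht hlim) ?_)
      (hcopos x hx.1)
    exact Eventually.of_forall fun N ↦ div_nonpos_of_nonpos_of_nonneg (hneg _).le (by positivity)
  set I : Finset σ := {i | x i = 0}
  obtain ⟨h₁, h₂⟩ := hcond I ⟨x, hx.1, hx.2, fun i hi ↦ (mem_filter.1 hi).2⟩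
    fun y hy₀ hy₁ hyI ↦ eval_eq_zero_of_zeros_subset hfaces hx hfx ⟨hy₀, hy₁⟩
      fun i hi ↦ hyI i (mem_filter.2 ⟨mem_univ i, hi⟩)
  obtain ⟨N, hN⟩ := (hf.eventually_fallingEval_nonneg ht hlim (fun i hi ↦ (mem_filter.1 hi).2)
    (fun i hi ↦ (hx.1 i).lt_of_ne' fun h ↦ hi (mem_filter.2 ⟨mem_univ i, h⟩)) h₁ h₂).exists
  exact (hneg (ψ N)).not_ge hN

end Backward

end MvPolynomial

open MvPolynomial in
theorem polya_with_zeros_general (n d : ℕ) (f : MvPolynomial (Fin n) ℝ)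
    (hhom : f.IsHomogeneous d)
    (hcopos : ∀ u : Fin n → ℝ, (∀ i, 0 ≤ u i) → 0 ≤ eval u f)
    (hfaces : ∃ S : Set (Set (Fin n)),
      {x : Fin n → ℝ | (∀ i, 0 ≤ x i) ∧ (∑ i, x i = 1) ∧ eval x f = 0} =
        ⋃ I ∈ S, {x : Fin n → ℝ | (∀ i, 0 ≤ x i) ∧ (∑ i, x i = 1) ∧ ∀ i ∈ I, x i = 0}) :
    (∃ N : ℕ, ∀ μ : Fin n →₀ ℕ, 0 ≤ ((∑ i, X i) ^ N * f).coeff μ) ↔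
    (∀ I : Finset (Fin n),
      (∃ x : Fin n → ℝ, (∀ i, 0 ≤ x i) ∧ (∑ i, x i = 1) ∧ ∀ i ∈ I, x i = 0) →
      (∀ x : Fin n → ℝ, (∀ i, 0 ≤ x i) → (∑ i, x i = 1) → (∀ i ∈ I, x i = 0) →
        eval x f = 0) →
      ((∀ b ∈ f.support, f.coeff b < 0 →
          ∃ a ∈ f.support, 0 < f.coeff a ∧ ∀ i ∈ I, a i ≤ b i) ∧
       (∀ a ∈ f.support, 0 < f.coeff a →
          (¬ ∃ a' ∈ f.support, 0 < f.coeff a' ∧ (∀ i ∈ I, a' i ≤ a i) ∧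
              ∃ i ∈ I, a' i < a i) →
          ∀ x : Fin n → ℝ, (∀ i, 0 < x i) →
            0 < ∑ b ∈ f.support.filter (fun b => ∀ i ∈ I, b i = a i),
                  f.coeff b * ∏ i, x i ^ b i))) := by
  refine ⟨?_, hhom.exists_coeff_sum_X_pow_mul_nonneg hcopos hfaces⟩
  rintro ⟨N, hN⟩ I ⟨x, -, hx₁, hxI⟩ -
  obtain ⟨j, hj⟩ : ∃ j, j ∉ I := by
    by_contra! h
    simp [hxI _ (h _)] at hx₁
  have h₁ := negTermsDominatedOn_of_coeff_nonneg hN hj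
  exact ⟨h₁, minimalPartsPosOn_of_coeff_nonneg hN hj h₁⟩

open MvPolynomial in
/-- Pólya's Theorem with Zeros (Castle–Powers–Reznick). Let `f` be a nonzero
homogeneous copositive polynomial whose zero set inside the standard simplex `Δ` is a
union of faces `Δ_I`. Then `(x₁+⋯+x_n)^N·f` has no negative coefficients for some `N`
iff for every `I` with `Δ_I` nonempty and `Δ_I` contained in the zero set of `f`:
(1) every `b` in the negative support dominates (on `I`) some `a` in the positive
support, and (2) for every `a` in the positive support minimal for `I`, the polynomial
`Σ_{b∈Γ_{I,a}} c_b x^b` is strictly positive on the open positive orthant. -/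
theorem polya_with_zeros (n d : ℕ) (f : MvPolynomial (Fin n) ℝ) (hf0 : f ≠ 0)
    (hhom : f.IsHomogeneous d)
    (hcopos : ∀ u : Fin n → ℝ, (∀ i, 0 ≤ u i) → 0 ≤ eval u f)
    (hfaces : ∃ S : Set (Set (Fin n)),
      {x : Fin n → ℝ | (∀ i, 0 ≤ x i) ∧ (∑ i, x i = 1) ∧ eval x f = 0} =
        ⋃ I ∈ S, {x : Fin n → ℝ | (∀ i, 0 ≤ x i) ∧ (∑ i, x i = 1) ∧ ∀ i ∈ I, x i = 0}) :
    (∃ N : ℕ, ∀ μ : Fin n →₀ ℕ, 0 ≤ ((∑ i, X i) ^ N * f).coeff μ) ↔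
    (∀ I : Finset (Fin n),
      (∃ x : Fin n → ℝ, (∀ i, 0 ≤ x i) ∧ (∑ i, x i = 1) ∧ ∀ i ∈ I, x i = 0) →
      (∀ x : Fin n → ℝ, (∀ i, 0 ≤ x i) → (∑ i, x i = 1) → (∀ i ∈ I, x i = 0) →
        eval x f = 0) →
      ((∀ b ∈ f.support, f.coeff b < 0 →
          ∃ a ∈ f.support, 0 < f.coeff a ∧ ∀ i ∈ I, a i ≤ b i) ∧
       (∀ a ∈ f.support, 0 < f.coeff a →
          (¬ ∃ a' ∈ f.support, 0 < f.coeff a' ∧ (∀ i ∈ I, a' i ≤ a i) ∧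
              ∃ i ∈ I, a' i < a i) →
          ∀ x : Fin n → ℝ, (∀ i, 0 < x i) →
            0 < ∑ b ∈ f.support.filter (fun b => ∀ i ∈ I, b i = a i),
                  f.coeff b * ∏ i, x i ^ b i))) :=
  polya_with_zeros_general n d f hhom hcopos hfaces
end

section
/- Let f = x₁³x₂x₃ − x₁²x₂²x₃ + x₁x₂³x₃ + x₂⁵ ∈ ℝ[x₁,x₂,x₃]. Then: (a) f(x) = x₁x₂x₃((x₁−x₂)² + x₁x₂) + x₂⁵, so f(x) > 0 for every x ∈ ℝ³_{>0}, and moreover for every w ∈ ℝ³ the initial form in_w(f) is strictly positive at every x ∈ ℝ³_{>0}; (b) nevertheless, for every N ∈ ℕ the coefficient of the monomial x₁²x₂²x₃^{N+1} in (x₁+x₂+x₃)^N·f equals −1. Consequently there is no N ∈ ℕ for which (x₁+x₂+x₃)^N·f has no negative coefficients, so Pólya's method fails for this polynomial even though all its facial restrictions are positive on the open orthant. -/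
open MvPolynomial
open scoped Classical

noncomputable def tri (a b c : ℕ) : Fin 3 →₀ ℕ :=
  Finsupp.single 0 a + Finsupp.single 1 b + Finsupp.single 2 c

@[simp] lemma tri_apply0 (a b c : ℕ) : tri a b c 0 = a := by simp [tri, Finsupp.single_apply]
@[simp] lemma tri_apply1 (a b c : ℕ) : tri a b c 1 = b := by simp [tri, Finsupp.single_apply]
@[simp] lemma tri_apply2 (a b c : ℕ) : tri a b c 2 = c := by simp [tri, Finsupp.single_apply]

lemma tri_eta (μ : Fin 3 →₀ ℕ) : μ = tri (μ 0) (μ 1) (μ 2) := by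
  ext i; fin_cases i <;> simp

@[simp] lemma tri_inj {a b c a' b' c' : ℕ} : tri a b c = tri a' b' c' ↔ a = a' ∧ b = b' ∧ c = c' := by
  constructor
  · intro h
    refine ⟨?_, ?_, ?_⟩
    · have := congrFun (congrArg (⇑) h) 0; simpa using this
    · have := congrFun (congrArg (⇑) h) 1; simpa using this
    · have := congrFun (congrArg (⇑) h) 2; simpa using this
  · rintro ⟨rfl, rfl, rfl⟩; rfl

lemma f_monomial (f : MvPolynomial (Fin 3) ℝ)
    (hf : f = X 0 ^ 3 * X 1 * X 2 - X 0 ^ 2 * X 1 ^ 2 * X 2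
        + X 0 * X 1 ^ 3 * X 2 + X 1 ^ 5) :
    f = monomial (tri 3 1 1) 1 - monomial (tri 2 2 1) 1
      + monomial (tri 1 3 1) 1 + monomial (tri 0 5 0) 1 := by
  rw [hf]
  simp only [tri, monomial_pow, monomial_mul, one_pow, mul_one, X]
  norm_num

lemma f_coeff (f : MvPolynomial (Fin 3) ℝ)
    (hf : f = X 0 ^ 3 * X 1 * X 2 - X 0 ^ 2 * X 1 ^ 2 * X 2
        + X 0 * X 1 ^ 3 * X 2 + X 1 ^ 5) (μ : Fin 3 →₀ ℕ) :
    f.coeff μ = (if tri 3 1 1 = μ then (1:ℝ) else 0) - (if tri 2 2 1 = μ then 1 else 0)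
      + (if tri 1 3 1 = μ then 1 else 0) + (if tri 0 5 0 = μ then 1 else 0) := by
  rw [f_monomial f hf]
  simp [coeff_monomial]

lemma f_support (f : MvPolynomial (Fin 3) ℝ)
    (hf : f = X 0 ^ 3 * X 1 * X 2 - X 0 ^ 2 * X 1 ^ 2 * X 2
        + X 0 * X 1 ^ 3 * X 2 + X 1 ^ 5) :
    f.support = {tri 3 1 1, tri 2 2 1, tri 1 3 1, tri 0 5 0} := by
  ext μ
  rw [mem_support_iff, f_coeff f hf]
  rcases eq_or_ne (tri 3 1 1) μ with h1 | h1 <;>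
  rcases eq_or_ne (tri 2 2 1) μ with h2 | h2 <;>
  rcases eq_or_ne (tri 1 3 1) μ with h3 | h3 <;>
  rcases eq_or_ne (tri 0 5 0) μ with h4 | h4 <;>
    simp_all [eq_comm]

lemma tri_sub0 (a b c : ℕ) (h : 1 ≤ a) : tri a b c - Finsupp.single 0 1 = tri (a-1) b c := by
  ext i; fin_cases i <;> simp [Finsupp.single_apply] <;> omega
lemma tri_sub1 (a b c : ℕ) (h : 1 ≤ b) : tri a b c - Finsupp.single 1 1 = tri a (b-1) c := by
  ext i; fin_cases i <;> simp [Finsupp.single_apply] <;> omega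
lemma tri_sub2 (a b c : ℕ) (h : 1 ≤ c) : tri a b c - Finsupp.single 2 1 = tri a b (c-1) := by
  ext i; fin_cases i <;> simp [Finsupp.single_apply] <;> omega

lemma coeff_top (f : MvPolynomial (Fin 3) ℝ)
    (hf : f = X 0 ^ 3 * X 1 * X 2 - X 0 ^ 2 * X 1 ^ 2 * X 2
        + X 0 * X 1 ^ 3 * X 2 + X 1 ^ 5) :
    ∀ N a b c : ℕ, a ≤ 2 → b ≤ 2 → a + b + c = N + 5 →
      ((X 0 + X 1 + X 2) ^ N * f).coeff (tri a b c)
        = if a = 2 ∧ b = 2 then -1 else 0 := by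
  intro N
  induction N with
  | zero =>
    intro a b c ha hb habc
    simp only [pow_zero, one_mul, f_coeff f hf]
    obtain rfl : c = 5 - a - b := by omega
    interval_cases a <;> interval_cases b <;> norm_num [tri_inj]
  | succ N ih =>
    intro a b c ha hb habc
    have hrw : (X 0 + X 1 + X 2) ^ (N+1) * f
        = ((X 0 + X 1 + X 2) ^ N * f) * X 0
        + ((X 0 + X 1 + X 2) ^ N * f) * X 1
        + ((X 0 + X 1 + X 2) ^ N * f) * X 2 := by ring
    rw [hrw, coeff_add, coeff_add, coeff_mul_X', coeff_mul_X', coeff_mul_X']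
    have hc : 1 ≤ c := by omega
    have h2 : (2:Fin 3) ∈ (tri a b c).support := by
      simp [Finsupp.mem_support_iff]; omega
    rw [if_pos h2, tri_sub2 a b c hc, ih a b (c-1) ha hb (by omega)]
    have e0 : (if (0:Fin 3) ∈ (tri a b c).support then
        ((X 0 + X 1 + X 2) ^ N * f).coeff (tri a b c - Finsupp.single 0 1) else 0) = 0 := by
      split_ifs with h
      · have ha1 : 1 ≤ a := by
          have := Finsupp.mem_support_iff.mp h; simp at this; omega
        rw [tri_sub0 a b c ha1, ih (a-1) b c (by omega) hb (by omega)]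
        rw [if_neg (by omega)]
      · rfl
    have e1 : (if (1:Fin 3) ∈ (tri a b c).support then
        ((X 0 + X 1 + X 2) ^ N * f).coeff (tri a b c - Finsupp.single 1 1) else 0) = 0 := by
      split_ifs with h
      · have hb1 : 1 ≤ b := by
          have := Finsupp.mem_support_iff.mp h; simp at this; omega
        rw [tri_sub1 a b c hb1, ih a (b-1) c ha (by omega) (by omega)]
        rw [if_neg (by omega)]
      · rfl
    rw [e0, e1]
    ring

lemma part3 (f : MvPolynomial (Fin 3) ℝ)
    (hf : f = X 0 ^ 3 * X 1 * X 2 - X 0 ^ 2 * X 1 ^ 2 * X 2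
        + X 0 * X 1 ^ 3 * X 2 + X 1 ^ 5)
    (w : Fin 3 → ℝ) (x : Fin 3 → ℝ) (hx : ∀ i, 0 < x i) :
    0 < ∑ a ∈ f.support.filter (fun a => ∀ b ∈ f.support,
          ∑ i, w i * (a i : ℝ) ≤ ∑ i, w i * (b i : ℝ)),
        f.coeff a * ∏ i, x i ^ a i := by
  have h0 := hx 0; have h1 := hx 1; have h2 := hx 2
  have c1 : f.coeff (tri 3 1 1) = 1 := by rw [f_coeff f hf]; norm_num [tri_inj]
  have c2 : f.coeff (tri 2 2 1) = -1 := by rw [f_coeff f hf]; norm_num [tri_inj]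
  have c3 : f.coeff (tri 1 3 1) = 1 := by rw [f_coeff f hf]; norm_num [tri_inj]
  have c4 : f.coeff (tri 0 5 0) = 1 := by rw [f_coeff f hf]; norm_num [tri_inj]
  have p1 : (∏ i, x i ^ (tri 3 1 1) i) = x 0 ^ 3 * x 1 * x 2 := by
    simp [Fin.prod_univ_three]
  have p2 : (∏ i, x i ^ (tri 2 2 1) i) = x 0 ^ 2 * x 1 ^ 2 * x 2 := by
    simp [Fin.prod_univ_three]
  have p3 : (∏ i, x i ^ (tri 1 3 1) i) = x 0 * x 1 ^ 3 * x 2 := by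
    simp [Fin.prod_univ_three]
  have p4 : (∏ i, x i ^ (tri 0 5 0) i) = x 1 ^ 5 := by
    simp [Fin.prod_univ_three]
  have M1 : 0 < x 0 ^ 3 * x 1 * x 2 := by positivity
  have M2 : 0 < x 0 ^ 2 * x 1 ^ 2 * x 2 := by positivity
  have M3 : 0 < x 0 * x 1 ^ 3 * x 2 := by positivity
  have M4 : 0 < x 1 ^ 5 := by positivity
  have key2 : 0 < x 0 ^ 3 * x 1 * x 2 - x 0 ^ 2 * x 1 ^ 2 * x 2 + x 0 * x 1 ^ 3 * x 2 := by
    nlinarith [sq_nonneg (x 0 - x 1), mul_pos (mul_pos h0 h1) h2,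
      mul_pos (mul_pos (mul_pos h0 h1) h2) (mul_pos h0 h1)]
  rw [f_support f hf, Finset.sum_filter,
    Finset.sum_insert (by norm_num [tri_inj]),
    Finset.sum_insert (by norm_num [tri_inj]),
    Finset.sum_insert (by norm_num [tri_inj]),
    Finset.sum_singleton, c1, c2, c3, c4, p1, p2, p3, p4]
  have mem1 : tri 3 1 1 ∈ ({tri 3 1 1, tri 2 2 1, tri 1 3 1, tri 0 5 0} :
      Finset (Fin 3 →₀ ℕ)) := by simp
  have mem2 : tri 2 2 1 ∈ ({tri 3 1 1, tri 2 2 1, tri 1 3 1, tri 0 5 0} :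
      Finset (Fin 3 →₀ ℕ)) := by simp
  have mem3 : tri 1 3 1 ∈ ({tri 3 1 1, tri 2 2 1, tri 1 3 1, tri 0 5 0} :
      Finset (Fin 3 →₀ ℕ)) := by simp
  have hkey : (∑ i, w i * ((tri 3 1 1) i : ℝ)) + (∑ i, w i * ((tri 1 3 1) i : ℝ))
      = 2 * ∑ i, w i * ((tri 2 2 1) i : ℝ) := by
    simp [Fin.sum_univ_three]; ring
  by_cases q2 : ∀ b ∈ ({tri 3 1 1, tri 2 2 1, tri 1 3 1, tri 0 5 0} :
      Finset (Fin 3 →₀ ℕ)), ∑ i, w i * ((tri 2 2 1) i : ℝ) ≤ ∑ i, w i * (b i : ℝ)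
  · have l1 := q2 _ mem1
    have l3 := q2 _ mem3
    have q1 : ∀ b ∈ ({tri 3 1 1, tri 2 2 1, tri 1 3 1, tri 0 5 0} :
        Finset (Fin 3 →₀ ℕ)), ∑ i, w i * ((tri 3 1 1) i : ℝ) ≤ ∑ i, w i * (b i : ℝ) := by
      intro b hb
      have := q2 b hb
      linarith
    have q3 : ∀ b ∈ ({tri 3 1 1, tri 2 2 1, tri 1 3 1, tri 0 5 0} :
        Finset (Fin 3 →₀ ℕ)), ∑ i, w i * ((tri 1 3 1) i : ℝ) ≤ ∑ i, w i * (b i : ℝ) := by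
      intro b hb
      have := q2 b hb
      linarith
    rw [if_pos q1, if_pos q2, if_pos q3]
    split_ifs <;> linarith [key2, M4]
  · rw [if_neg q2]
    obtain ⟨a, ha, hmin⟩ := Finset.exists_min_image _
      (fun a => ∑ i, w i * ((a i : ℕ) : ℝ)) ⟨tri 3 1 1, mem1⟩
    simp only [Finset.mem_insert, Finset.mem_singleton] at ha
    rcases ha with rfl | rfl | rfl | rfl
    · rw [if_pos hmin]
      split_ifs <;> linarith [M1, M3, M4]
    · exact absurd hmin q2
    · rw [if_pos hmin]
      split_ifs <;> linarith [M1, M3, M4]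
    · rw [if_pos hmin]
      split_ifs <;> linarith [M1, M3, M4]

open MvPolynomial in
open scoped Classical in
/-- The quintic `f = x₁³x₂x₃ − x₁²x₂²x₃ + x₁x₂³x₃ + x₂⁵`: (a) it equals
`x₁x₂x₃((x₁−x₂)² + x₁x₂) + x₂⁵`, is strictly positive on the open orthant, and all
its initial forms are strictly positive there; (b) nevertheless, for every `N` the
coefficient of `x₁²x₂²x₃^{N+1}` in `(x₁+x₂+x₃)^N·f` is `−1`, so no power of
`x₁+x₂+x₃` clears the negative coefficients: Pólya's method fails for `f`. -/
theorem polya_fails_example (f : MvPolynomial (Fin 3) ℝ)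
    (hf : f = X 0 ^ 3 * X 1 * X 2 - X 0 ^ 2 * X 1 ^ 2 * X 2
        + X 0 * X 1 ^ 3 * X 2 + X 1 ^ 5) :
    (∀ x : Fin 3 → ℝ,
        eval x f = x 0 * x 1 * x 2 * ((x 0 - x 1) ^ 2 + x 0 * x 1) + x 1 ^ 5) ∧
    (∀ x : Fin 3 → ℝ, (∀ i, 0 < x i) → 0 < eval x f) ∧
    (∀ w : Fin 3 → ℝ, ∀ x : Fin 3 → ℝ, (∀ i, 0 < x i) →
      0 < ∑ a ∈ f.support.filter (fun a => ∀ b ∈ f.support,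
            ∑ i, w i * (a i : ℝ) ≤ ∑ i, w i * (b i : ℝ)),
          f.coeff a * ∏ i, x i ^ a i) ∧
    (∀ N : ℕ, ((X 0 + X 1 + X 2) ^ N * f).coeff
        (Finsupp.single 0 2 + Finsupp.single 1 2 + Finsupp.single 2 (N + 1)) = -1) ∧
    (¬ ∃ N : ℕ, ∀ μ : Fin 3 →₀ ℕ, 0 ≤ ((X 0 + X 1 + X 2) ^ N * f).coeff μ) := by
  have heval : ∀ x : Fin 3 → ℝ,
      eval x f = x 0 * x 1 * x 2 * ((x 0 - x 1) ^ 2 + x 0 * x 1) + x 1 ^ 5 := by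
    intro x
    rw [hf]
    simp only [map_add, map_sub, map_mul, map_pow, eval_X]
    ring
  have hcoeffN : ∀ N : ℕ, ((X 0 + X 1 + X 2) ^ N * f).coeff
      (Finsupp.single 0 2 + Finsupp.single 1 2 + Finsupp.single 2 (N + 1)) = -1 := by
    intro N
    have h := coeff_top f hf N 2 2 (N + 1) le_rfl le_rfl (by omega)
    rw [if_pos ⟨rfl, rfl⟩] at h
    exact h
  refine ⟨heval, ?_, ?_, hcoeffN, ?_⟩
  · intro x hx
    rw [heval x]
    have h0 := hx 0; have h1 := hx 1; have h2 := hx 2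
    have : 0 < (x 0 - x 1) ^ 2 + x 0 * x 1 := by nlinarith [sq_nonneg (x 0 - x 1)]
    have := mul_pos (mul_pos (mul_pos h0 h1) h2) this
    nlinarith [pow_pos h1 5]
  · exact part3 f hf
  · rintro ⟨N, hN⟩
    have := hN (Finsupp.single 0 2 + Finsupp.single 1 2 + Finsupp.single 2 (N + 1))
    rw [hcoeffN N] at this
    linarith
end
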